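/- arXiv:2303.01366 — 8 statements merged into one kernel-verified Lean document; each statement's English description precedes it below -/
import Mathlib

section
/- Let κ be a regular uncountable cardinal and X a set with |X| ≥ κ. (1) For every function g : [X]² → 𝒫_κX, the set C_g := {x ∈ 𝒫_κX : x is infinite and g({a,b}) ⊆ x for every two-element subset {a,b} of x} is a club in 𝒫_κX. (2) For every club C in 𝒫_κX there is a function g : [X]² → 𝒫_κX such that C_g ⊆ C. -/
universe u

open Cardinal

variable {X : Type u}

/-- `𝒫_κ X`: the collection of subsets of `X` of cardinality `< κ`. -/
def PKappa (κ : Cardinal.{u}) (X : Type u) : Set (Set X) := {x | #x < κ}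

/-- `C` is closed: the union of any nonempty `⊆`-chain `D ⊆ C` with `|D| < κ`
belongs to `C`. -/
def ChainClosedIn (κ : Cardinal.{u}) (C : Set (Set X)) : Prop :=
  ∀ D : Set (Set X), D ⊆ C → D.Nonempty → IsChain (· ⊆ ·) D → #D < κ → ⋃₀ D ∈ C

/-- `C` is cofinal in `𝒫_κ X`. -/
def CofinalIn (κ : Cardinal.{u}) (C : Set (Set X)) : Prop :=
  ∀ x : Set X, #x < κ → ∃ y ∈ C, x ⊆ y

/-- `C` is a club in `𝒫_κ X`: closed and cofinal. -/
def IsClubPKappa (κ : Cardinal.{u}) (C : Set (Set X)) : Prop :=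
  C ⊆ PKappa κ X ∧ ChainClosedIn κ C ∧ CofinalIn κ C

/-- `C_g`: the set of `x ∈ 𝒫_κ X` that are infinite and closed under the
(symmetric) function `g` on pairs. -/
def MenasSet (κ : Cardinal.{u}) (g : X → X → Set X) : Set (Set X) :=
  {x | #x < κ ∧ x.Infinite ∧ ∀ a ∈ x, ∀ b ∈ x, a ≠ b → g a b ⊆ x}

/- ### Auxiliary machinery -/

section Aux

variable {κ : Cardinal.{u}}

lemma menas_card_iUnion_lt {ι : Type u} (hreg : κ.IsRegular) {t : ι → Set X}
    (hι : #ι < κ) (ht : ∀ i, #(t i) < κ) : #(⋃ i, t i) < κ :=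
  (Cardinal.card_iUnion_lt_iff_forall_of_isRegular hreg hι).2 ht

lemma menas_card_biUnion_lt {ι : Type u} (hreg : κ.IsRegular) {s : Set ι} {t : ι → Set X}
    (hs : #s < κ) (ht : ∀ i, #(t i) < κ) : #(⋃ i ∈ s, t i) < κ := by
  rw [Set.biUnion_eq_iUnion]
  exact menas_card_iUnion_lt hreg hs fun i => ht i

lemma menas_card_union_lt (hreg : κ.IsRegular) {s t : Set X}
    (hs : #s < κ) (ht : #t < κ) : #(s ∪ t : Set X) < κ :=
  (Cardinal.mk_union_le s t).trans_lt (Cardinal.add_lt_of_lt hreg.aleph0_le hs ht)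

/-- Iterated "closure" function on finite sets. -/
noncomputable def MenasFn (m : Set X → Set X) : ℕ → Finset X → Set X
  | 0, e => m ↑e
  | n+1, e => m (↑e ∪ ⋃ e' ∈ {e' : Finset X | e' ⊆ e}, MenasFn m n e')

noncomputable def MenasF (m : Set X → Set X) (e : Finset X) : Set X := MenasFn m e.card e

noncomputable def MenasFcl (m : Set X → Set X) (s : Set X) : Set X :=
  ⋃ e ∈ {e : Finset X | ↑e ⊆ s}, MenasF m e

def MenasCode (x₀ : X) (p : X → X → X) : List X → X
  | [] => x₀
  | a :: l => p a (MenasCode x₀ p l)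

noncomputable def MenasIter (g : X → X → Set X) (x : Set X) : ℕ → Set X
  | 0 => x
  | n+1 => MenasIter g x n ∪ ⋃ a ∈ MenasIter g x n, ⋃ b ∈ MenasIter g x n, g a b

variable {C : Set (Set X)} {m : Set X → Set X}

lemma menasFn_spec (hreg : κ.IsRegular) (hC1 : C ⊆ PKappa κ X)
    (hm : ∀ y : Set X, #y < κ → y ⊆ m y ∧ m y ∈ C) :
    ∀ (n : ℕ) (e : Finset X),
      ↑e ⊆ MenasFn m n e ∧ MenasFn m n e ∈ C ∧ #(MenasFn m n e) < κ := by
  intro n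
  induction n with
  | zero =>
    intro e
    have hcard : #(↑e : Set X) < κ := e.finite_toSet.lt_aleph0.trans_le hreg.aleph0_le
    obtain ⟨h1, h2⟩ := hm ↑e hcard
    exact ⟨h1, h2, hC1 h2⟩
  | succ n ih =>
    intro e
    have hidx : #({e' : Finset X | e' ⊆ e}) < κ := by
      have hfin : ({e' : Finset X | e' ⊆ e}).Finite := by
        have h1 : {e' : Finset X | e' ⊆ e} = ↑e.powerset := by
          ext e'; simp [Finset.mem_powerset]
        rw [h1]; exact e.powerset.finite_toSet
      exact hfin.lt_aleph0.trans_le hreg.aleph0_le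
    have hAcard : #((↑e ∪ ⋃ e' ∈ {e' : Finset X | e' ⊆ e}, MenasFn m n e' : Set X)) < κ :=
      menas_card_union_lt hreg (e.finite_toSet.lt_aleph0.trans_le hreg.aleph0_le)
        (menas_card_biUnion_lt hreg hidx fun e' => (ih e').2.2)
    obtain ⟨h1, h2⟩ := hm _ hAcard
    exact ⟨Set.subset_union_left.trans h1, h2, hC1 h2⟩

lemma menasFn_arg_card (hreg : κ.IsRegular) (hC1 : C ⊆ PKappa κ X)
    (hm : ∀ y : Set X, #y < κ → y ⊆ m y ∧ m y ∈ C) (n : ℕ) (e : Finset X) :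
    #((↑e ∪ ⋃ e' ∈ {e' : Finset X | e' ⊆ e}, MenasFn m n e' : Set X)) < κ := by
  have hidx : #({e' : Finset X | e' ⊆ e}) < κ := by
    have hfin : ({e' : Finset X | e' ⊆ e}).Finite := by
      have h1 : {e' : Finset X | e' ⊆ e} = ↑e.powerset := by
        ext e'; simp [Finset.mem_powerset]
      rw [h1]; exact e.powerset.finite_toSet
    exact hfin.lt_aleph0.trans_le hreg.aleph0_le
  exact menas_card_union_lt hreg (e.finite_toSet.lt_aleph0.trans_le hreg.aleph0_le)
    (menas_card_biUnion_lt hreg hidx fun e' => (menasFn_spec hreg hC1 hm n e').2.2)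

lemma menasFn_succ_mono (hreg : κ.IsRegular) (hC1 : C ⊆ PKappa κ X)
    (hm : ∀ y : Set X, #y < κ → y ⊆ m y ∧ m y ∈ C)
    {n : ℕ} {e' e : Finset X} (h : e' ⊆ e) :
    MenasFn m n e' ⊆ MenasFn m (n+1) e := by
  have h1 : MenasFn m n e' ⊆ (↑e ∪ ⋃ e' ∈ {e' : Finset X | e' ⊆ e}, MenasFn m n e' : Set X) :=
    (Set.subset_biUnion_of_mem (u := fun e' => MenasFn m n e')
      (show e' ∈ {e' : Finset X | e' ⊆ e} from h)).trans Set.subset_union_right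
  exact h1.trans (hm _ (menasFn_arg_card hreg hC1 hm n e)).1

lemma menasFn_mono_n (hreg : κ.IsRegular) (hC1 : C ⊆ PKappa κ X)
    (hm : ∀ y : Set X, #y < κ → y ⊆ m y ∧ m y ∈ C)
    {n n' : ℕ} (h : n ≤ n') (e : Finset X) :
    MenasFn m n e ⊆ MenasFn m n' e := by
  obtain ⟨k, rfl⟩ := Nat.exists_eq_add_of_le h
  clear h
  induction k with
  | zero => exact subset_rfl
  | succ k ih => exact ih.trans (menasFn_succ_mono hreg hC1 hm subset_rfl)

lemma menasF_spec (hreg : κ.IsRegular) (hC1 : C ⊆ PKappa κ X)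
    (hm : ∀ y : Set X, #y < κ → y ⊆ m y ∧ m y ∈ C) (e : Finset X) :
    ↑e ⊆ MenasF m e ∧ MenasF m e ∈ C ∧ #(MenasF m e) < κ :=
  menasFn_spec hreg hC1 hm e.card e

lemma menasF_mono (hreg : κ.IsRegular) (hC1 : C ⊆ PKappa κ X)
    (hm : ∀ y : Set X, #y < κ → y ⊆ m y ∧ m y ∈ C)
    {e' e : Finset X} (h : e' ⊆ e) : MenasF m e' ⊆ MenasF m e := by
  rcases eq_or_ne e' e with rfl | hne
  · exact subset_rfl
  · have hss : e' ⊂ e := h.ssubset_of_ne hne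
    have hcard : e'.card < e.card := Finset.card_lt_card hss
    obtain ⟨k, hk⟩ : ∃ k, e.card = k + 1 :=
      ⟨e.card - 1, (Nat.succ_pred_eq_of_pos (Nat.pos_of_ne_zero (by omega))).symm⟩
    have h2 : MenasFn m e'.card e' ⊆ MenasFn m k e' :=
      menasFn_mono_n hreg hC1 hm (by omega) e'
    have h3 : MenasFn m k e' ⊆ MenasFn m (k+1) e := menasFn_succ_mono hreg hC1 hm h
    show MenasFn m e'.card e' ⊆ MenasFn m e.card e
    rw [hk]
    exact h2.trans h3

lemma menasFcl_mono {s s' : Set X} (h : s ⊆ s') : MenasFcl m s ⊆ MenasFcl m s' := by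
  refine Set.iUnion₂_subset fun e (he : ↑e ⊆ s) => ?_
  exact Set.subset_biUnion_of_mem (u := fun e => MenasF m e)
    (show e ∈ {e : Finset X | ↑e ⊆ s'} from he.trans h)

lemma menasFcl_mem (hreg : κ.IsRegular) (hC : IsClubPKappa κ C)
    (hm : ∀ y : Set X, #y < κ → y ⊆ m y ∧ m y ∈ C) :
    ∀ s : Set X, #s < κ → MenasFcl m s ∈ C := by
  intro s hs
  refine Cardinal.lt_wf.induction
    (C := fun μ => ∀ s : Set X, #s = μ → #s < κ → MenasFcl m s ∈ C) (#s) ?_ s rfl hs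
  clear hs s
  intro μ IH s hμ hs
  subst hμ
  by_cases hfin : s.Finite
  · have he0 : ↑hfin.toFinset = s := hfin.coe_toFinset
    have heq : MenasFcl m s = MenasF m hfin.toFinset := by
      apply Set.Subset.antisymm
      · refine Set.iUnion₂_subset fun e (he : ↑e ⊆ s) => menasF_mono hreg hC.1 hm ?_
        intro a ha
        rw [Set.Finite.mem_toFinset]
        exact he ha
      · refine Set.subset_biUnion_of_mem (u := fun e => MenasF m e) ?_
        show (↑hfin.toFinset : Set X) ⊆ s
        rw [he0]
    rw [heq]
    exact (menasF_spec hreg hC.1 hm _).2.1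
  · have hal : ℵ₀ ≤ #s := Cardinal.aleph0_le_mk_iff.mpr (Set.infinite_coe_iff.mpr hfin)
    set lam := #s with hlam
    haveI : NoMaxOrder lam.ord.ToType := Cardinal.noMaxOrder hal
    haveI hne : Nonempty lam.ord.ToType := by
      rw [← Cardinal.mk_ne_zero_iff, mk_ord_toType]
      exact (aleph0_pos.trans_le hal).ne'
    obtain ⟨f⟩ : Nonempty (lam.ord.ToType ≃ ↥s) := Cardinal.eq.mp (by rw [mk_ord_toType])
    set sb : lam.ord.ToType → Set X := fun β => (fun γ => (f γ : X)) '' Set.Iio β with hsb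
    have hsbs : ∀ β, sb β ⊆ s := by rintro β _ ⟨γ, _, rfl⟩; exact (f γ).2
    have hsbcard : ∀ β, #(sb β) < lam := by
      intro β
      exact Cardinal.mk_image_le.trans_lt (Cardinal.mk_Iio_ord_toType β)
    have hmono : ∀ {β β'}, β ≤ β' → sb β ⊆ sb β' :=
      fun h => Set.image_mono (Set.Iio_subset_Iio h)
    set D : Set (Set X) := Set.range fun β => MenasFcl m (sb β) with hD
    have hDC : D ⊆ C := by
      rintro _ ⟨β, rfl⟩
      exact IH (#(sb β)) (hsbcard β) (sb β) rfl ((hsbcard β).trans hs)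
    have hchain : IsChain (· ⊆ ·) D := by
      rintro _ ⟨β, rfl⟩ _ ⟨β', rfl⟩ _
      rcases le_total β β' with h | h
      · exact Or.inl (menasFcl_mono (hmono h))
      · exact Or.inr (menasFcl_mono (hmono h))
    have hDcard : #D < κ := by
      refine Cardinal.mk_range_le.trans_lt ?_
      rw [mk_ord_toType lam]
      exact hs
    have hunion : ⋃₀ D = MenasFcl m s := by
      apply Set.Subset.antisymm
      · refine Set.sUnion_subset ?_
        rintro _ ⟨β, rfl⟩
        exact menasFcl_mono (hsbs β)
      · refine Set.iUnion₂_subset fun e (he : ↑e ⊆ s) => ?_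
        classical
        have hex : ∃ β, ↑e ⊆ sb β := by
          set I : Finset lam.ord.ToType :=
            e.attach.image (fun x => f.symm ⟨x.1, he (Finset.mem_coe.mpr x.2)⟩) with hI
          obtain ⟨β, hβ⟩ : ∃ β, ∀ γ ∈ I, γ < β := by
            rcases I.eq_empty_or_nonempty with h | h
            · exact ⟨Classical.arbitrary _, by simp [h]⟩
            · obtain ⟨β, hβ⟩ := exists_gt (I.max' h)
              exact ⟨β, fun γ hγ => (I.le_max' γ hγ).trans_lt hβ⟩
          refine ⟨β, fun a ha => ?_⟩
          have hae : a ∈ e := Finset.mem_coe.mp ha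
          refine ⟨f.symm ⟨a, he ha⟩, hβ _ ?_, by simp⟩
          exact Finset.mem_image.mpr ⟨⟨a, hae⟩, Finset.mem_attach _ _, rfl⟩
        obtain ⟨β, hβ⟩ := hex
        refine (Set.subset_biUnion_of_mem (u := fun e => MenasF m e)
          (show e ∈ {e : Finset X | ↑e ⊆ sb β} from hβ)).trans ?_
        exact Set.subset_sUnion_of_mem ⟨β, rfl⟩
    rw [← hunion]
    exact hC.2.1 D hDC ⟨_, Set.mem_range_self (Classical.arbitrary _)⟩ hchain hDcard

end Aux

/-- Menas's characterization of the club filter on `𝒫_κ X`: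
(1) for every `g : [X]² → 𝒫_κ X`, the set `C_g` is a club in `𝒫_κ X`;
(2) every club in `𝒫_κ X` contains some `C_g`. -/
theorem stmt1 (κ : Cardinal.{u}) (hreg : κ.IsRegular) (hunc : ℵ₀ < κ) (hX : κ ≤ #X) :
    (∀ g : X → X → Set X, (∀ a b : X, g a b = g b a) → (∀ a b : X, #(g a b) < κ) →
        IsClubPKappa κ (MenasSet κ g)) ∧
      (∀ C : Set (Set X), IsClubPKappa κ C →
        ∃ g : X → X → Set X, (∀ a b : X, g a b = g b a) ∧ (∀ a b : X, #(g a b) < κ) ∧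
          MenasSet κ g ⊆ C) := by
  haveI : Infinite X := Cardinal.infinite_iff.mpr (hunc.le.trans hX)
  constructor
  · -- Part 1: each MenasSet is a club
    intro g hsym hcard
    refine ⟨fun x hx => hx.1, ?_, ?_⟩
    · -- chain closed
      intro D hDsub hDne hDchain hDcard
      refine ⟨?_, ?_, ?_⟩
      · rw [Set.sUnion_eq_iUnion]
        exact menas_card_iUnion_lt hreg hDcard fun i => (hDsub i.2).1
      · obtain ⟨s, hs⟩ := hDne
        exact ((hDsub hs).2.1).mono (Set.subset_sUnion_of_mem hs)
      · intro a ha b hb hab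
        obtain ⟨s, hsD, has⟩ := ha
        obtain ⟨t, htD, hbt⟩ := hb
        rcases eq_or_ne s t with rfl | hst
        · exact ((hDsub hsD).2.2 a has b hbt hab).trans (Set.subset_sUnion_of_mem hsD)
        · rcases hDchain hsD htD hst with h | h
          · exact ((hDsub htD).2.2 a (h has) b hbt hab).trans (Set.subset_sUnion_of_mem htD)
          · exact ((hDsub hsD).2.2 a has b (h hbt) hab).trans (Set.subset_sUnion_of_mem hsD)
    · -- cofinal
      intro x hx
      set N : Set X := Set.range (fun n : ℕ => (Infinite.natEmbedding X) n) with hN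
      set y : ℕ → Set X := MenasIter g (x ∪ N) with hy
      have hy0 : y 0 = x ∪ N := rfl
      have hysucc : ∀ n, y (n+1) = y n ∪ ⋃ a ∈ y n, ⋃ b ∈ y n, g a b := fun n => rfl
      have hNcard : #N < κ := by
        have h1 : #N ≤ ℵ₀ := Cardinal.mk_le_aleph0_iff.mpr (Set.countable_range _).to_subtype
        exact h1.trans_lt hunc
      have hymono : Monotone y := monotone_nat_of_le_succ fun n => by
        rw [hysucc]; exact Set.subset_union_left
      have hycard : ∀ n, #(y n) < κ := by
        intro n
        induction n with
        | zero => exact menas_card_union_lt hreg hx hNcard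
        | succ n ih =>
          rw [hysucc]
          exact menas_card_union_lt hreg ih
            (menas_card_biUnion_lt hreg ih fun a =>
              menas_card_biUnion_lt hreg ih fun b => hcard a b)
      refine ⟨⋃ n : ULift.{u} ℕ, y n.down, ⟨?_, ?_, ?_⟩, ?_⟩
      · refine menas_card_iUnion_lt hreg ?_ fun i => hycard i.down
        have : #(ULift.{u} ℕ) = ℵ₀ := by simp
        rw [this]; exact hunc
      · have hNsub : N ⊆ ⋃ n : ULift.{u} ℕ, y n.down :=
          (Set.subset_union_right (s := x)).trans
            (Set.subset_iUnion (fun n : ULift.{u} ℕ => y n.down) ⟨0⟩)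
        have hNinf : N.Infinite :=
          Set.infinite_range_of_injective (Infinite.natEmbedding X).injective
        exact hNinf.mono hNsub
      · intro a ha b hb hab
        obtain ⟨na, hna⟩ := Set.mem_iUnion.mp ha
        obtain ⟨nb, hnb⟩ := Set.mem_iUnion.mp hb
        have h1 : a ∈ y (max na.down nb.down) := hymono (le_max_left _ _) hna
        have h2 : b ∈ y (max na.down nb.down) := hymono (le_max_right _ _) hnb
        have h3 : g a b ⊆ y (max na.down nb.down + 1) := by
          rw [hysucc]
          refine Set.subset_union_of_subset_right ?_ _
          exact (Set.subset_biUnion_of_mem (u := fun b => g a b) h2).trans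
            (Set.subset_biUnion_of_mem
              (u := fun a => ⋃ b ∈ y (max na.down nb.down), g a b) h1)
        exact h3.trans (Set.subset_iUnion (fun n : ULift.{u} ℕ => y n.down) ⟨_⟩)
      · exact (Set.subset_union_left (t := N)).trans
          (Set.subset_iUnion (fun n : ULift.{u} ℕ => y n.down) ⟨0⟩)
  · -- Part 2
    intro C hC
    classical
    have hm0 : ∀ y : Set X, ∃ z : Set X, #y < κ → y ⊆ z ∧ z ∈ C := by
      intro y
      by_cases h : #y < κ
      · obtain ⟨z, hz1, hz2⟩ := hC.2.2 y h
        exact ⟨z, fun _ => ⟨hz2, hz1⟩⟩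
      · exact ⟨∅, fun h' => absurd h' h⟩
    choose m hm using hm0
    have hcardopt : #(Option (X × X)) ≤ #X := by
      have h1 : #(X × X) = #X := by
        rw [Cardinal.mk_prod]
        simp only [Cardinal.lift_id]
        exact Cardinal.mul_eq_self (Cardinal.aleph0_le_mk X)
      rw [Cardinal.mk_option, h1, Cardinal.add_one_eq (Cardinal.aleph0_le_mk X)]
    obtain ⟨q⟩ := (Cardinal.le_def _ _).mp hcardopt
    set x₀ : X := q none with hx₀
    set p : X → X → X := fun a b => q (some (a, b)) with hp
    have hpinj : ∀ {a b a' b' : X}, p a b = p a' b' → a = a' ∧ b = b' := by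
      intro a b a' b' h
      have h2 : (a, b) = (a', b') := Option.some_injective _ (q.injective h)
      exact ⟨congrArg Prod.fst h2, congrArg Prod.snd h2⟩
    have hpne : ∀ a b : X, p a b ≠ x₀ := fun a b h => Option.some_ne_none _ (q.injective h)
    set code : List X → X := MenasCode x₀ p with hcode
    have hcodeinj : ∀ l l' : List X, code l = code l' → l = l' := by
      intro l
      induction l with
      | nil =>
        intro l' h
        cases l' with
        | nil => rfl
        | cons b t => exact absurd h.symm (hpne _ _)
      | cons a t ih =>
        intro l' h
        cases l' with
        | nil => exact absurd h (hpne _ _)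
        | cons b t' =>
          obtain ⟨h1, h2⟩ := hpinj h
          rw [h1, ih t' h2]
    set Dec : X → Finset X :=
      fun t => if h : ∃ l : List X, code l = t then h.choose.toFinset else ∅ with hDecdef
    have hDecCode : ∀ l : List X, Dec (code l) = l.toFinset := by
      intro l
      have hex : ∃ l' : List X, code l' = code l := ⟨l, rfl⟩
      simp only [hDecdef, dif_pos hex]
      rw [hcodeinj _ _ hex.choose_spec]
    set h0 : X → X → Set X := fun a b =>
      ({x₀, p a b, p a a} : Set X) ∪ MenasF m (insert a (insert b (Dec a))) with hh0
    refine ⟨fun a b => h0 a b ∪ h0 b a, fun a b => Set.union_comm _ _, ?_, ?_⟩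
    · intro a b
      have hfin : ∀ a b : X, #(({x₀, p a b, p a a} : Set X)) < κ :=
        fun a b => (Set.toFinite _).lt_aleph0.trans hunc
      exact menas_card_union_lt hreg
        (menas_card_union_lt hreg (hfin a b) (menasF_spec hreg hC.1 hm _).2.2)
        (menas_card_union_lt hreg (hfin b a) (menasF_spec hreg hC.1 hm _).2.2)
    · intro x hx
      obtain ⟨hxcard, hxinf, hxcl⟩ := hx
      have hg : ∀ a ∈ x, ∀ b ∈ x, a ≠ b → (h0 a b ∪ h0 b a) ⊆ x := hxcl
      obtain ⟨a, ha, b, hb, hab⟩ := hxinf.nontrivial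
      have hx0 : x₀ ∈ x :=
        hg a ha b hb hab (Set.mem_union_left _ (Set.mem_union_left _ (by simp)))
      have hnex : ∀ t : X, ∃ w ∈ x, w ≠ t := by
        intro t
        obtain ⟨w, hw⟩ := (hxinf.diff (Set.finite_singleton t)).nonempty
        exact ⟨w, hw.1, by simpa using hw.2⟩
      have hpx : ∀ u ∈ x, ∀ v ∈ x, p u v ∈ x := by
        intro u hu v hv
        rcases eq_or_ne u v with rfl | huv
        · obtain ⟨w, hw, hwu⟩ := hnex u
          exact hg u hu w hw (Ne.symm hwu)
            (Set.mem_union_left _ (Set.mem_union_left _ (by simp)))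
        · exact hg u hu v hv huv
            (Set.mem_union_left _ (Set.mem_union_left _ (by simp)))
      have hcx : ∀ l : List X, (∀ a ∈ l, a ∈ x) → code l ∈ x := by
        intro l
        induction l with
        | nil => exact fun _ => hx0
        | cons a t ih =>
          intro hmem
          show p a (code t) ∈ x
          exact hpx a (hmem a (List.mem_cons_self (a := a) (l := t))) _
            (ih fun b hb => hmem b (List.mem_cons_of_mem _ hb))
      have hFx : ∀ e : Finset X, ↑e ⊆ x → MenasF m e ⊆ x := by
        intro e he
        have ht : code e.toList ∈ x :=
          hcx _ (fun a hal => he (Finset.mem_coe.mpr (Finset.mem_toList.mp hal)))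
        obtain ⟨w, hw, hwt⟩ := hnex (code e.toList)
        have hsub : (h0 (code e.toList) w ∪ h0 w (code e.toList)) ⊆ x :=
          hg _ ht w hw (Ne.symm hwt)
        have hD : Dec (code e.toList) = e := by rw [hDecCode, Finset.toList_toFinset]
        have hF1 : MenasF m (insert (code e.toList) (insert w (Dec (code e.toList)))) ⊆ x := by
          refine subset_trans (subset_trans ?_
            (Set.subset_union_left (t := h0 w (code e.toList)))) hsub
          show MenasF m (insert (code e.toList) (insert w (Dec (code e.toList)))) ⊆
              ({x₀, p (code e.toList) w, p (code e.toList) (code e.toList)} : Set X) ∪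
                MenasF m (insert (code e.toList) (insert w (Dec (code e.toList))))
          exact Set.subset_union_right
        rw [hD] at hF1
        exact (menasF_mono hreg hC.1 hm
          (fun z hz => Finset.mem_insert_of_mem (Finset.mem_insert_of_mem hz))).trans hF1
      have hxeq : MenasFcl m x = x := by
        apply Set.Subset.antisymm
        · exact Set.iUnion₂_subset fun e (he : ↑e ⊆ x) => hFx e he
        · intro c hc
          have h1 : c ∈ MenasF m {c} := (menasF_spec hreg hC.1 hm {c}).1 (by simp)
          exact Set.mem_biUnion
            (show ({c} : Finset X) ∈ {e : Finset X | ↑e ⊆ x} from by simpa using hc) h1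
      rw [← hxeq]
      exact menasFcl_mem hreg hC hm x hxcard
end

section
/- Let μ be a regular uncountable cardinal and assume ¬wKH(μ), i.e., there is no weak μ-Kurepa tree. Then 2^μ = m(μ, 2^{<μ}). -/
universe u

open Cardinal

/-- A partial order is a tree order if the set of strict predecessors of every
element is well-ordered by `<`. -/
def IsTreeOrder (T : Type u) [PartialOrder T] : Prop :=
  ∀ t : T, IsWellOrder {s : T // s < t} (· < ·)

/-- The height of an element of a tree: the order type of its set of strict
predecessors. -/
noncomputable def treeHt {T : Type u} [PartialOrder T] (hT : IsTreeOrder T) (t : T) :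
    Ordinal.{u} :=
  @Ordinal.type {s : T // s < t} (· < ·) (hT t)

/-- The height of a tree: the least ordinal `α` such that the `α`-th level of the
tree is empty. -/
noncomputable def treeHeight {T : Type u} [PartialOrder T] (hT : IsTreeOrder T) :
    Ordinal.{u} :=
  sInf {α : Ordinal.{u} | ∀ t : T, treeHt hT t ≠ α}

/-- A cofinal branch of a tree: a downward-closed chain containing exactly one
element of height `α` for every `α` less than the height of the tree. -/
def IsCofinalBranch {T : Type u} [PartialOrder T] (hT : IsTreeOrder T) (b : Set T) : Prop :=
  IsChain (· ≤ ·) b ∧ (∀ t ∈ b, ∀ s : T, s < t → s ∈ b) ∧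
    ∀ α < treeHeight hT, ∃! t : T, t ∈ b ∧ treeHt hT t = α

/-- A weak `μ`-Kurepa tree: a tree of height `μ` and cardinality `μ` with more than
`μ`-many cofinal branches. -/
def IsWeakKurepaTree (μ : Cardinal.{u}) (T : Type u) [PartialOrder T]
    (hT : IsTreeOrder T) : Prop :=
  #T = μ ∧ treeHeight hT = μ.ord ∧ μ < #{b : Set T | IsCofinalBranch hT b}

/-- `wKH μ`: there exists a weak `μ`-Kurepa tree. -/
def wKH (μ : Cardinal.{u}) : Prop :=
  ∃ (T : Type u) (inst : PartialOrder T) (hT : @IsTreeOrder T inst),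
    @IsWeakKurepaTree μ T inst hT

/-- The meeting number `m(κ, λ)`: the least cardinality of a family `Y` of subsets of `λ`,
each of cardinality `κ`, such that every `x ⊆ λ` of cardinality `κ` meets some member
of `Y` in a set of cardinality `κ`. -/
noncomputable def meetingNumber (κ lam : Cardinal.{u}) : Cardinal.{u} :=
  sInf {c : Cardinal.{u} |
    ∃ Y : Set (Set lam.ord.ToType), #Y = c ∧ (∀ y ∈ Y, #y = κ) ∧
      ∀ x : Set lam.ord.ToType, #x = κ → ∃ y ∈ Y, #(x ∩ y : Set lam.ord.ToType) = κ}


open Ordinal Set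

namespace KurepaAux


/-- Nodes of the full binary tree over a linear order `I`:
a pair (length, function) where the function vanishes at or above the length. -/
def BSeq (I : Type u) [LinearOrder I] : Type u :=
  {p : I × (I → Bool) // ∀ j, p.1 ≤ j → p.2 j = false}

namespace BSeq

variable {I : Type u} [LinearOrder I]

def len (s : BSeq I) : I := s.1.1
def fn (s : BSeq I) : I → Bool := s.1.2

lemma fn_eq_false (s : BSeq I) {j : I} (h : s.len ≤ j) : s.fn j = false := s.2 j h

@[ext] lemma ext {s t : BSeq I} (h1 : s.len = t.len) (h2 : ∀ j, s.fn j = t.fn j) : s = t := by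
  apply Subtype.ext
  apply Prod.ext h1 (funext h2)

instance : PartialOrder (BSeq I) where
  le s t := s.len ≤ t.len ∧ ∀ j < s.len, s.fn j = t.fn j
  le_refl s := ⟨le_rfl, fun _ _ => rfl⟩
  le_trans s t u h1 h2 :=
    ⟨h1.1.trans h2.1, fun j hj => (h1.2 j hj).trans (h2.2 j (hj.trans_le h1.1))⟩
  le_antisymm s t h1 h2 := by
    have hlen : s.len = t.len := le_antisymm h1.1 h2.1
    refine ext hlen fun j => ?_
    by_cases hj : j < s.len
    · exact h1.2 j hj
    · rw [s.fn_eq_false (not_lt.1 hj), t.fn_eq_false (hlen ▸ not_lt.1 hj)]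

lemma le_def {s t : BSeq I} : s ≤ t ↔ s.len ≤ t.len ∧ ∀ j < s.len, s.fn j = t.fn j := Iff.rfl

/-- Restriction of a node to a given length. -/
def res (t : BSeq I) (i : I) : BSeq I :=
  ⟨(i, fun j => if j < i then t.fn j else false), fun j hj => if_neg (not_lt.2 hj)⟩

@[simp] lemma res_len (t : BSeq I) (i : I) : (res t i).len = i := rfl

lemma res_fn (t : BSeq I) (i j : I) : (res t i).fn j = if j < i then t.fn j else false := rfl

lemma res_le {t : BSeq I} {i : I} (h : i ≤ t.len) : res t i ≤ t :=
  ⟨h, fun j hj => if_pos hj⟩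

lemma res_res {t : BSeq I} {i i' : I} (h : i ≤ i') : res (res t i') i = res t i := by
  refine ext rfl fun j => ?_
  by_cases hj : j < i
  · simp [res_fn, hj, hj.trans_le h]
  · simp [res_fn, hj]

lemma eq_res_of_le {s t : BSeq I} (h : s ≤ t) : s = res t s.len := by
  refine ext rfl fun j => ?_
  by_cases hj : j < s.len
  · rw [h.2 j hj, res_fn, if_pos hj]
  · rw [s.fn_eq_false (not_lt.1 hj), res_fn, if_neg hj]

lemma res_self (t : BSeq I) : res t t.len = t :=
  (eq_res_of_le le_rfl).symm

lemma lt_iff {s t : BSeq I} : s < t ↔ s.len < t.len ∧ s = res t s.len := by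
  rw [lt_iff_le_and_ne]
  constructor
  · rintro ⟨hle, hne⟩
    refine ⟨lt_of_le_of_ne hle.1 fun h => hne ?_, eq_res_of_le hle⟩
    rw [eq_res_of_le hle, h, res_self]
  · rintro ⟨hlt, heq⟩
    refine ⟨heq ▸ res_le hlt.le, fun h => absurd (congrArg len h) (ne_of_lt hlt)⟩

lemma lt_iff_len_lt {s s' t : BSeq I} (hs : s < t) (hs' : s' < t) :
    s < s' ↔ s.len < s'.len := by
  constructor
  · exact fun h => (lt_iff.1 h).1
  · intro h
    refine lt_iff.2 ⟨h, ?_⟩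
    rw [(lt_iff.1 hs).2, (lt_iff.1 hs').2, res_len, res_res h.le]

/-- The predecessors of a node are order-isomorphic to the initial segment of `I`
below its length. -/
def predIso (t : BSeq I) :
    ((· < ·) : {s : BSeq I // s < t} → {s : BSeq I // s < t} → Prop) ≃r
      ((· < ·) : {i : I // i < t.len} → {i : I // i < t.len} → Prop) where
  toFun s := ⟨s.1.len, (lt_iff.1 s.2).1⟩
  invFun i := ⟨res t i.1, lt_iff.2 ⟨i.2, rfl⟩⟩
  left_inv s := Subtype.ext (lt_iff.1 s.2).2.symm
  right_inv i := rfl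
  map_rel_iff' := by
    intro a b
    show (⟨a.1.len, _⟩ : {i : I // i < t.len}) < ⟨b.1.len, _⟩ ↔ a < b
    rw [Subtype.mk_lt_mk, ← Subtype.coe_lt_coe]
    exact (lt_iff_len_lt a.2 b.2).symm


/-- A node with prescribed length from an arbitrary function. -/
def node (f : I → Bool) (i : I) : BSeq I :=
  ⟨(i, fun j => if j < i then f j else false), fun j hj => if_neg (not_lt.2 hj)⟩

@[simp] lemma node_len (f : I → Bool) (i : I) : (node f i).len = i := rfl

lemma node_fn (f : I → Bool) (i j : I) : (node f i).fn j = if j < i then f j else false := rfl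

lemma node_le_node (f : I → Bool) {i i' : I} (h : i ≤ i') : node f i ≤ node f i' := by
  refine ⟨h, fun j hj => ?_⟩
  have hj' : j < i := hj
  show (if j < i then f j else false) = if j < i' then f j else false
  rw [if_pos hj', if_pos (hj'.trans_le h)]

lemma res_node {f : I → Bool} {i i' : I} (h : i ≤ i') : res (node f i') i = node f i := by
  refine ext rfl fun j => ?_
  by_cases hj : j < i
  · simp [res_fn, node_fn, hj, hj.trans_le h]
  · simp [res_fn, node_fn, hj]

lemma node_injective (f : I → Bool) : Function.Injective (node f) :=
  fun _ _ h => congrArg len h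

end BSeq

open BSeq

section Subtree

variable {I : Type u} [LinearOrder I] [WellFoundedLT I] {T : Set (BSeq I)}

/-- Predecessors inside a downward-closed set coincide with predecessors in `BSeq I`. -/
def subPredIso (hdc : ∀ t ∈ T, ∀ s, s < t → s ∈ T) (t : ↥T) :
    ((· < ·) : {s : ↥T // s < t} → {s : ↥T // s < t} → Prop) ≃r
      ((· < ·) : {s : BSeq I // s < t.1} → {s : BSeq I // s < t.1} → Prop) where
  toFun s := ⟨s.1.1, Subtype.coe_lt_coe.2 s.2⟩
  invFun s := ⟨⟨s.1, hdc t.1 t.2 s.1 s.2⟩, Subtype.coe_lt_coe.1 s.2⟩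
  left_inv s := Subtype.ext (Subtype.ext rfl)
  right_inv s := rfl
  map_rel_iff' := by
    intro a b
    show (a.1.1 : BSeq I) < b.1.1 ↔ a < b
    rw [← Subtype.coe_lt_coe (x := a) (y := b), ← Subtype.coe_lt_coe]

/-- Combined iso: predecessors of `t` in the subtree are iso to `Iio (len t)` in `I`. -/
def fullPredIso (hdc : ∀ t ∈ T, ∀ s, s < t → s ∈ T) (t : ↥T) :
    ((· < ·) : {s : ↥T // s < t} → {s : ↥T // s < t} → Prop) ≃r
      ((· < ·) : {i : I // i < t.1.len} → {i : I // i < t.1.len} → Prop) :=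
  (subPredIso hdc t).trans (predIso t.1)

lemma isTreeOrder_subtree (hdc : ∀ t ∈ T, ∀ s, s < t → s ∈ T) : IsTreeOrder (↥T) :=
  fun t => ((fullPredIso hdc t).toRelEmbedding).isWellOrder

/-- subtype `<` = Subrel `<`, as an iso. -/
def subrelLtIso (a : I) :
    ((· < ·) : {i : I // i < a} → {i : I // i < a} → Prop) ≃r
      Subrel ((· < ·) : I → I → Prop) {b | b < a} where
  toFun i := ⟨i.1, i.2⟩
  invFun i := ⟨i.1, i.2⟩
  left_inv i := rfl
  right_inv i := rfl
  map_rel_iff' := Iff.rfl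

end Subtree

section ToType

/-- The ordinal height of an element of `o.ToType`. -/
noncomputable def tpn {o : Ordinal.{u}} (i : o.ToType) : Ordinal.{u} :=
  @typein o.ToType (· < ·) isWellOrder_lt i

lemma tpn_lt {o : Ordinal.{u}} (i : o.ToType) : tpn i < o := by
  have h := @typein_lt_type o.ToType (· < ·) isWellOrder_lt i
  rwa [type_toType] at h

lemma tpn_inj {o : Ordinal.{u}} {i j : o.ToType} (h : tpn i = tpn j) : i = j :=
  (@typein_injective o.ToType (· < ·) isWellOrder_lt) h

variable {o : Ordinal.{u}} {T : Set (BSeq o.ToType)}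

lemma treeHt_subtree (hdc : ∀ t ∈ T, ∀ s, s < t → s ∈ T) (t : ↥T) :
    treeHt (isTreeOrder_subtree hdc) t = tpn t.1.len := by
  haveI : IsWellOrder o.ToType (· < ·) := isWellOrder_lt
  haveI := isTreeOrder_subtree hdc t
  rw [treeHt, tpn, ← Ordinal.type_subrel]
  exact Ordinal.type_eq.2 ⟨(fullPredIso hdc t).trans (subrelLtIso t.1.len)⟩

lemma mk_Iio_toType {o : Ordinal.{u}} (i : o.ToType) :
    #{j : o.ToType // j < i} = (tpn i).card := by
  rw [tpn, ← Ordinal.type_subrel, Ordinal.card_type]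

end ToType

section Card

/-- `BSeq I` is the disjoint union over lengths of the binary functions on the
corresponding initial segments. -/
def bseqEquiv (I : Type u) [LinearOrder I] :
    BSeq I ≃ Σ i : I, ({j : I // j < i} → Bool) where
  toFun p := ⟨p.len, fun j => p.fn j.1⟩
  invFun q := ⟨(q.1, fun j => if h : j < q.1 then q.2 ⟨j, h⟩ else false),
    fun j hj => dif_neg (not_lt.2 hj)⟩
  left_inv p := by
    refine BSeq.ext rfl fun j => ?_
    show (if h : j < p.len then p.fn j else false) = p.fn j
    by_cases h : j < p.len
    · rw [dif_pos h]
    · rw [dif_neg h, p.fn_eq_false (not_lt.1 h)]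
  right_inv q := by
    cases q with
    | mk i g => exact congrArg (Sigma.mk i) (funext fun j => dif_pos j.2)

variable {μ : Cardinal.{u}}

lemma mu_le_powerlt : μ ≤ 2 ^< μ :=
  le_of_forall_lt fun c hc => (Cardinal.cantor c).trans_le (le_powerlt 2 hc)

lemma mk_bseq (hμ : ℵ₀ ≤ μ) : #(BSeq (μ.ord.ToType)) = 2 ^< μ := by
  have hterm : ∀ i : μ.ord.ToType, #({j : μ.ord.ToType // j < i} → Bool) = 2 ^ (tpn i).card := by
    intro i
    rw [Cardinal.mk_arrow, Cardinal.mk_bool]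
    simp [mk_Iio_toType]
  rw [Cardinal.mk_congr (bseqEquiv (μ.ord.ToType)), Cardinal.mk_sigma]
  have haleph : ℵ₀ ≤ 2 ^< μ := hμ.trans mu_le_powerlt
  refine le_antisymm ?_ ?_
  · calc Cardinal.sum (fun i : μ.ord.ToType => #({j : μ.ord.ToType // j < i} → Bool))
        ≤ Cardinal.sum (fun _ : μ.ord.ToType => 2 ^< μ) := by
          refine Cardinal.sum_le_sum _ _ fun i => ?_
          rw [hterm i]
          exact le_powerlt 2 (Cardinal.lt_ord.1 (tpn_lt i))
      _ = #(μ.ord.ToType) * (2 ^< μ) := Cardinal.sum_const' _ _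
      _ = μ * (2 ^< μ) := by rw [mk_ord_toType]
      _ ≤ (2 ^< μ) * (2 ^< μ) := mul_le_mul_left mu_le_powerlt _
      _ = 2 ^< μ := Cardinal.mul_eq_self haleph
  · refine (Cardinal.powerlt_le).2 fun ν hν => ?_
    set i : μ.ord.ToType := ToType.mk ⟨ν.ord, Cardinal.ord_lt_ord.2 hν⟩ with hi
    have htp : tpn i = ν.ord := by
      rw [hi, tpn, Ordinal.ToType.mk_apply]
      exact @typein_enum μ.ord.ToType (· < ·) isWellOrder_lt _ _
    calc (2 : Cardinal) ^ ν = 2 ^ (tpn i).card := by rw [htp, Cardinal.card_ord]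
      _ = #({j : μ.ord.ToType // j < i} → Bool) := (hterm i).symm
      _ ≤ _ := Cardinal.le_sum _ i

end Card



section Main

variable {μ : Cardinal.{u}}

lemma two_power_le_family (hreg : μ.IsRegular) (hunc : ℵ₀ < μ) (hwKH : ¬ wKH μ)
    (Y : Set (Set (BSeq μ.ord.ToType)))
    (hY1 : ∀ y ∈ Y, #y = μ)
    (hY2 : ∀ x : Set (BSeq μ.ord.ToType), #x = μ →
      ∃ y ∈ Y, #(x ∩ y : Set (BSeq μ.ord.ToType)) = μ) :
    2 ^ μ ≤ #Y := by
  classical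
  by_contra hlt
  push_neg at hlt
  set I := μ.ord.ToType with hIdef
  have hI : #I = μ := mk_ord_toType μ
  have haleph : ℵ₀ ≤ μ := hreg.aleph0_le
  haveI : NoMaxOrder I := toType_noMax_of_succ_lt fun a ha => (isSuccLimit_ord haleph).succ_lt ha
  -- the branch through `f` has `μ` nodes
  have hbr : ∀ f : I → Bool, #(Set.range (node f) : Set (BSeq I)) = μ := fun f => by
    rw [Cardinal.mk_range_eq _ (node_injective f), hI]
  -- choose meeting elements
  have hch : ∀ f : I → Bool,
      ∃ y : ↥Y, #((Set.range (node f)) ∩ y.1 : Set (BSeq I)) = μ := by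
    intro f
    obtain ⟨y, hy, hmeet⟩ := hY2 _ (hbr f)
    exact ⟨⟨y, hy⟩, hmeet⟩
  choose F hF using hch
  -- some `y₀` meets more than `μ` branches
  have hexists : ∃ y : ↥Y, ¬ #(F ⁻¹' {y}) ≤ μ := by
    by_contra hall
    push_neg at hall
    have h1 : #(I → Bool) ≤ #(↥Y) * μ := Cardinal.mk_le_mk_mul_of_mk_preimage_le F hall
    have h2 : #(I → Bool) = 2 ^ μ := by
      rw [Cardinal.mk_arrow, Cardinal.mk_bool, hI]
      simp
    rw [h2] at h1
    have h3 : #(↥Y) * μ < 2 ^ μ :=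
      Cardinal.mul_lt_of_lt (haleph.trans (Cardinal.cantor μ).le) hlt (Cardinal.cantor μ)
    exact absurd h1 (not_le.2 h3)
  obtain ⟨y₀, hS0⟩ := hexists
  rw [not_le] at hS0
  set S := F ⁻¹' {y₀} with hSdef
  -- the downward closure of `y₀`
  set T : Set (BSeq I) := {t | ∃ s ∈ (y₀.1 : Set (BSeq I)), t ≤ s} with hTdef
  have hdc : ∀ t ∈ T, ∀ s, s < t → s ∈ T := by
    rintro t ⟨s, hs, hts⟩ s' hs't
    exact ⟨s, hs, hs't.le.trans hts⟩
  have hT := isTreeOrder_subtree hdc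
  have hy₀sub : (y₀.1 : Set (BSeq I)) ⊆ T := fun s hs => ⟨s, hs, le_rfl⟩
  -- every node of a branch in `S` belongs to `T`
  have hsub : ∀ f ∈ S, ∀ i : I, node f i ∈ T := by
    intro f hf i
    have hFf : F f = y₀ := hf
    have hWc : #((Set.range (node f)) ∩ (y₀.1 : Set (BSeq I)) : Set (BSeq I)) = μ := by
      have := hF f
      rwa [hFf] at this
    by_contra hnot
    -- then all elements of the intersection have length `< i`
    have hlenlt : ∀ w : ↥((Set.range (node f)) ∩ (y₀.1 : Set (BSeq I)) : Set (BSeq I)),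
        w.1.len < i := by
      intro w
      by_contra hge
      obtain ⟨j, hj⟩ := w.2.1
      have hij : i ≤ w.1.len := not_lt.1 hge
      refine hnot ⟨w.1, w.2.2, ?_⟩
      have hwlen : w.1.len = j := by rw [← hj]; exact node_len f j
      have : node f i ≤ node f w.1.len := node_le_node f hij
      rwa [hwlen, hj] at this
    have hinj : Function.Injective
        (fun w : ↥((Set.range (node f)) ∩ (y₀.1 : Set (BSeq I)) : Set (BSeq I)) =>
          (⟨w.1.len, hlenlt w⟩ : {j : I // j < i})) := by
      intro a b hab
      apply Subtype.ext
      obtain ⟨ja, hja⟩ := a.2.1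
      obtain ⟨jb, hjb⟩ := b.2.1
      have hlen : a.1.len = b.1.len := congrArg Subtype.val hab
      rw [← hja, ← hjb] at hlen ⊢
      rw [node_len, node_len] at hlen
      rw [hlen]
    have hle := Cardinal.mk_le_of_injective hinj
    rw [hWc, mk_Iio_toType] at hle
    exact absurd (hle.trans_lt (Cardinal.lt_ord.1 (tpn_lt i))) (lt_irrefl μ)
  -- cardinality of T
  have hT_le : #(↥T) ≤ μ := by
    have hsub2 : T ⊆ ⋃ (s : ↥(y₀.1 : Set (BSeq I))), Set.Iic s.1 := by
      rintro t ⟨s, hs, hts⟩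
      exact Set.mem_iUnion.2 ⟨⟨s, hs⟩, hts⟩
    refine (Cardinal.mk_le_mk_of_subset hsub2).trans ?_
    refine (Cardinal.mk_iUnion_le _).trans ?_
    have h1 : #(↥(y₀.1 : Set (BSeq I))) = μ := hY1 y₀.1 y₀.2
    have h2 : ∀ s : ↥(y₀.1 : Set (BSeq I)), #(Set.Iic s.1) ≤ μ := by
      intro s
      have hinj : Function.Injective (fun t : ↥(Set.Iic s.1) => (t.1.len : I)) := by
        intro a b hab
        apply Subtype.ext
        rw [eq_res_of_le a.2, eq_res_of_le b.2]
        simp only at hab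
        rw [hab]
      have := Cardinal.mk_le_of_injective hinj
      rwa [hI] at this
    calc #(↥(y₀.1 : Set (BSeq I))) * ⨆ s : ↥(y₀.1 : Set (BSeq I)), #(Set.Iic s.1)
        ≤ μ * μ := by
          rw [h1]
          exact mul_le_mul_right (ciSup_le' h2) μ
      _ = μ := Cardinal.mul_eq_self haleph
  have hT_ge : μ ≤ #(↥T) := by
    have := Cardinal.mk_le_mk_of_subset hy₀sub
    rwa [hY1 y₀.1 y₀.2] at this
  have hmkT : #(↥T) = μ := le_antisymm hT_le hT_ge
  -- S is nonempty
  have hSne : S.Nonempty := by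
    rw [← Set.nonempty_coe_sort, ← Cardinal.mk_ne_zero_iff]
    exact ne_of_gt ((Cardinal.zero_le μ).trans_lt hS0)
  obtain ⟨f₀, hf₀⟩ := hSne
  -- heights
  have hht : ∀ t : ↥T, treeHt hT t = tpn t.1.len := treeHt_subtree hdc
  have hlevel : ∀ α < μ.ord, ∀ f ∈ S, ∃ t : ↥T, t.1 ∈ Set.range (node f) ∧ treeHt hT t = α := by
    intro α hα f hf
    set i : I := ToType.mk ⟨α, hα⟩ with hi
    have htp : tpn i = α := by
      rw [hi, tpn, Ordinal.ToType.mk_apply]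
      exact @typein_enum μ.ord.ToType (· < ·) isWellOrder_lt _ _
    refine ⟨⟨node f i, hsub f hf i⟩, ⟨i, rfl⟩, ?_⟩
    rw [hht, node_len, htp]
  have hheight : treeHeight hT = μ.ord := by
    apply le_antisymm
    · apply csInf_le (OrderBot.bddBelow _)
      intro t
      rw [hht t]
      exact ne_of_lt (tpn_lt _)
    · refine le_csInf ⟨μ.ord, fun t => by rw [hht t]; exact ne_of_lt (tpn_lt _)⟩ ?_
      intro b hb
      by_contra hble
      obtain ⟨t, _, hth⟩ := hlevel b (not_le.1 hble) f₀ hf₀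
      exact hb t hth
  -- branches
  have hbranch : ∀ f ∈ S, IsCofinalBranch hT {t : ↥T | ∃ i : I, t.1 = node f i} := by
    intro f hf
    refine ⟨?_, ?_, ?_⟩
    · rintro t ⟨i, hti⟩ t' ⟨i', ht'i⟩ hne
      rcases le_total i i' with h | h
      · exact Or.inl (Subtype.coe_le_coe.1 (by rw [hti, ht'i]; exact node_le_node f h))
      · exact Or.inr (Subtype.coe_le_coe.1 (by rw [hti, ht'i]; exact node_le_node f h))
    · rintro t ⟨i, hti⟩ s hst
      have hlt : s.1 < t.1 := Subtype.coe_lt_coe.2 hst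
      rw [hti] at hlt
      have hlen : s.1.len < i := by
        have := (lt_iff.1 hlt).1
        rwa [node_len] at this
      refine ⟨s.1.len, ?_⟩
      conv_lhs => rw [(lt_iff.1 hlt).2]
      rw [res_node hlen.le]
    · intro α hα
      rw [hheight] at hα
      obtain ⟨t, ⟨i, hti⟩, hth⟩ := hlevel α hα f hf
      refine ⟨t, ⟨⟨i, hti.symm⟩, hth⟩, ?_⟩
      rintro t' ⟨⟨i', ht'i⟩, ht'h⟩
      apply Subtype.ext
      rw [ht'i, ← hti]
      congr 1
      have h1 : tpn i' = α := by
        rw [← ht'h, hht, ht'i, node_len]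
      have h2 : tpn i = α := by
        rw [← hth, hht, ← hti, node_len]
      exact tpn_inj (h1.trans h2.symm)
  -- distinct elements of S give distinct branches
  have hinjBr : ∀ f ∈ S, ∀ g ∈ S,
      {t : ↥T | ∃ i : I, t.1 = node f i} = {t : ↥T | ∃ i : I, t.1 = node g i} → f = g := by
    intro f hf g hg hfg
    by_contra hne
    obtain ⟨j, hj⟩ := Function.ne_iff.1 hne
    obtain ⟨i, hij⟩ := exists_gt j
    have hmem : (⟨node f i, hsub f hf i⟩ : ↥T) ∈ {t : ↥T | ∃ i : I, t.1 = node f i} := ⟨i, rfl⟩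
    rw [hfg] at hmem
    obtain ⟨i', hi'⟩ := hmem
    have hii' : i = i' := by
      have := congrArg len hi'
      rwa [node_len, node_len] at this
    rw [← hii'] at hi'
    have := congrArg (fun t => fn t j) hi'
    simp only [node_fn, if_pos hij] at this
    exact hj this
  -- conclude: T is a weak Kurepa tree
  have hcount : μ < #{b : Set ↥T | IsCofinalBranch hT b} := by
    refine hS0.trans_le ?_
    have hinj : Function.Injective (fun f : ↥S =>
        (⟨{t : ↥T | ∃ i : I, t.1 = node f.1 i}, hbranch f.1 f.2⟩ :
          {b : Set ↥T // IsCofinalBranch hT b})) := by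
      intro f g h
      exact Subtype.ext (hinjBr f.1 f.2 g.1 g.2 (congrArg Subtype.val h))
    exact Cardinal.mk_le_of_injective hinj
  exact hwKH ⟨↥T, inferInstance, hT, hmkT, hheight, hcount⟩

end Main

end KurepaAux

section Final

open KurepaAux

variable {μ : Cardinal.{u}}

lemma powerlt_power_eq (hunc : ℵ₀ < μ) : (2 ^< μ) ^ μ = 2 ^ μ := by
  have haleph : ℵ₀ ≤ μ := hunc.le
  apply le_antisymm
  · have h1 : (2 ^< μ) ≤ 2 ^ μ :=
      Cardinal.powerlt_le.2 fun x hx => Cardinal.power_le_power_left two_ne_zero hx.le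
    have h2 : (2 ^< μ) ^ μ ≤ ((2 : Cardinal) ^ μ) ^ μ := Cardinal.power_le_power_right h1
    have h3 : ((2 : Cardinal) ^ μ) ^ μ = 2 ^ μ := by
      rw [← Cardinal.power_mul, Cardinal.mul_eq_self haleph]
    exact h2.trans_eq h3
  · refine Cardinal.power_le_power_right ?_
    have h1 : (1 : Cardinal) < μ := (Cardinal.one_lt_aleph0).trans hunc
    have := Cardinal.le_powerlt 2 h1
    rwa [Cardinal.power_one] at this

theorem stmt2 (μ : Cardinal.{u}) (hreg : μ.IsRegular) (hunc : ℵ₀ < μ)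
    (hwKH : ¬ wKH μ) :
    2 ^ μ = meetingNumber μ (2 ^< μ) := by
  classical
  have haleph : ℵ₀ ≤ μ := hreg.aleph0_le
  unfold meetingNumber
  set X := (2 ^< μ).ord.ToType with hX
  have hmkX : #X = 2 ^< μ := mk_ord_toType _
  -- the witness family: all subsets of size μ
  set Y₀ : Set (Set X) := {s : Set X | #s = μ} with hY₀
  have hY₀mem : #↥Y₀ ∈ {c : Cardinal.{u} |
      ∃ Y : Set (Set X), #Y = c ∧ (∀ y ∈ Y, #y = μ) ∧
        ∀ x : Set X, #x = μ → ∃ y ∈ Y, #(x ∩ y : Set X) = μ} :=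
    ⟨Y₀, rfl, fun y hy => hy, fun x hx => ⟨x, hx, by rw [Set.inter_self]; exact hx⟩⟩
  have hY₀le : #↥Y₀ ≤ 2 ^ μ := by
    have hpow : #(μ.ord.ToType → X) = 2 ^ μ := by
      rw [Cardinal.mk_arrow, Cardinal.lift_id, Cardinal.lift_id, hmkX, mk_ord_toType]
      exact powerlt_power_eq hunc
    have hne : ∀ s : ↥Y₀, Nonempty (μ.ord.ToType ≃ ↥s.1) := by
      intro s
      apply Cardinal.eq.1
      rw [mk_ord_toType]
      exact s.2.symm
    have hinj : Function.Injective
        (fun s : ↥Y₀ => (fun i => ((hne s).some i).1 : μ.ord.ToType → X)) := by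
      intro s s' h
      apply Subtype.ext
      have hr : ∀ t : ↥Y₀, Set.range (fun i => ((hne t).some i).1) = t.1 := by
        intro t
        have : (fun i => ((hne t).some i).1) = Subtype.val ∘ (hne t).some := rfl
        rw [this, Set.range_comp, Equiv.range_eq_univ, Set.image_univ, Subtype.range_coe]
      rw [← hr s, ← hr s']
      exact congrArg Set.range h
    exact (Cardinal.mk_le_of_injective hinj).trans_eq hpow
  apply le_antisymm
  · -- 2 ^ μ ≤ sInf
    refine le_csInf ⟨_, hY₀mem⟩ ?_
    rintro c ⟨Y, hYc, hY1, hY2⟩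
    -- transfer to the binary tree
    have hXB : Nonempty (X ≃ BSeq μ.ord.ToType) := by
      apply Cardinal.eq.1
      rw [hmkX, mk_bseq haleph]
    obtain ⟨e⟩ := hXB
    set Y' : Set (Set (BSeq μ.ord.ToType)) := (fun y => e '' y) '' Y with hY'
    have hY1' : ∀ y' ∈ Y', #y' = μ := by
      rintro y' ⟨y, hy, rfl⟩
      rw [Cardinal.mk_image_eq e.injective]
      exact hY1 y hy
    have hY2' : ∀ x : Set (BSeq μ.ord.ToType), #x = μ →
        ∃ y' ∈ Y', #(x ∩ y' : Set (BSeq μ.ord.ToType)) = μ := by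
      intro x hx
      have hx' : #(e ⁻¹' x : Set X) = μ := by
        rw [Cardinal.mk_preimage_of_injective_of_subset_range e x e.injective
          (by rw [Equiv.range_eq_univ]; exact Set.subset_univ x)]
        exact hx
      obtain ⟨y, hy, hm⟩ := hY2 _ hx'
      refine ⟨e '' y, ⟨y, hy, rfl⟩, ?_⟩
      have himg : x ∩ e '' y = e '' (e ⁻¹' x ∩ y) := by
        rw [Set.image_inter e.injective, Set.image_preimage_eq x e.surjective]
      rw [himg, Cardinal.mk_image_eq e.injective]
      exact hm
    have h := two_power_le_family hreg hunc hwKH Y' hY1' hY2'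
    have hle : #↥Y' ≤ #↥Y := Cardinal.mk_image_le
    exact h.trans (hle.trans_eq hYc)
  · exact (csInf_le (OrderBot.bddBelow _) hY₀mem).trans hY₀le

end Final
end

section
/- Suppose κ is an infinite cardinal and λ is a cardinal with κ < λ < κ^{+cf(κ)}. Then m(κ,λ) = λ. -/
universe u

open Cardinal

/-- `iterSucc κ β = κ^{+β}`: the `β`-th iterated cardinal successor of `κ`. -/
noncomputable def iterSucc (κ : Cardinal.{u}) (β : Ordinal.{u}) : Cardinal.{u} :=
  Ordinal.limitRecOn β κ (fun _ ih => Order.succ ih)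
    (fun β _ ih => ⨆ γ : Set.Iio β, ih γ.1 γ.2)

theorem iterSucc_zero (κ : Cardinal.{u}) : iterSucc κ 0 = κ :=
  Ordinal.limitRecOn_zero ..

theorem iterSucc_succ (κ : Cardinal.{u}) (β : Ordinal.{u}) :
    iterSucc κ (Order.succ β) = Order.succ (iterSucc κ β) :=
  Ordinal.limitRecOn_succ ..

theorem iterSucc_limit (κ : Cardinal.{u}) {β : Ordinal.{u}} (h : Order.IsSuccLimit β) :
    iterSucc κ β = ⨆ γ : Set.Iio β, iterSucc κ γ.1 :=
  Ordinal.limitRecOn_limit _ _ _ _ h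

theorem le_iterSucc (κ : Cardinal.{u}) (β : Ordinal.{u}) : κ ≤ iterSucc κ β := by
  induction β using Ordinal.induction with
  | _ β ih =>
    rcases Ordinal.zero_or_succ_or_isSuccLimit β with h | ⟨γ, rfl⟩ | h
    · subst h; rw [iterSucc_zero]
    · rw [iterSucc_succ]
      exact (ih γ (Order.lt_succ γ)).trans (Order.le_succ _)
    · rw [iterSucc_limit κ h]
      have : (0 : Ordinal) < β := h.pos
      exact (ih 0 this).trans (le_ciSup (Cardinal.bddAbove_range _) (⟨0, this⟩ : Set.Iio β))

theorem iterSucc_mono (κ : Cardinal.{u}) : Monotone (iterSucc κ) := by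
  intro γ β h
  induction β using Ordinal.induction with
  | _ β ih =>
    rcases Ordinal.zero_or_succ_or_isSuccLimit β with h0 | ⟨δ, rfl⟩ | hl
    · subst h0; rw [nonpos_iff_eq_zero.mp h]
    · rcases eq_or_lt_of_le h with rfl | h'
      · exact le_rfl
      · rw [iterSucc_succ]
        exact (ih δ (Order.lt_succ δ) (Order.lt_succ_iff.mp h')).trans (Order.le_succ _)
    · rcases eq_or_lt_of_le h with rfl | h'
      · exact le_rfl
      · rw [iterSucc_limit κ hl]
        exact le_ciSup (Cardinal.bddAbove_range _) (⟨γ, h'⟩ : Set.Iio β)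

theorem iterSucc_strictMono (κ : Cardinal.{u}) : StrictMono (iterSucc κ) := by
  intro γ β h
  have h1 : Order.succ γ ≤ β := Order.succ_le_of_lt h
  calc iterSucc κ γ < Order.succ (iterSucc κ γ) := Order.lt_succ _
    _ = iterSucc κ (Order.succ γ) := (iterSucc_succ κ γ).symm
    _ ≤ iterSucc κ β := iterSucc_mono κ h1

theorem exists_eq_iterSucc (κ : Cardinal.{u}) : ∀ β : Ordinal.{u}, ∀ lam : Cardinal.{u},
    κ ≤ lam → lam < iterSucc κ β → ∃ γ, γ < β ∧ lam = iterSucc κ γ := by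
  intro β
  induction β using Ordinal.induction with
  | _ β ih =>
    intro lam hk hl
    rcases Ordinal.zero_or_succ_or_isSuccLimit β with h0 | ⟨δ, rfl⟩ | hlim
    · subst h0; rw [iterSucc_zero] at hl; exact absurd hk hl.not_ge
    · rw [iterSucc_succ] at hl
      rcases eq_or_lt_of_le (Order.lt_succ_iff.mp hl) with heq | h'
      · exact ⟨δ, Order.lt_succ δ, heq⟩
      · obtain ⟨γ, hγ, hg⟩ := ih δ (Order.lt_succ δ) lam hk h'
        exact ⟨γ, hγ.trans (Order.lt_succ δ), hg⟩
    · rw [iterSucc_limit κ hlim] at hl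
      have : ∃ γ : Set.Iio β, lam < iterSucc κ γ.1 := by
        by_contra hcon
        push_neg at hcon
        have : Nonempty (Set.Iio β) := ⟨⟨0, hlim.pos⟩⟩
        exact absurd (ciSup_le hcon) hl.not_ge
      obtain ⟨⟨γ, hγ⟩, h'⟩ := this
      obtain ⟨γ', hγ', hg⟩ := ih γ hγ lam hk h'
      exact ⟨γ', hγ'.trans hγ, hg⟩

theorem exists_superset_card_eq' {α : Type u} {s : Set α} {μ : Cardinal.{u}} (hμ : ℵ₀ ≤ μ)
    (h1 : #s ≤ μ) (h2 : μ ≤ #α) : ∃ B : Set α, s ⊆ B ∧ #B = μ := by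
  rcases le_or_gt μ #(sᶜ : Set α) with h | h
  · obtain ⟨t, hts, ht⟩ := Cardinal.le_mk_iff_exists_subset.mp h
    refine ⟨s ∪ t, Set.subset_union_left, ?_⟩
    have hdisj : Disjoint s t := Set.disjoint_of_subset_right hts disjoint_compl_right
    rw [Cardinal.mk_union_of_disjoint hdisj, ht, Cardinal.add_eq_max' hμ]
    exact max_eq_right h1
  · refine ⟨Set.univ, Set.subset_univ _, ?_⟩
    rw [Cardinal.mk_univ]
    refine le_antisymm ?_ h2
    calc #α = #s + #(sᶜ : Set α) := (Cardinal.mk_sum_compl s).symm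
      _ ≤ μ + μ := add_le_add h1 h.le
      _ = μ := Cardinal.add_eq_self hμ

theorem subtype_meet {α : Type u} {A : Set α} {x : Set α} {κ : Cardinal.{u}}
    (h : #(x ∩ A : Set α) = κ) {Y' : Set (Set ↥A)}
    (hmeet : ∀ x' : Set ↥A, #x' = κ → ∃ y' ∈ Y', #(x' ∩ y' : Set ↥A) = κ) :
    ∃ y' ∈ Y', #(x ∩ (Subtype.val '' y') : Set α) = κ := by
  set x' : Set ↥A := Subtype.val ⁻¹' x with hx'def
  have hx' : Subtype.val '' x' = x ∩ A := by
    rw [hx'def, Set.image_preimage_eq_inter_range, Subtype.range_coe]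
  have hcx : #x' = κ := by
    rw [← h, ← hx', Cardinal.mk_image_eq Subtype.val_injective]
  obtain ⟨y', hy', hc⟩ := hmeet x' hcx
  refine ⟨y', hy', ?_⟩
  have hsub : Subtype.val '' y' ⊆ A := by
    rintro a ⟨b, _, rfl⟩; exact b.2
  have : x ∩ Subtype.val '' y' = Subtype.val '' (x' ∩ y') := by
    rw [Set.image_inter Subtype.val_injective, hx', Set.inter_assoc,
      Set.inter_eq_self_of_subset_right hsub]
  rw [this, Cardinal.mk_image_eq Subtype.val_injective, hc]

theorem meetP (κ : Cardinal.{u}) (hκ : ℵ₀ ≤ κ) :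
    ∀ β : Ordinal.{u}, β < (κ.ord.cof).ord →
    ∀ α : Type u, #α = iterSucc κ β →
    ∃ Y : Set (Set α), #Y ≤ iterSucc κ β ∧ (∀ y ∈ Y, #y = κ) ∧
      ∀ x : Set α, #x = κ → ∃ y ∈ Y, #(x ∩ y : Set α) = κ := by
  intro β
  induction β using Ordinal.induction with
  | _ β ih =>
    intro hβ α hα
    rcases Ordinal.zero_or_succ_or_isSuccLimit β with h0 | ⟨δ, rfl⟩ | hlim
    -- base case
    · subst h0
      rw [iterSucc_zero] at hα ⊢
      refine ⟨{Set.univ}, ?_, ?_, ?_⟩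
      · rw [Cardinal.mk_singleton]
        exact le_trans Cardinal.one_le_aleph0 hκ
      · rintro y rfl
        rwa [Cardinal.mk_univ]
      · intro x hx
        exact ⟨Set.univ, rfl, by rwa [Set.inter_univ]⟩
    -- successor case
    · set μ := iterSucc κ δ with hμdef
      set lam := iterSucc κ (Order.succ δ) with hlamdef
      have hlam : lam = Order.succ μ := iterSucc_succ κ δ
      have hκμ : κ ≤ μ := le_iterSucc κ δ
      have hℵμ : ℵ₀ ≤ μ := hκ.trans hκμ
      have hμlam : μ < lam := hlam ▸ Order.lt_succ μ
      have hℵlam : ℵ₀ ≤ lam := hℵμ.trans hμlam.le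
      haveI hwo : IsWellOrder lam.ord.ToType (· < ·) := isWellOrder_lt
      have hmkΛ : #lam.ord.ToType = lam := Cardinal.mk_ord_toType lam
      haveI : Nonempty lam.ord.ToType := Cardinal.mk_ne_zero_iff.mp
        (by rw [hmkΛ]; exact (Cardinal.aleph0_pos.trans_le hℵlam).ne')
      obtain ⟨e⟩ : Nonempty (α ≃ lam.ord.ToType) := Cardinal.eq.mp (hα.trans hmkΛ.symm)
      -- initial segments have cardinality at most μ
      have hcard : ∀ b : lam.ord.ToType, #(e ⁻¹' Set.Iio b : Set α) ≤ μ := by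
        intro b
        have h1 : #(e ⁻¹' Set.Iio b : Set α) = #(Set.Iio b : Set lam.ord.ToType) := by
          calc #(e ⁻¹' Set.Iio b : Set α) = #(e '' (e ⁻¹' Set.Iio b) : Set lam.ord.ToType) :=
                (Cardinal.mk_image_eq e.injective).symm
            _ = #(Set.Iio b : Set lam.ord.ToType) := by
                rw [Set.image_preimage_eq _ e.surjective]
        have h2 : #(Set.Iio b : Set lam.ord.ToType) = (Ordinal.typein (· < ·) b).card :=
          (Ordinal.card_typein (r := ((· < ·) : lam.ord.ToType → lam.ord.ToType → Prop)) b).symm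
        have h3 : Ordinal.typein (α := lam.ord.ToType) (· < ·) b < lam.ord := by
          have := Ordinal.typein_lt_type (α := lam.ord.ToType) (· < ·) b
          rwa [Ordinal.type_toType] at this
        have h4 : (Ordinal.typein (α := lam.ord.ToType) (· < ·) b).card < lam :=
          Cardinal.lt_ord.mp h3
        rw [h1, h2]
        exact Order.lt_succ_iff.mp (hlam ▸ h4)
      have hBex : ∀ b : lam.ord.ToType, ∃ B : Set α, e ⁻¹' Set.Iio b ⊆ B ∧ #B = μ := fun b =>
        exists_superset_card_eq' hℵμ (hcard b) (hα ▸ hμlam.le)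
      choose B hB1 hB2 using hBex
      choose Y' hY'c hY'm hY'meet using fun b : lam.ord.ToType =>
        ih δ (Order.lt_succ δ) ((Order.lt_succ δ).trans hβ) ↥(B b) (hB2 b)
      refine ⟨⋃ b, (fun y => Subtype.val '' y) '' Y' b, ?_, ?_, ?_⟩
      · calc #(⋃ b, (fun y => Subtype.val '' y) '' Y' b)
            ≤ #lam.ord.ToType * ⨆ b, #((fun y => Subtype.val '' y) '' Y' b) :=
              Cardinal.mk_iUnion_le _
          _ ≤ lam * μ := by
              refine mul_le_mul' hmkΛ.le (ciSup_le fun b => ?_)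
              exact (Cardinal.mk_image_le).trans ((hY'c b).trans_eq rfl)
          _ ≤ lam * lam := mul_le_mul' le_rfl hμlam.le
          _ = lam := Cardinal.mul_eq_self hℵlam
      · rintro y hy
        simp only [Set.mem_iUnion, Set.mem_image] at hy
        obtain ⟨b, y', hy', rfl⟩ := hy
        rw [Cardinal.mk_image_eq Subtype.val_injective]
        exact hY'm b y' hy'
      · intro x hx
        -- x is bounded
        have hbounded : ∃ b : lam.ord.ToType, ∀ c ∈ e '' x, c < b := by
          have hcof : #(e '' x : Set lam.ord.ToType) < (Ordinal.type ((· < ·) :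
              lam.ord.ToType → lam.ord.ToType → Prop)).cof := by
            rw [Ordinal.type_toType, Cardinal.mk_image_eq e.injective, hx, hlam,
              (Cardinal.isRegular_succ hℵμ).cof_eq]
            exact hκμ.trans_lt (Order.lt_succ μ)
          rw [Ordinal.cof_type] at hcof
          by_contra hne
          push_neg at hne
          exact absurd (Order.cof_le (s := e '' x) (fun a => by
            obtain ⟨c, hc, hac⟩ := hne a; exact ⟨c, hc, hac⟩)) hcof.not_ge
        obtain ⟨b, hb⟩ := hbounded
        have hxB : x ⊆ B b := by
          intro a ha
          exact hB1 b (hb (e a) (Set.mem_image_of_mem e ha))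
        have hxcap : #(x ∩ B b : Set α) = κ := by
          rwa [Set.inter_eq_self_of_subset_left hxB]
        obtain ⟨y', hy', hyc⟩ := subtype_meet hxcap (hY'meet b)
        exact ⟨Subtype.val '' y', Set.mem_iUnion.mpr ⟨b, Set.mem_image_of_mem _ hy'⟩, hyc⟩
    -- limit case
    · set lam := iterSucc κ β with hlamdef
      have hκlam : κ < lam := by
        have := iterSucc_strictMono κ hlim.pos
        rwa [iterSucc_zero] at this
      have hℵlam : ℵ₀ ≤ lam := hκ.trans hκlam.le
      haveI hwo : IsWellOrder lam.ord.ToType (· < ·) := isWellOrder_lt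
      haveI hwoβ : IsWellOrder β.ToType (· < ·) := isWellOrder_lt
      have hmkΛ : #lam.ord.ToType = lam := Cardinal.mk_ord_toType lam
      haveI : Nonempty lam.ord.ToType := Cardinal.mk_ne_zero_iff.mp
        (by rw [hmkΛ]; exact (Cardinal.aleph0_pos.trans_le hℵlam).ne')
      haveI : Nonempty β.ToType := Ordinal.toType_nonempty_iff_ne_zero.mpr hlim.pos.ne'
      obtain ⟨e⟩ : Nonempty (α ≃ lam.ord.ToType) := Cardinal.eq.mp (hα.trans hmkΛ.symm)
      have hmkβ : #β.ToType = β.card := Cardinal.mk_toType β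
      have hβcard : β.card < κ.ord.cof := Cardinal.lt_ord.mp hβ
      have hβκ : #β.ToType < κ := by
        rw [hmkβ]; exact hβcard.trans_le (Ordinal.cof_ord_le κ)
      set δi := fun i : β.ToType => Ordinal.typein (α := β.ToType) (· < ·) i with hδdef
      have hδβ : ∀ i, δi i < β := fun i => by
        have := Ordinal.typein_lt_type (α := β.ToType) (· < ·) i
        rwa [Ordinal.type_toType] at this
      set lami := fun i => iterSucc κ (δi i) with hlamidef
      have hlami : ∀ i, lami i < lam := fun i => iterSucc_strictMono κ (hδβ i)
      have hbex : ∀ i, ∃ c : lam.ord.ToType,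
          Ordinal.typein (α := lam.ord.ToType) (· < ·) c = (lami i).ord := fun i =>
        Ordinal.typein_surj (· < ·)
          (by rw [Ordinal.type_toType]; exact Cardinal.ord_lt_ord.mpr (hlami i))
      choose b hb using hbex
      set A := fun i => (e ⁻¹' Set.Iio (b i) : Set α) with hAdef
      have hAcard : ∀ i, #(A i) = iterSucc κ (δi i) := by
        intro i
        calc #(A i) = #(e '' (e ⁻¹' Set.Iio (b i)) : Set lam.ord.ToType) :=
              (Cardinal.mk_image_eq e.injective).symm
          _ = #(Set.Iio (b i) : Set lam.ord.ToType) := by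
              rw [Set.image_preimage_eq _ e.surjective]
          _ = (Ordinal.typein (α := lam.ord.ToType) (· < ·) (b i)).card :=
              (Ordinal.card_typein (r := ((· < ·) : lam.ord.ToType → lam.ord.ToType → Prop))
                (b i)).symm
          _ = (lami i).ord.card := by rw [hb i]
          _ = lami i := Cardinal.card_ord _
      choose Y' hY'c hY'm hY'meet using fun i =>
        ih (δi i) (hδβ i) ((hδβ i).trans hβ) ↥(A i) (hAcard i)
      refine ⟨⋃ i, (fun y => Subtype.val '' y) '' Y' i, ?_, ?_, ?_⟩
      · calc #(⋃ i, (fun y => Subtype.val '' y) '' Y' i)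
            ≤ #β.ToType * ⨆ i, #((fun y => Subtype.val '' y) '' Y' i) :=
              Cardinal.mk_iUnion_le _
          _ ≤ lam * lam := by
              refine mul_le_mul' (hβκ.le.trans hκlam.le) (ciSup_le fun i => ?_)
              exact Cardinal.mk_image_le.trans ((hY'c i).trans (hlami i).le)
          _ = lam := Cardinal.mul_eq_self hℵlam
      · rintro y hy
        simp only [Set.mem_iUnion, Set.mem_image] at hy
        obtain ⟨i, y', hy', rfl⟩ := hy
        rw [Cardinal.mk_image_eq Subtype.val_injective]
        exact hY'm i y' hy'
      · intro x hx
        have hexi : ∃ i, #(x ∩ A i : Set α) = κ := by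
          by_contra hcon
          push_neg at hcon
          have hlt : ∀ i, #(x ∩ A i : Set α) < κ := fun i =>
            lt_of_le_of_ne
              ((Cardinal.mk_le_mk_of_subset Set.inter_subset_left).trans_eq hx) (hcon i)
          have hcover : x ⊆ ⋃ i, (x ∩ A i : Set α) := by
            intro a ha
            set ξ := Ordinal.typein (α := lam.ord.ToType) (· < ·) (e a) with hξdef
            have hξ : ξ < lam.ord := by
              have := Ordinal.typein_lt_type (α := lam.ord.ToType) (· < ·) (e a)
              rwa [Ordinal.type_toType] at this
            have hξc : ξ.card < lam := Cardinal.lt_ord.mp hξ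
            have hνlt : max κ ξ.card < lam := max_lt hκlam hξc
            obtain ⟨γ, hγβ, hγeq⟩ :=
              exists_eq_iterSucc κ β (max κ ξ.card) (le_max_left _ _) hνlt
            have hsuccγ : Order.succ γ < β := hlim.succ_lt hγβ
            obtain ⟨i, hi⟩ := Ordinal.typein_surj (α := β.ToType) (· < ·)
              (by rw [Ordinal.type_toType]; exact hsuccγ)
            refine Set.mem_iUnion.mpr ⟨i, ha, ?_⟩
            have h1 : lami i = Order.succ (iterSucc κ γ) := by
              rw [hlamidef]
              simp only
              rw [show δi i = Order.succ γ from hi, iterSucc_succ]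
            have h2 : ξ.card < lami i := by
              rw [h1, ← hγeq]
              exact (le_max_right κ ξ.card).trans_lt (Order.lt_succ _)
            have h4 : ξ < Ordinal.typein (α := lam.ord.ToType) (· < ·) (b i) := by
              rw [hb i]; exact Cardinal.lt_ord.mpr h2
            have h5 : e a < b i := by
              have := (Ordinal.typein_lt_typein
                ((· < ·) : lam.ord.ToType → lam.ord.ToType → Prop)
                (a := e a) (b := b i)).mp h4
              exact this
            exact h5
          have hsup : (⨆ i, #(x ∩ A i : Set α)) < κ :=
            Ordinal.iSup_lt (by rw [hmkβ]; exact hβcard) hlt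
          have hfin : #x < κ :=
            lt_of_le_of_lt
              ((Cardinal.mk_le_mk_of_subset hcover).trans (Cardinal.mk_iUnion_le _))
              (Cardinal.mul_lt_of_lt hκ hβκ hsup)
          exact absurd hx hfin.ne
        obtain ⟨i, hcap⟩ := hexi
        obtain ⟨y', hy', hyc⟩ := subtype_meet hcap (hY'meet i)
        exact ⟨Subtype.val '' y', Set.mem_iUnion.mpr ⟨i, Set.mem_image_of_mem _ hy'⟩, hyc⟩


/-- If `κ` is infinite and `κ < λ < κ^{+cf(κ)}`, then `m(κ, λ) = λ`. -/
theorem stmt4 (κ lam : Cardinal.{u}) (hκ : ℵ₀ ≤ κ) (h1 : κ < lam)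
    (h2 : lam < iterSucc κ (κ.ord.cof).ord) :
    meetingNumber κ lam = lam := by
  have hℵlam : ℵ₀ ≤ lam := hκ.trans h1.le
  have hmkΛ : #lam.ord.ToType = lam := Cardinal.mk_ord_toType lam
  obtain ⟨β, hβ, hlameq⟩ := exists_eq_iterSucc κ ((κ.ord.cof).ord) lam h1.le h2
  obtain ⟨Y₀, hY₀c, hY₀m, hY₀meet⟩ := meetP κ hκ β hβ lam.ord.ToType (by rw [hmkΛ, hlameq])
  rw [← hlameq] at hY₀c
  obtain ⟨y₀, hy₀⟩ := Cardinal.le_mk_iff_exists_set.mp (h1.le.trans_eq hmkΛ.symm)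
  set Z := Set.range (fun a : lam.ord.ToType => insert a y₀) with hZdef
  have hZm : ∀ y ∈ Z, #y = κ := by
    rintro y ⟨a, rfl⟩
    refine le_antisymm ?_ ?_
    · calc #(insert a y₀ : Set lam.ord.ToType) ≤ #y₀ + 1 := Cardinal.mk_insert_le
        _ = κ + 1 := by rw [hy₀]
        _ = κ := Cardinal.add_one_eq hκ
    · rw [← hy₀]; exact Cardinal.mk_le_mk_of_subset (Set.subset_insert a y₀)
  have hy₀c : #(y₀ᶜ : Set lam.ord.ToType) = lam := by
    refine le_antisymm ((Cardinal.mk_set_le _).trans_eq hmkΛ) ?_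
    by_contra hc
    push_neg at hc
    have hsum : #lam.ord.ToType = #y₀ + #(y₀ᶜ : Set lam.ord.ToType) :=
      (Cardinal.mk_sum_compl y₀).symm
    have : lam < lam := by
      calc lam = #y₀ + #(y₀ᶜ : Set lam.ord.ToType) := by rw [← hsum, hmkΛ]
        _ < lam := Cardinal.add_lt_of_lt hℵlam (hy₀ ▸ h1) hc
    exact absurd this (lt_irrefl lam)
  have hZc : #Z = lam := by
    refine le_antisymm (Cardinal.mk_range_le.trans_eq hmkΛ) ?_
    have hinj : Set.InjOn (fun a => insert a y₀) (y₀ᶜ : Set lam.ord.ToType) := by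
      intro a ha b hb hab
      simp only at hab
      have : a ∈ insert b y₀ := hab ▸ Set.mem_insert a y₀
      rcases this with h | h
      · exact h
      · exact absurd h ha
    calc lam = #(y₀ᶜ : Set lam.ord.ToType) := hy₀c.symm
      _ = #((fun a => insert a y₀) '' (y₀ᶜ : Set lam.ord.ToType)) :=
          (Cardinal.mk_image_eq_of_injOn _ _ hinj).symm
      _ ≤ #Z := Cardinal.mk_le_mk_of_subset (Set.image_subset_range _ _)
  have hYc : #(Y₀ ∪ Z : Set (Set lam.ord.ToType)) = lam := by
    refine le_antisymm ?_ (hZc.symm.trans_le (Cardinal.mk_le_mk_of_subset Set.subset_union_right))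
    -- count
    calc #(Y₀ ∪ Z : Set (Set lam.ord.ToType)) ≤ #Y₀ + #Z := Cardinal.mk_union_le _ _
      _ ≤ lam + lam := add_le_add hY₀c hZc.le
      _ = lam := Cardinal.add_eq_self hℵlam
  have hmem : lam ∈ {c : Cardinal.{u} |
      ∃ Y : Set (Set lam.ord.ToType), #Y = c ∧ (∀ y ∈ Y, #y = κ) ∧
        ∀ x : Set lam.ord.ToType, #x = κ → ∃ y ∈ Y, #(x ∩ y : Set lam.ord.ToType) = κ} := by
    refine ⟨Y₀ ∪ Z, hYc, ?_, ?_⟩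
    · rintro y (hy | hy)
      · exact hY₀m y hy
      · exact hZm y hy
    · intro x hx
      obtain ⟨y, hy, hyc⟩ := hY₀meet x hx
      exact ⟨y, Set.mem_union_left _ hy, hyc⟩
  refine le_antisymm (csInf_le' hmem) ?_
  refine le_csInf ⟨lam, hmem⟩ ?_
  rintro c ⟨Y, hYc', hYm, hYmeet⟩
  by_contra hlt
  push_neg at hlt
  obtain ⟨x0, hx0⟩ := Cardinal.le_mk_iff_exists_set.mp (h1.le.trans_eq hmkΛ.symm)
  rcases Set.eq_empty_or_nonempty Y with rfl | hYne
  · obtain ⟨y, hy, -⟩ := hYmeet x0 hx0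
    exact hy
  · haveI : Nonempty ↥Y := hYne.to_subtype
    have hU : #(⋃₀ Y : Set lam.ord.ToType) < lam := by
      calc #(⋃₀ Y : Set lam.ord.ToType) ≤ #Y * ⨆ s : Y, #(s : Set lam.ord.ToType) :=
            Cardinal.mk_sUnion_le Y
        _ ≤ c * κ := mul_le_mul' hYc'.le (ciSup_le fun t => (hYm t t.2).le)
        _ < lam := Cardinal.mul_lt_of_lt hℵlam hlt h1
    have hcompl : κ ≤ #((⋃₀ Y)ᶜ : Set lam.ord.ToType) := by
      by_contra hcc
      push_neg at hcc
      have : lam < lam := by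
        calc lam = #(⋃₀ Y : Set lam.ord.ToType) + #((⋃₀ Y)ᶜ : Set lam.ord.ToType) := by
              rw [Cardinal.mk_sum_compl, hmkΛ]
          _ < lam := Cardinal.add_lt_of_lt hℵlam hU (hcc.trans_le h1.le)
      exact absurd this (lt_irrefl lam)
    obtain ⟨x, hxsub, hxc⟩ := Cardinal.le_mk_iff_exists_subset.mp hcompl
    obtain ⟨y, hy, hxy⟩ := hYmeet x hxc
    have hempty : x ∩ y = ∅ := by
      ext a
      simp only [Set.mem_inter_iff, Set.mem_empty_iff_false, iff_false, not_and]
      intro hax hay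
      exact hxsub hax (Set.subset_sUnion_of_mem hy hay)
    rw [hempty] at hxy
    simp only [Cardinal.mk_emptyCollection] at hxy
    exact absurd hxy.symm (Cardinal.aleph0_pos.trans_le hκ).ne'
end

section
/- Suppose κ < λ are infinite cardinals with cf(κ) = cf(λ). Then m(κ,λ) > λ. -/
universe u

open Cardinal

open Ordinal Set in
/-- Main combinatorial lemma: any family of at most `λ` sets of size `κ` is avoided by
some set of size `κ` (all intersections have size `< κ`). -/
theorem meeting_aux {κ lam : Cardinal.{u}} (hκ : ℵ₀ ≤ κ) (h1 : κ < lam)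
    (hcf : κ.ord.cof = lam.ord.cof) (Y : Set (Set lam.ord.ToType))
    (hYκ : ∀ y ∈ Y, #y = κ) (hYle : #Y ≤ lam) :
    ∃ x : Set lam.ord.ToType, #x = κ ∧
      ∀ y ∈ Y, #(x ∩ y : Set lam.ord.ToType) < κ := by
  haveI : IsWellOrder lam.ord.ToType (· < ·) := isWellOrder_lt
  haveI : IsWellOrder lam.ord.cof.ord.ToType (· < ·) := isWellOrder_lt
  have hlam : ℵ₀ ≤ lam := hκ.trans h1.le
  have hlim : Order.IsSuccLimit lam.ord := Cardinal.isSuccLimit_ord hlam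
  have hμinf : ℵ₀ ≤ lam.ord.cof := Ordinal.aleph0_le_cof.2 hlim
  have hμκ : lam.ord.cof ≤ κ := hcf ▸ Ordinal.cof_ord_le κ
  obtain ⟨f, hf⟩ := Ordinal.exists_fundamental_sequence lam.ord
  obtain ⟨g, hg⟩ := Ordinal.exists_fundamental_sequence κ.ord
  have hoeq : κ.ord.cof.ord = lam.ord.cof.ord := by rw [hcf]
  have htyι : type ((· < ·) : lam.ord.cof.ord.ToType → lam.ord.cof.ord.ToType → Prop) = lam.ord.cof.ord := Ordinal.type_toType lam.ord.cof.ord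
  have htyT : type ((· < ·) : lam.ord.ToType → lam.ord.ToType → Prop) = lam.ord := Ordinal.type_toType lam.ord
  have hriF : ∀ i : lam.ord.cof.ord.ToType, typein ((· < ·) : lam.ord.cof.ord.ToType → lam.ord.cof.ord.ToType → Prop) i < lam.ord.cof.ord := by
    intro i; exact (typein_lt_type _ i).trans_le htyι.le
  have hriG : ∀ i : lam.ord.cof.ord.ToType, typein ((· < ·) : lam.ord.cof.ord.ToType → lam.ord.cof.ord.ToType → Prop) i < κ.ord.cof.ord := by
    intro i; rw [hoeq]; exact hriF i
  set F : lam.ord.cof.ord.ToType → Ordinal := fun i => f _ (hriF i) with hFdef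
  set G : lam.ord.cof.ord.ToType → Ordinal := fun i => g _ (hriG i) with hGdef
  have hFmono : StrictMono F := fun i j h => hf.2.1 _ _ ((typein_lt_typein _).2 h)
  have hGmono : StrictMono G := fun i j h => hg.2.1 _ _ ((typein_lt_typein _).2 h)
  have hFlt : ∀ i, F i < lam.ord := by
    intro i
    have := Ordinal.lt_blsub f _ (hriF i)
    rwa [hf.2.2] at this
  have hGlt : ∀ i, G i < κ.ord := by
    intro i
    have := Ordinal.lt_blsub g _ (hriG i)
    rwa [hg.2.2] at this
  have hFub : ∀ β < lam.ord, ∃ i : lam.ord.cof.ord.ToType, β ≤ F i := by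
    intro β hβ
    rw [← hf.2.2, Ordinal.lt_blsub_iff] at hβ
    obtain ⟨b, hb, hble⟩ := hβ
    have hbty : b < type ((· < ·) : lam.ord.cof.ord.ToType → lam.ord.cof.ord.ToType → Prop) := by rwa [htyι]
    obtain ⟨i, hi⟩ := typein_surj _ hbty
    refine ⟨i, ?_⟩
    have : F i = f b hb := by subst hi; rfl
    rw [this]; exact hble
  have hGub : ∀ c : Cardinal.{u}, c < κ → ∃ i : lam.ord.cof.ord.ToType, c ≤ (G i).card := by
    intro c hc
    have hβ : c.ord < κ.ord := Cardinal.ord_lt_ord.2 hc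
    rw [← hg.2.2, Ordinal.lt_blsub_iff] at hβ
    obtain ⟨b, hb, hble⟩ := hβ
    have hbty : b < type ((· < ·) : lam.ord.cof.ord.ToType → lam.ord.cof.ord.ToType → Prop) := by rw [htyι, ← hoeq]; exact hb
    obtain ⟨i, hi⟩ := typein_surj _ hbty
    refine ⟨i, ?_⟩
    have : G i = g b hb := by subst hi; rfl
    rw [this] at *
    calc c = c.ord.card := (Cardinal.card_ord c).symm
    _ ≤ (g b hb).card := Ordinal.card_le_card hble
  set k : lam.ord.cof.ord.ToType → Cardinal.{u} := fun i => (G i).card + 1 with hkdef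
  have hklt : ∀ i, k i < κ :=
    fun i => Cardinal.add_lt_of_lt hκ (Cardinal.lt_ord.1 (hGlt i))
      (one_lt_aleph0.trans_le hκ)
  set rnk : lam.ord.ToType → Ordinal := fun t => typein ((· < ·) : lam.ord.ToType → lam.ord.ToType → Prop) t with hrnkdef
  have hrnklt : ∀ t, rnk t < lam.ord := by
    intro t; rw [← htyT]; exact typein_lt_type _ t
  have hrnkmono : ∀ {s t : lam.ord.ToType}, s < t ↔ rnk s < rnk t :=
    fun {s t} => (typein_lt_typein _).symm
  -- the enumeration of Y
  have hYT : #Y ≤ #lam.ord.ToType := by rw [Cardinal.mk_ord_toType]; exact hYle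
  obtain ⟨e⟩ := (Cardinal.le_def _ _).1 hYT
  -- cardinality of initial segments of lam.ord.ToType
  have hseg : ∀ β < lam.ord, #{t : lam.ord.ToType | rnk t ≤ β} < lam := by
    intro β hβ
    have hβ1 : Order.succ β < lam.ord := hlim.succ_lt hβ
    obtain ⟨a, ha⟩ := typein_surj ((· < ·) : lam.ord.ToType → lam.ord.ToType → Prop) (by rw [htyT]; exact hβ1)
    have hset : {t : lam.ord.ToType | rnk t ≤ β} = {t : lam.ord.ToType | t < a} := by
      ext t
      simp only [mem_setOf_eq]
      have harnk : rnk a = Order.succ β := ha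
      rw [hrnkmono, harnk, Order.lt_succ_iff]
    rw [hset]
    have : #{t : lam.ord.ToType | t < a} = (typein ((· < ·) : lam.ord.ToType → lam.ord.ToType → Prop) a).card :=
      Ordinal.card_typein (r := ((· < ·) : lam.ord.ToType → lam.ord.ToType → Prop)) a
    rw [this, ha]
    exact Cardinal.lt_ord.1 hβ1
  -- the forbidden sets
  set Fb : lam.ord.cof.ord.ToType → Set lam.ord.ToType := fun i =>
    {t : lam.ord.ToType | rnk t ≤ F i} ∪ ⋃ y : {y : Y // rnk (e y) ≤ F i}, ((y : Y) : Set lam.ord.ToType) with hFbdef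
  have hFb : ∀ i, #(Fb i) < lam := by
    intro i
    refine (Cardinal.mk_union_le _ _).trans_lt (Cardinal.add_lt_of_lt hlam
      (hseg _ (hFlt i)) ?_)
    refine (Cardinal.mk_iUnion_le _).trans_lt (Cardinal.mul_lt_of_lt hlam ?_ ?_)
    · refine lt_of_le_of_lt ?_ (hseg _ (hFlt i))
      exact Cardinal.mk_le_of_injective (f := fun y : {y : Y // rnk (e y) ≤ F i} =>
        (⟨e y.1, y.2⟩ : {t : lam.ord.ToType | rnk t ≤ F i}))
        (fun a b hab => Subtype.ext (e.injective (by simpa using hab)))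
    · refine lt_of_le_of_lt (ciSup_le' fun y => ?_) h1
      exact le_of_eq (hYκ _ y.1.2)
  have hcompl : ∀ i, κ ≤ #((Fb i)ᶜ : Set lam.ord.ToType) := by
    intro i
    by_contra h
    push_neg at h
    have := Cardinal.mk_sum_compl (Fb i)
    rw [Cardinal.mk_ord_toType] at this
    exact absurd this (ne_of_lt (Cardinal.add_lt_of_lt hlam (hFb i) (h.trans h1)))
  have hx : ∀ i, ∃ p ⊆ (Fb i)ᶜ, #p = k i :=
    fun i => Cardinal.le_mk_iff_exists_subset.1 ((hklt i).le.trans (hcompl i))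
  set x : lam.ord.cof.ord.ToType → Set lam.ord.ToType := fun i => (hx i).choose with hxdef
  have hxsub : ∀ i, x i ⊆ (Fb i)ᶜ := fun i => (hx i).choose_spec.1
  have hxcard : ∀ i, #(x i) = k i := fun i => (hx i).choose_spec.2
  set X : Set lam.ord.ToType := ⋃ i, x i with hXdef
  have hmkι : #lam.ord.cof.ord.ToType = lam.ord.cof := by rw [Cardinal.mk_toType, Cardinal.card_ord]
  -- upper bound
  have hXle : #X ≤ κ := by
    refine (Cardinal.mk_iUnion_le x).trans ?_
    have h2 : ⨆ i, #(x i) ≤ κ := ciSup_le' fun i => by rw [hxcard]; exact (hklt i).le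
    calc #lam.ord.cof.ord.ToType * ⨆ i, #(x i) ≤ κ * κ := by
          rw [hmkι]; exact mul_le_mul' hμκ h2
    _ = κ := Cardinal.mul_eq_self hκ
  -- elements of `x i` have high rank and avoid early `y`s
  have hxhigh : ∀ i, ∀ t ∈ x i, F i < rnk t := by
    intro i t ht
    have := hxsub i ht
    rw [mem_compl_iff] at this
    by_contra h
    push_neg at h
    exact this (Or.inl h)
  have hxavoid : ∀ i, ∀ y : Y, rnk (e y) ≤ F i → ∀ t ∈ x i, t ∉ (y : Set lam.ord.ToType) := by
    intro i y hy t ht hty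
    have := hxsub i ht
    rw [mem_compl_iff] at this
    exact this (Or.inr (mem_iUnion.2 ⟨⟨y, hy⟩, hty⟩))
  have hne : ∀ i, ∃ t, t ∈ x i := by
    intro i
    have h0 : #(x i) ≠ 0 := by
      rw [hxcard]
      exact Cardinal.one_le_iff_ne_zero.1 le_add_self
    obtain ⟨t⟩ := Cardinal.mk_ne_zero_iff.1 h0
    exact ⟨t, t.2⟩
  -- lower bound via unboundedness
  have hμX : lam.ord.cof ≤ #X := by
    have hub : Set.Unbounded ((· < ·) : lam.ord.ToType → lam.ord.ToType → Prop) X := by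
      intro a
      obtain ⟨i, hi⟩ := hFub (rnk a) (hrnklt a)
      obtain ⟨t, ht⟩ := hne i
      refine ⟨t, mem_iUnion.2 ⟨i, ht⟩, ?_⟩
      have : a < t := hrnkmono.2 (hi.trans_lt (hxhigh i t ht))
      exact asymm this
    have := Order.cof_le (s := X) (fun a => by obtain ⟨b, hb, hab⟩ := hub a; exact ⟨b, hb, le_of_not_gt hab⟩)
    rwa [Ordinal.cof_toType] at this
  have hkX : ∀ i, k i ≤ #X := by
    intro i
    rw [← hxcard]
    exact Cardinal.mk_le_mk_of_subset (subset_iUnion x i)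
  have hXge : κ ≤ #X := by
    by_contra hlt
    push_neg at hlt
    have hsucc : Order.succ #X ≤ κ := Order.succ_le_of_lt hlt
    rcases lt_or_eq_of_le hsucc with hc | hc
    · obtain ⟨i, hi⟩ := hGub _ hc
      have h3 : (G i).card ≤ k i := self_le_add_right _ 1
      have : Order.succ #X ≤ #X := (hi.trans h3).trans (hkX i)
      exact absurd this (not_le.2 (Order.lt_succ _))
    · have hXinf : ℵ₀ ≤ #X := hμinf.trans hμX
      have hreg : (Order.succ #X).IsRegular := Cardinal.isRegular_succ hXinf
      rw [hc] at hreg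
      have : κ ≤ #X := by
        calc κ = κ.ord.cof := hreg.cof_eq.symm
        _ = lam.ord.cof := hcf
        _ ≤ #X := hμX
      exact absurd this (not_le.2 hlt)
  refine ⟨X, le_antisymm hXle hXge, ?_⟩
  intro y hy
  obtain ⟨i₀, hi₀⟩ := hFub (rnk (e ⟨y, hy⟩)) (hrnklt _)
  have hsub : X ∩ y ⊆ ⋃ i : {i : lam.ord.cof.ord.ToType // i < i₀}, x i := by
    rintro t ⟨htX, hty⟩
    obtain ⟨i, ht⟩ := mem_iUnion.1 htX
    have hii : i < i₀ := by
      by_contra h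
      push_neg at h
      have hFle : F i₀ ≤ F i := hFmono.monotone h
      exact hxavoid i ⟨y, hy⟩ (hi₀.trans hFle) t ht hty
    exact mem_iUnion.2 ⟨⟨i, hii⟩, ht⟩
  refine (Cardinal.mk_le_mk_of_subset hsub).trans_lt ?_
  refine (Cardinal.mk_iUnion_le _).trans_lt (Cardinal.mul_lt_of_lt hκ ?_ ?_)
  · have : #{i : lam.ord.cof.ord.ToType // i < i₀} = (typein ((· < ·) : lam.ord.cof.ord.ToType → lam.ord.cof.ord.ToType → Prop) i₀).card :=
      Ordinal.card_typein i₀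
    rw [this]
    exact (Cardinal.lt_ord.1 (hriF i₀)).trans_le hμκ
  · refine lt_of_le_of_lt (ciSup_le' fun i => ?_) (hklt i₀)
    rw [hxcard]
    have : (G i.1).card ≤ (G i₀).card := Ordinal.card_le_card (hGmono i.2).le
    exact add_le_add_left this 1

/-- If `κ < λ` are infinite cardinals with `cf(κ) = cf(λ)`, then `m(κ, λ) > λ`. -/
theorem stmt5 (κ lam : Cardinal.{u}) (hκ : ℵ₀ ≤ κ) (h1 : κ < lam)
    (hcf : κ.ord.cof = lam.ord.cof) :
    lam < meetingNumber κ lam := by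
  set S := {c : Cardinal.{u} |
    ∃ Y : Set (Set lam.ord.ToType), #Y = c ∧ (∀ y ∈ Y, #y = κ) ∧
      ∀ x : Set lam.ord.ToType, #x = κ → ∃ y ∈ Y, #(x ∩ y : Set lam.ord.ToType) = κ}
    with hS
  have hSne : S.Nonempty := by
    refine ⟨#{x : Set lam.ord.ToType | #x = κ}, {x : Set lam.ord.ToType | #x = κ},
      rfl, fun y hy => hy, fun x hx => ⟨x, hx, by rwa [Set.inter_self]⟩⟩
  have hmem : meetingNumber κ lam ∈ S := csInf_mem hSne
  obtain ⟨Y, hY1, hY2, hY3⟩ := hmem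
  by_contra h
  push_neg at h
  have hYle : #Y ≤ lam := hY1.le.trans h
  obtain ⟨x, hx, hmeet⟩ := meeting_aux hκ h1 hcf Y hY2 hYle
  obtain ⟨y, hyY, hyx⟩ := hY3 x hx
  exact absurd hyx (ne_of_lt (hmeet y hyY))
end

section
/- If λ is a singular cardinal of countable cofinality, then λ^{ℵ₀} = 2^{ℵ₀} · m(ω, λ). -/
universe u

open Cardinal

/-- The meeting number `m(κ, λ)`: the least cardinality of a family `Y` of subsets of `λ`,
each of cardinality `κ`, such that every `x ⊆ λ` of cardinality `κ` meets some member
of `Y` in a set of cardinality `κ`. -/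
private lemma enum_of_mk_aleph0 {β : Type u} (s : Set β) (hs : #s = ℵ₀) :
    ∃ f : ℕ → β, Set.range f = s := by
  have h1 : Countable s := mk_le_aleph0_iff.1 hs.le
  have h2 : Infinite s := aleph0_le_mk_iff.1 hs.ge
  obtain ⟨e⟩ : Nonempty (ℕ ≃ s) := nonempty_equiv_of_countable
  refine ⟨fun n => (e n : β), ?_⟩
  ext b
  constructor
  · rintro ⟨n, rfl⟩; exact (e n).2
  · intro hb; exact ⟨e.symm ⟨b, hb⟩, by simp⟩

/-- If `λ` is a singular cardinal of countable cofinality, then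
`λ^ℵ₀ = 2^ℵ₀ · m(ω, λ)`. -/
theorem stmt6 (lam : Cardinal.{u}) (hunc : ℵ₀ < lam) (hcof : lam.ord.cof = ℵ₀) :
    lam ^ (ℵ₀ : Cardinal.{u}) = 2 ^ (ℵ₀ : Cardinal.{u}) * meetingNumber ℵ₀ lam := by
  set β := lam.ord.ToType with hβ
  have hmkβ : #β = lam := Cardinal.mk_ord_toType lam
  have hinfβ : Infinite β := by
    rw [Cardinal.infinite_iff, hmkβ]; exact hunc.le
  have harrow : #(ℕ → β) = lam ^ (ℵ₀ : Cardinal.{u}) := by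
    simp [Cardinal.mk_arrow, hmkβ]
  set S : Set Cardinal.{u} := {c : Cardinal.{u} |
    ∃ Y : Set (Set β), #Y = c ∧ (∀ y ∈ Y, #y = ℵ₀) ∧
      ∀ x : Set β, #x = ℵ₀ → ∃ y ∈ Y, #(x ∩ y : Set β) = ℵ₀} with hS
  -- the trivial witness family: all countably infinite subsets
  set Y₀ : Set (Set β) := {s : Set β | #s = ℵ₀} with hY₀
  have hY₀mem : #Y₀ ∈ S := by
    refine ⟨Y₀, rfl, fun y hy => hy, fun x hx => ⟨x, hx, by rwa [Set.inter_self]⟩⟩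
  have hSne : S.Nonempty := ⟨_, hY₀mem⟩
  have hY₀le : #Y₀ ≤ lam ^ (ℵ₀ : Cardinal.{u}) := by
    rw [← harrow]
    have : ∀ s : Y₀, ∃ f : ℕ → β, Set.range f = (s : Set β) := fun ⟨s, hs⟩ =>
      enum_of_mk_aleph0 s hs
    choose F hF using this
    have hFinj : Function.Injective F := by
      intro s t hst
      exact Subtype.ext (by rw [← hF s, ← hF t, hst])
    exact Cardinal.mk_le_of_injective hFinj
  have hmle : meetingNumber ℵ₀ lam ≤ lam ^ (ℵ₀ : Cardinal.{u}) :=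
    le_trans (csInf_le' hY₀mem) hY₀le
  have h2lam : (2 : Cardinal.{u}) ≤ lam := by
    refine le_trans ?_ hunc.le
    exact_mod_cast (Cardinal.nat_lt_aleph0 2).le
  have h2le : (2 : Cardinal.{u}) ^ (ℵ₀ : Cardinal.{u}) ≤ lam ^ (ℵ₀ : Cardinal.{u}) :=
    Cardinal.power_le_power_right h2lam
  have hpowinf : ℵ₀ ≤ lam ^ (ℵ₀ : Cardinal.{u}) :=
    le_trans hunc.le (Cardinal.self_le_power lam (by simp [Cardinal.one_le_aleph0]))
  -- a minimal meeting family
  obtain ⟨Y, hYcard, hYall, hYmeet⟩ : meetingNumber ℵ₀ lam ∈ S := csInf_mem hSne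
  -- enumerations of the members of Y
  have : ∀ y : Y, ∃ f : ℕ → β, Set.range f = (y : Set β) := fun y =>
    enum_of_mk_aleph0 (y : Set β) (hYall y y.2)
  choose E hE using this
  -- the hard direction: lam^ℵ₀ ≤ 2^ℵ₀ * m
  have key : lam ^ (ℵ₀ : Cardinal.{u}) ≤ 2 ^ (ℵ₀ : Cardinal.{u}) * meetingNumber ℵ₀ lam := by
    rw [← harrow]
    -- code finite sequences into β
    obtain ⟨e⟩ : Nonempty (List β ≃ β) := Cardinal.eq.1 (Cardinal.mk_list_eq_mk β)
    -- for f : ℕ → β, the set of codes of initial segments of f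
    set L : (ℕ → β) → ℕ → β := fun f n => e (List.map f (List.range n)) with hL
    have hLinj : ∀ f, Function.Injective (L f) := by
      intro f m n hmn
      have h := congrArg List.length (e.injective hmn)
      simpa using h
    set X : (ℕ → β) → Set β := fun f => Set.range (L f) with hX
    have hXcard : ∀ f, #(X f) = ℵ₀ := fun f =>
      le_antisymm (mk_le_aleph0_iff.2 (Set.countable_range _))
        (aleph0_le_mk_iff.2 ((Set.infinite_range_of_injective (hLinj f)).to_subtype))
    -- key decoding fact: an infinite subset of (X f) determines f
    have decode : ∀ f g : ℕ → β, ∀ y : Set β, (X f ∩ y).Infinite →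
        X f ∩ y = X g ∩ y → f = g := by
      intro f g y hinf hxy
      funext m
      set N : Set ℕ := {n : ℕ | L f n ∈ y} with hN
      have hNinf : N.Infinite := by
        intro hfin
        refine hinf ?_
        refine Set.Finite.subset (hfin.image (L f)) ?_
        rintro b ⟨⟨n, rfl⟩, hby⟩
        exact ⟨n, hby, rfl⟩
      obtain ⟨n, hn, hmn⟩ := hNinf.exists_gt m
      have hmem : L f n ∈ X g ∩ y := by
        rw [← hxy]; exact ⟨⟨n, rfl⟩, hn⟩
      obtain ⟨n', hn'⟩ := hmem.1
      -- hn' : L g n' = L f n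
      have hlist : List.map g (List.range n') = List.map f (List.range n) :=
        e.injective hn'
      have hlen : n' = n := by simpa using congrArg List.length hlist
      subst hlen
      have := (List.map_inj_left.1 hlist) m (List.mem_range.2 hmn)
      exact this.symm
    -- pick meeting members
    have hchoice : ∀ f : ℕ → β, ∃ y ∈ Y, #((X f) ∩ y : Set β) = ℵ₀ := fun f =>
      hYmeet (X f) (hXcard f)
    choose yf hyf hyfcard using hchoice
    -- the injection into Y × Set ℕ (with ℕ lifted)
    set Φ : (ℕ → β) → (Y × Set (ULift.{u} ℕ)) :=
      fun f => (⟨yf f, hyf f⟩, {n : ULift.{u} ℕ | E ⟨yf f, hyf f⟩ n.down ∈ X f}) with hΦ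
    have hΦinj : Function.Injective Φ := by
      intro f g hfg
      have h1 : (⟨yf f, hyf f⟩ : Y) = ⟨yf g, hyf g⟩ := congrArg Prod.fst hfg
      have h2 : {n : ULift.{u} ℕ | E ⟨yf f, hyf f⟩ n.down ∈ X f}
          = {n : ULift.{u} ℕ | E ⟨yf g, hyf g⟩ n.down ∈ X g} := congrArg Prod.snd hfg
      have hyeq : yf f = yf g := congrArg Subtype.val h1
      refine decode f g (yf f) ?_ ?_
      · rw [Set.infinite_coe_iff.symm, Cardinal.infinite_iff, hyfcard f]
      · ext b
        have hb : b ∈ (yf f : Set β) ↔ ∃ n : ℕ, E ⟨yf f, hyf f⟩ n = b := by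
          constructor
          · intro hby
            have hb' : b ∈ Set.range (E ⟨yf f, hyf f⟩) := by
              rw [hE ⟨yf f, hyf f⟩]; exact hby
            exact hb'
          · rintro ⟨n, rfl⟩
            have hb' : E ⟨yf f, hyf f⟩ n ∈ Set.range (E ⟨yf f, hyf f⟩) := ⟨n, rfl⟩
            rw [hE ⟨yf f, hyf f⟩] at hb'
            exact hb'
        simp only [Set.mem_inter_iff]
        constructor
        · rintro ⟨hbX, hby⟩
          obtain ⟨n, hn⟩ := hb.1 hby
          have : (⟨n⟩ : ULift ℕ) ∈ {n : ULift.{u} ℕ | E ⟨yf f, hyf f⟩ n.down ∈ X f} := by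
            simpa [hn] using hbX
          rw [h2] at this
          have hmem : E ⟨yf g, hyf g⟩ n ∈ X g := this
          rw [← h1] at hmem
          rw [hn] at hmem
          exact ⟨hmem, hby⟩
        · rintro ⟨hbX, hby⟩
          obtain ⟨n, hn⟩ := hb.1 hby
          have hmem' : (⟨n⟩ : ULift ℕ) ∈ {n : ULift.{u} ℕ | E ⟨yf g, hyf g⟩ n.down ∈ X g} := by
            have : E ⟨yf g, hyf g⟩ n ∈ X g := by rw [← h1, hn]; exact hbX
            simpa using this
          rw [← h2] at hmem'
          have hmem : E ⟨yf f, hyf f⟩ n ∈ X f := hmem'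
          rw [hn] at hmem
          exact ⟨hmem, hby⟩
    calc #(ℕ → β) ≤ #(Y × Set (ULift.{u} ℕ)) := Cardinal.mk_le_of_injective hΦinj
      _ = #Y * 2 ^ (ℵ₀ : Cardinal.{u}) := by
          simp [Cardinal.mk_set]
      _ = 2 ^ (ℵ₀ : Cardinal.{u}) * meetingNumber ℵ₀ lam := by rw [hYcard, mul_comm]
  refine le_antisymm key ?_
  calc (2:Cardinal.{u}) ^ (ℵ₀ : Cardinal.{u}) * meetingNumber ℵ₀ lam
      ≤ lam ^ (ℵ₀ : Cardinal.{u}) * lam ^ (ℵ₀ : Cardinal.{u}) := mul_le_mul' h2le hmle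
    _ = lam ^ (ℵ₀ : Cardinal.{u}) := Cardinal.mul_eq_self hpowinf
end

section
/- Let μ be a singular cardinal, θ = cf(μ), and μ⃗ = ⟨μ_i : i < θ⟩ an increasing sequence of regular cardinals converging to μ. Then there is a uniform, transitive θ-covering matrix for μ⁺ that respects μ⃗. -/
universe u

open Cardinal

/-- `C` is a club in the ordinal `β`: a subset of `β` that is unbounded in `β` and
closed (contains the supremum of each of its nonempty subsets whenever that
supremum is `< β`). -/
def IsClubIn (C : Set Ordinal.{u}) (β : Ordinal.{u}) : Prop :=
  C ⊆ Set.Iio β ∧ (∀ γ < β, ∃ x ∈ C, γ ≤ x) ∧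
    ∀ s ⊆ C, s.Nonempty → sSup s < β → sSup s ∈ C

/-- `D` is a `θ`-covering matrix for `λ` (indexed by `i < θ.ord` and `β < λ.ord`):
for each `β < λ`, `⟨D i β : i < θ⟩` is `⊆`-increasing with union `β`, and for
`β < γ < λ` every `D i β` is contained in some `D j γ`. -/
def IsCoveringMatrix (θ lam : Cardinal.{u})
    (D : Ordinal.{u} → Ordinal.{u} → Set Ordinal.{u}) : Prop :=
  (∀ β < lam.ord, ∀ i j : Ordinal.{u}, i ≤ j → j < θ.ord → D i β ⊆ D j β) ∧
    (∀ β < lam.ord, (⋃ i ∈ Set.Iio θ.ord, D i β) = Set.Iio β) ∧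
    (∀ β γ : Ordinal.{u}, β < γ → γ < lam.ord → ∀ i < θ.ord, ∃ j < θ.ord, D i β ⊆ D j γ)

/-- The covering matrix `D` is transitive. -/
def TransitiveCM (θ lam : Cardinal.{u})
    (D : Ordinal.{u} → Ordinal.{u} → Set Ordinal.{u}) : Prop :=
  ∀ i < θ.ord, ∀ β γ : Ordinal.{u}, γ < lam.ord → β ∈ D i γ → D i β ⊆ D i γ

/-- The covering matrix `D` is uniform: every limit `β < λ` has some `D i β`
containing a club in `β`. -/
def UniformCM (θ lam : Cardinal.{u})
    (D : Ordinal.{u} → Ordinal.{u} → Set Ordinal.{u}) : Prop :=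
  ∀ β < lam.ord, Order.IsSuccLimit β → ∃ i < θ.ord, ∃ C ⊆ D i β, IsClubIn C β

/-- The covering matrix `D` respects the sequence `μs`: `|D i β| < μs i`. -/
def RespectsCM (θ lam : Cardinal.{u})
    (D : Ordinal.{u} → Ordinal.{u} → Set Ordinal.{u})
    (μs : Ordinal.{u} → Cardinal.{u}) : Prop :=
  ∀ i < θ.ord, ∀ β < lam.ord, #(D i β) < Cardinal.lift.{u + 1} (μs i)

/-- `CP(D)`: there is an unbounded `A ⊆ λ` such that every `X ⊆ A` with `|X| = θ`
is contained in some entry of the matrix `D`. -/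
def CPmatrix (θ lam : Cardinal.{u})
    (D : Ordinal.{u} → Ordinal.{u} → Set Ordinal.{u}) : Prop :=
  ∃ A : Set Ordinal.{u}, A ⊆ Set.Iio lam.ord ∧ (∀ γ < lam.ord, ∃ α ∈ A, γ ≤ α) ∧
    ∀ X : Set Ordinal.{u}, X ⊆ A → #X = Cardinal.lift.{u + 1} θ →
      ∃ i < θ.ord, ∃ β < lam.ord, X ⊆ D i β

noncomputable def Dmat (e : Ordinal.{u} → Ordinal.{u} → Ordinal.{u})
    (ν : Ordinal.{u} → Ordinal.{u}) (i : Ordinal.{u}) (β : Ordinal.{u}) : Set Ordinal.{u} :=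
  ⋃ ξ ∈ Set.Iio (ν i), if h : e β ξ < β then insert (e β ξ) (Dmat e ν i (e β ξ)) else ∅
termination_by β
decreasing_by exact h

theorem mem_Dmat {e ν : _} {i β γ : Ordinal.{u}} :
    γ ∈ Dmat e ν i β ↔ ∃ ξ < ν i, ∃ _ : e β ξ < β, γ = e β ξ ∨ γ ∈ Dmat e ν i (e β ξ) := by
  rw [Dmat]
  simp only [Set.mem_iUnion, Set.mem_Iio]
  constructor
  · rintro ⟨ξ, hξ, hm⟩
    split_ifs at hm with h
    · rcases hm with rfl | hm
      · exact ⟨ξ, hξ, h, Or.inl rfl⟩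
      · exact ⟨ξ, hξ, h, Or.inr hm⟩
    · exact absurd hm (Set.notMem_empty γ)
  · rintro ⟨ξ, hξ, h, hm⟩
    refine ⟨ξ, hξ, ?_⟩
    rw [dif_pos h]
    rcases hm with rfl | hm
    · exact Set.mem_insert _ _
    · exact Set.mem_insert_of_mem _ hm

theorem Dmat_subset_Iio (e ν : _) (i : Ordinal.{u}) : ∀ β, Dmat e ν i β ⊆ Set.Iio β := by
  intro β
  induction β using Ordinal.induction with
  | _ β IH =>
    intro γ hγ
    rw [mem_Dmat] at hγ
    obtain ⟨ξ, _, h, rfl | hm⟩ := hγ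
    · exact h
    · exact lt_trans (IH _ h hm) h

theorem Dmat_mono (e ν : _) {i j : Ordinal.{u}} (hij : ν i ≤ ν j) :
    ∀ β, Dmat e ν i β ⊆ Dmat e ν j β := by
  intro β
  induction β using Ordinal.induction with
  | _ β IH =>
    intro γ hγ
    rw [mem_Dmat] at hγ ⊢
    obtain ⟨ξ, hξ, h, hd⟩ := hγ
    refine ⟨ξ, lt_of_lt_of_le hξ hij, h, ?_⟩
    rcases hd with rfl | hm
    · exact Or.inl rfl
    · exact Or.inr (IH _ h hm)

theorem Dmat_trans (e ν : _) (i : Ordinal.{u}) :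
    ∀ β, ∀ γ ∈ Dmat e ν i β, Dmat e ν i γ ⊆ Dmat e ν i β := by
  intro β
  induction β using Ordinal.induction with
  | _ β IH =>
    intro γ hγ
    rw [mem_Dmat] at hγ
    obtain ⟨ξ, hξ, h, hd⟩ := hγ
    rcases hd with rfl | hm
    · intro δ hδ
      rw [mem_Dmat]
      exact ⟨ξ, hξ, h, Or.inr hδ⟩
    · intro δ hδ
      rw [mem_Dmat]
      exact ⟨ξ, hξ, h, Or.inr (IH _ h _ hm hδ)⟩

theorem Dmat_card (e ν : _) (i : Ordinal.{u}) {κ : Cardinal.{u+1}} (hκ : κ.IsRegular)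
    (hν : #(Set.Iio (ν i)) < κ) : ∀ β, #(Dmat e ν i β) < κ := by
  intro β
  induction β using Ordinal.induction with
  | _ β IH =>
    rw [Dmat]
    apply lt_of_le_of_lt (Cardinal.mk_biUnion_le _ _)
    apply Cardinal.mul_lt_of_lt hκ.1 hν
    apply Cardinal.iSup_lt_of_isRegular hκ hν
    rintro ⟨ξ, hξ⟩
    dsimp only
    split_ifs with h
    · apply lt_of_le_of_lt (Cardinal.mk_insert_le)
      exact Cardinal.add_lt_of_lt hκ.1 (IH _ h) (lt_of_lt_of_le Cardinal.one_lt_aleph0 hκ.1)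
    · simpa using lt_of_lt_of_le Cardinal.aleph0_pos hκ.1


theorem exists_club_enum (β : Ordinal.{u}) (hlim : Order.IsSuccLimit β) :
    ∃ c : Ordinal.{u} → Ordinal.{u}, ∃ C : Set Ordinal.{u},
      IsClubIn C β ∧ C ⊆ c '' Set.Iio (β.cof.ord + 1) := by
  obtain ⟨fs, hfs⟩ := Ordinal.exists_fundamental_sequence β
  let ρ₀ : Ordinal.{u} := β.cof.ord
  let F : Ordinal.{u} → Ordinal.{u} := fun b => if h : b < ρ₀ then fs b h else 0
  have hF1 : ∀ b < ρ₀, F b < β := by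
    intro b hb
    show (if h : b < ρ₀ then fs b h else 0) < β
    rw [dif_pos hb]
    exact hfs.lt hb
  have hFmono : ∀ {b b'}, b < b' → b' < ρ₀ → F b < F b' := by
    intro b b' hbb hb'
    have hb : b < ρ₀ := hbb.trans hb'
    show (if h : b < ρ₀ then fs b h else 0) < (if h : b' < ρ₀ then fs b' h else 0)
    rw [dif_pos hb, dif_pos hb']
    exact hfs.strict_mono hb hb' hbb
  have hFcof : ∀ γ < β, ∃ b < ρ₀, γ ≤ F b := by
    intro γ hγ
    rw [← hfs.blsub_eq] at hγ
    obtain ⟨b, hb, hle⟩ := Ordinal.lt_blsub_iff.1 hγ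
    refine ⟨b, hb, ?_⟩
    show γ ≤ (if h : b < ρ₀ then fs b h else 0)
    rw [dif_pos hb]
    exact hle
  let A : Set Ordinal.{u} := F '' Set.Iio ρ₀
  let C : Set Ordinal.{u} := {x | x < β ∧ sSup (A ∩ Set.Iic x) = x}
  refine ⟨fun ξ => sSup (F '' Set.Iio ξ), C, ⟨fun x hx => hx.1, ?_, ?_⟩, ?_⟩
  · -- unbounded
    intro γ hγ
    obtain ⟨b, hb, hle⟩ := hFcof γ hγ
    have hmem : F b ∈ A ∩ Set.Iic (F b) := ⟨⟨b, hb, rfl⟩, Set.mem_Iic.mpr le_rfl⟩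
    refine ⟨F b, ⟨hF1 b hb, ?_⟩, hle⟩
    apply le_antisymm
    · exact csSup_le ⟨_, hmem⟩ fun y hy => hy.2
    · exact le_csSup ⟨F b, fun y hy => hy.2⟩ hmem
  · -- closed
    intro s hs hne hsup
    have hbdds : BddAbove s := ⟨β, fun y hy => ((hs hy).1).le⟩
    refine ⟨hsup, le_antisymm ?_ ?_⟩
    · rcases Set.eq_empty_or_nonempty (A ∩ Set.Iic (sSup s)) with he | hne'
      · rw [he, csSup_empty]; exact zero_le
      · exact csSup_le hne' fun y hy => hy.2
    · apply csSup_le hne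
      intro x hx
      have hxσ : x ≤ sSup s := le_csSup hbdds hx
      have hxC := hs hx
      rcases Set.eq_empty_or_nonempty (A ∩ Set.Iic x) with he | hne'
      · have hx0 : x = 0 := by rw [← hxC.2, he, csSup_empty, Ordinal.bot_eq_zero]
        rw [hx0]; exact zero_le
      · calc x = sSup (A ∩ Set.Iic x) := hxC.2.symm
          _ ≤ sSup (A ∩ Set.Iic (sSup s)) := csSup_le_csSup ⟨sSup s, fun y hy => hy.2⟩ hne'
              (Set.inter_subset_inter_right A (Set.Iic_subset_Iic.2 hxσ))
  · -- C ⊆ c '' Iio (ρ₀+1)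
    intro x hx
    let S : Set Ordinal.{u} := {b | b < ρ₀ ∧ F b ≤ x}
    let ξx : Ordinal.{u} := sSup ((fun b => b + 1) '' S)
    have hSbdd : BddAbove ((fun b => b + 1) '' S) := by
      refine ⟨ρ₀, ?_⟩
      rintro y ⟨b, hb, rfl⟩
      exact Order.add_one_le_iff.mpr hb.1
    have hξρ : ξx ≤ ρ₀ := by
      rcases Set.eq_empty_or_nonempty ((fun b => b + 1) '' S) with he | hne'
      · show sSup _ ≤ _
        rw [he, csSup_empty]; exact zero_le
      · exact csSup_le hne' (by rintro y ⟨b, hb, rfl⟩; exact Order.add_one_le_iff.mpr hb.1)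
    have hmemS : ∀ b, b ∈ S ↔ b < ξx := by
      intro b
      constructor
      · intro hb
        have h1 : b + 1 ≤ ξx := le_csSup hSbdd ⟨b, hb, rfl⟩
        exact lt_of_lt_of_le (lt_add_one b) h1
      · intro hb
        rcases Set.eq_empty_or_nonempty S with he | hne'
        · exfalso
          have : ξx = 0 := by
            show sSup _ = 0
            rw [he, Set.image_empty, csSup_empty, Ordinal.bot_eq_zero]
          rw [this] at hb
          exact not_lt_of_ge (zero_le (a := b)) hb
        · obtain ⟨y, ⟨b', hb', rfl⟩, hby⟩ := (lt_csSup_iff hSbdd (hne'.image _)).1 hb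
          have hbb' : b ≤ b' := Order.lt_add_one_iff.mp hby
          rcases eq_or_lt_of_le hbb' with rfl | hlt
          · exact hb'
          · exact ⟨hlt.trans hb'.1, le_of_lt (lt_of_lt_of_le (hFmono hlt hb'.1) hb'.2)⟩
    have hkey : A ∩ Set.Iic x = F '' Set.Iio ξx := by
      ext y
      constructor
      · rintro ⟨⟨b, hb, rfl⟩, hyx⟩
        exact ⟨b, (hmemS b).1 ⟨hb, hyx⟩, rfl⟩
      · rintro ⟨b, hb, rfl⟩
        have hbS := (hmemS b).2 hb
        exact ⟨⟨b, hbS.1, rfl⟩, hbS.2⟩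
    refine ⟨ξx, lt_of_le_of_lt hξρ (lt_add_one ρ₀), ?_⟩
    show sSup (F '' Set.Iio ξx) = x
    rw [← hkey]
    exact hx.2


theorem exists_goodE (μ : Cardinal.{u}) (hμ : ℵ₀ ≤ μ) (hsing : μ.ord.cof < μ)
    (β : Ordinal.{u}) :
    ∃ p : Ordinal.{u} → Ordinal.{u}, β < (Order.succ μ).ord →
      (∀ γ < β, ∃ ξ < μ.ord, p ξ = γ) ∧
      (Order.IsSuccLimit β → ∃ ρ < μ.ord, ∃ C, IsClubIn C β ∧ C ⊆ p '' Set.Iio ρ) := by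
  rcases eq_or_ne β 0 with rfl | hβ0
  · exact ⟨fun _ => 0, fun _ =>
      ⟨fun γ hγ => absurd hγ (not_lt_of_ge (zero_le (a := γ))),
       fun h => absurd h.pos (lt_irrefl 0)⟩⟩
  by_cases hβ : β < (Order.succ μ).ord
  swap
  · exact ⟨fun _ => 0, fun h => absurd h hβ⟩
  have hcb : β.card ≤ μ := Order.lt_succ_iff.1 (Cardinal.lt_ord.1 hβ)
  classical
  have hle : #(Set.Iio β) ≤ #(Set.Iio μ.ord) := by
    rw [Ordinal.mk_Iio_ordinal, Ordinal.mk_Iio_ordinal, Cardinal.card_ord]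
    exact Cardinal.lift_le.2 hcb
  obtain ⟨f⟩ := (Cardinal.le_def _ _).1 hle
  let s : Ordinal.{u} → Ordinal.{u} :=
    fun ξ => if h : ∃ γ : Set.Iio β, ((f γ : Set.Iio μ.ord) : Ordinal) = ξ
      then (h.choose : Ordinal) else 0
  have hs2 : ∀ γ < β, ∃ ξ < μ.ord, s ξ = γ := by
    intro γ hγ
    refine ⟨(f ⟨γ, hγ⟩ : Set.Iio μ.ord), (f ⟨γ, hγ⟩).2, ?_⟩
    have hex : ∃ γ' : Set.Iio β, ((f γ' : Set.Iio μ.ord) : Ordinal) =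
        ((f ⟨γ, hγ⟩ : Set.Iio μ.ord) : Ordinal) := ⟨⟨γ, hγ⟩, rfl⟩
    show (if h : ∃ γ' : Set.Iio β, ((f γ' : Set.Iio μ.ord) : Ordinal) =
        ((f ⟨γ, hγ⟩ : Set.Iio μ.ord) : Ordinal)
      then ((h.choose : Set.Iio β) : Ordinal) else 0) = γ
    rw [dif_pos hex]
    have h2 : f hex.choose = f ⟨γ, hγ⟩ := Subtype.ext hex.choose_spec
    have h3 : hex.choose = ⟨γ, hγ⟩ := f.injective h2
    rw [h3]
  by_cases hl : Order.IsSuccLimit β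
  · obtain ⟨c, C, hclub, hsub⟩ := exists_club_enum β hl
    have hcof : β.cof < μ := by
      have h1 : β.cof ≤ μ := (Ordinal.cof_le_card β).trans hcb
      refine lt_of_le_of_ne h1 ?_
      intro h
      have hr := Cardinal.isRegular_cof hl
      rw [h] at hr
      exact absurd hr.2 (not_le.2 hsing)
    have hρμ : β.cof.ord + 1 < μ.ord := by
      rw [Ordinal.add_one_eq_succ]
      exact (Cardinal.isSuccLimit_ord hμ).succ_lt (Cardinal.ord_lt_ord.2 hcof)
    refine ⟨fun ξ => if ξ < β.cof.ord + 1 then c ξ else s (ξ - (β.cof.ord + 1)),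
      fun _ => ⟨?_, fun _ => ⟨β.cof.ord + 1, hρμ, C, hclub, ?_⟩⟩⟩
    · intro γ hγ
      obtain ⟨ζ, hζ, hsζ⟩ := hs2 γ hγ
      refine ⟨β.cof.ord + 1 + ζ, ?_, ?_⟩
      · rw [Cardinal.lt_ord, Ordinal.card_add]
        exact Cardinal.add_lt_of_lt hμ (Cardinal.lt_ord.1 hρμ) (Cardinal.lt_ord.1 hζ)
      · dsimp only
        rw [if_neg (not_lt.2 (le_self_add)), Ordinal.add_sub_cancel]
        exact hsζ
    · intro x hx
      obtain ⟨ξ, hξ, hxe⟩ := hsub hx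
      exact ⟨ξ, hξ, by dsimp only; rw [if_pos (Set.mem_Iio.1 hξ)]; exact hxe⟩
  · exact ⟨s, fun _ => ⟨hs2, fun hl' => absurd hl' hl⟩⟩


/-- For every singular cardinal `μ` with `θ = cf(μ)` and every increasing sequence
`μ⃗` of regular cardinals converging to `μ`, there is a uniform transitive
`θ`-covering matrix for `μ⁺` respecting `μ⃗`. -/
theorem stmt7 (μ : Cardinal.{u}) (hμ : ℵ₀ ≤ μ) (hsing : μ.ord.cof < μ)
    (μs : Ordinal.{u} → Cardinal.{u})
    (hmono : ∀ i j : Ordinal.{u}, i < j → j < (μ.ord.cof).ord → μs i < μs j)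
    (hreg : ∀ i < (μ.ord.cof).ord, (μs i).IsRegular)
    (hlt : ∀ i < (μ.ord.cof).ord, μs i < μ)
    (hconv : ∀ c < μ, ∃ i < (μ.ord.cof).ord, c ≤ μs i) :
    ∃ D : Ordinal.{u} → Ordinal.{u} → Set Ordinal.{u},
      IsCoveringMatrix (μ.ord.cof) (Order.succ μ) D ∧
        TransitiveCM (μ.ord.cof) (Order.succ μ) D ∧
        UniformCM (μ.ord.cof) (Order.succ μ) D ∧
        RespectsCM (μ.ord.cof) (Order.succ μ) D μs := by
  obtain ⟨istar, histar, histar2⟩ := hconv (μ.ord.cof) hsing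
  have hθreg : (μ.ord.cof).IsRegular := Cardinal.isRegular_cof (Cardinal.isSuccLimit_ord hμ)
  have hθord : Order.IsSuccLimit (μ.ord.cof).ord := Cardinal.isSuccLimit_ord hθreg.1
  set ν : Ordinal.{u} → Ordinal.{u} :=
    fun i => Ordinal.bsup i (fun j _ => if istar ≤ j then (μs j).ord else 0) with hν
  have Mν : ∀ i j : Ordinal.{u}, i ≤ j → ν i ≤ ν j := by
    intro i j hij
    apply Ordinal.bsup_le
    intro k hk
    exact Ordinal.le_bsup _ k (lt_of_lt_of_le hk hij)
  have Cν : ∀ ξ < μ.ord, ∃ i < (μ.ord.cof).ord, ξ < ν i := by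
    intro ξ hξ
    obtain ⟨j, hj, hjξ⟩ := hconv ξ.card (Cardinal.lt_ord.1 hξ)
    have hkθ : max j istar < (μ.ord.cof).ord := max_lt hj histar
    have hk1 : max j istar + 1 < (μ.ord.cof).ord := by
      rw [Ordinal.add_one_eq_succ]; exact hθord.succ_lt hkθ
    have hk2 : max j istar + 1 + 1 < (μ.ord.cof).ord := by
      rw [Ordinal.add_one_eq_succ]; exact hθord.succ_lt hk1
    refine ⟨max j istar + 1 + 1, hk2, ?_⟩
    have h1 : μs j < μs (max j istar + 1) :=
      hmono j (max j istar + 1)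
        (lt_of_le_of_lt (le_max_left j istar) (lt_add_one _)) hk1
    have h2 : ξ < (μs (max j istar + 1)).ord :=
      Cardinal.lt_ord.2 (lt_of_le_of_lt hjξ h1)
    refine lt_of_lt_of_le h2 ?_
    have h3 := Ordinal.le_bsup
      (fun k (_ : k < max j istar + 1 + 1) => if istar ≤ k then (μs k).ord else 0)
      (max j istar + 1) (lt_add_one _)
    rwa [if_pos (le_trans (le_max_right j istar) (le_of_lt (lt_add_one _)))] at h3
  have Sν : ∀ i < (μ.ord.cof).ord, (ν i).card < μs i := by
    intro i hi
    rcases lt_or_ge istar i with hii | hii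
    · have hνlt : ν i < (μs i).ord := by
        apply Cardinal.bsup_lt_ord_of_isRegular (hreg i hi)
        · exact lt_of_lt_of_le (Cardinal.lt_ord.1 hi)
            (le_trans histar2 (le_of_lt (hmono istar i hii hi)))
        · intro j hj
          split_ifs with h
          · exact Cardinal.ord_lt_ord.2 (hmono j i hj hi)
          · exact (hreg i hi).ord_pos
      exact Cardinal.lt_ord.1 hνlt
    · have hν0 : ν i = 0 := by
        apply le_antisymm _ zero_le
        apply Ordinal.bsup_le
        intro j hj
        rw [if_neg (not_le.2 (lt_of_lt_of_le hj hii))]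
      rw [hν0]
      simpa using (hreg i hi).pos
  set e : Ordinal.{u} → Ordinal.{u} → Ordinal.{u} :=
    fun β => (exists_goodE μ hμ hsing β).choose with hedef
  have he : ∀ β, β < (Order.succ μ).ord →
      (∀ γ < β, ∃ ξ < μ.ord, e β ξ = γ) ∧
      (Order.IsSuccLimit β → ∃ ρ < μ.ord, ∃ C, IsClubIn C β ∧ C ⊆ (e β) '' Set.Iio ρ) :=
    fun β => (exists_goodE μ hμ hsing β).choose_spec
  refine ⟨Dmat e ν, ⟨?_, ?_, ?_⟩, ?_, ?_, ?_⟩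
  · intro β _ i j hij _
    exact Dmat_mono e ν (Mν i j hij) β
  · intro β hβ
    apply Set.eq_of_subset_of_subset
    · intro γ hγ
      simp only [Set.mem_iUnion] at hγ
      obtain ⟨i, _, hm⟩ := hγ
      exact Dmat_subset_Iio e ν i β hm
    · intro γ hγ
      obtain ⟨ξ, hξ, hgoal⟩ := (he β hβ).1 γ hγ
      obtain ⟨i, hi, hiν⟩ := Cν ξ hξ
      simp only [Set.mem_iUnion]
      exact ⟨i, hi, mem_Dmat.2 ⟨ξ, hiν, by rw [hgoal]; exact hγ, Or.inl hgoal.symm⟩⟩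
  · intro β γ hβγ hγ i hi
    obtain ⟨ξ, hξ, hgoal⟩ := (he γ hγ).1 β hβγ
    obtain ⟨j₀, hj₀, hj₀ν⟩ := Cν ξ hξ
    refine ⟨max i j₀, max_lt hi hj₀, ?_⟩
    have h1 : Dmat e ν i β ⊆ Dmat e ν (max i j₀) β :=
      Dmat_mono e ν (Mν i (max i j₀) (le_max_left _ _)) β
    have hmem : β ∈ Dmat e ν (max i j₀) γ :=
      mem_Dmat.2 ⟨ξ, lt_of_lt_of_le hj₀ν (Mν j₀ (max i j₀) (le_max_right _ _)),
        by rw [hgoal]; exact hβγ, Or.inl hgoal.symm⟩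
    exact subset_trans h1 (Dmat_trans e ν (max i j₀) γ β hmem)
  · intro i _ β γ _ hβ
    exact Dmat_trans e ν i γ β hβ
  · intro β hβ hlim
    obtain ⟨ρ, hρ, C, hclub, hsub⟩ := (he β hβ).2 hlim
    obtain ⟨i, hi, hiν⟩ := Cν ρ hρ
    refine ⟨i, hi, C, ?_, hclub⟩
    intro x hx
    obtain ⟨ξ, hξ, hxe⟩ := hsub hx
    exact mem_Dmat.2 ⟨ξ, lt_trans hξ hiν, by rw [hxe]; exact hclub.1 hx, Or.inl hxe.symm⟩
  · intro i hi β _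
    have h1 := hreg i hi
    have hκ : (Cardinal.lift.{u+1} (μs i)).IsRegular := by
      constructor
      · exact Cardinal.aleph0_le_lift.2 h1.1
      · rw [← Cardinal.lift_ord, ← Ordinal.lift_cof]
        exact Cardinal.lift_le.2 h1.2
    apply Dmat_card e ν i hκ
    rw [Ordinal.mk_Iio_ordinal]
    exact Cardinal.lift_lt.2 (Sν i hi)
end

section
/- Suppose κ and ν are regular cardinals and κ⁺ < ν. Then there is a sequence ⟨C_α : α ∈ S^ν_κ⟩ such that: (1) for all α ∈ S^ν_κ, C_α is a club in α; and (2) for every club C in ν, the set {α ∈ S^ν_κ : C_α ⊆ C} is stationary in ν. -/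
universe u

open Cardinal

/-- `S` is stationary in the ordinal `β`: it meets every club in `β`. -/
def IsStationaryIn (S : Set Ordinal.{u}) (β : Ordinal.{u}) : Prop :=
  ∀ C : Set Ordinal.{u}, IsClubIn C β → (S ∩ C).Nonempty

section ClubGuessAux
open Set Order

namespace CG

theorem bddAbove_of_le {s : Set Ordinal.{u}} {b : Ordinal.{u}} (h : ∀ x ∈ s, x ≤ b) :
    BddAbove s := ⟨b, h⟩

theorem sSup_le_sSup' {s t : Set Ordinal.{u}} (h : s ⊆ t) (ht : BddAbove t) :
    sSup s ≤ sSup t := by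
  rcases s.eq_empty_or_nonempty with rfl | hs
  · simpa using bot_le
  · exact csSup_le_csSup ht hs h

/-- closure of `S` inside `α`. -/
def cl (S : Set Ordinal.{u}) (α : Ordinal.{u}) : Set Ordinal.{u} :=
  {x | x < α ∧ (S ∩ Set.Iic x).Nonempty ∧ sSup (S ∩ Set.Iic x) = x}

theorem self_mem_cl {S : Set Ordinal.{u}} {α x : Ordinal.{u}} (hx : x ∈ S) (hxα : x < α) :
    x ∈ cl S α := by
  refine ⟨hxα, ⟨x, hx, Set.mem_Iic.2 le_rfl⟩, le_antisymm (csSup_le ⟨x, hx, Set.mem_Iic.2 le_rfl⟩ fun z hz => hz.2)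
    (le_csSup (bddAbove_of_le fun z hz => hz.2) ⟨hx, Set.mem_Iic.2 le_rfl⟩)⟩

theorem cl_isClubIn {S : Set Ordinal.{u}} {α : Ordinal.{u}} (hsub : S ⊆ Set.Iio α)
    (hunb : ∀ γ < α, ∃ x ∈ S, γ ≤ x) : IsClubIn (cl S α) α := by
  refine ⟨fun x hx => hx.1, fun γ hγ => ?_, fun s hs hne hssup => ?_⟩
  · obtain ⟨x, hxS, hγx⟩ := hunb γ hγ
    exact ⟨x, self_mem_cl hxS (hsub hxS), hγx⟩
  · set y := sSup s with hy
    have hbdds : BddAbove s := bddAbove_of_le fun z hz => ((hs hz).1).le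
    have hzy : ∀ z ∈ s, z ≤ y := fun z hz => le_csSup hbdds hz
    obtain ⟨x0, hx0⟩ := hne
    have hne' : (S ∩ Set.Iic y).Nonempty := by
      obtain ⟨w, hwS, hwx0⟩ := (hs hx0).2.1
      exact ⟨w, hwS, hwx0.trans (hzy x0 hx0)⟩
    refine ⟨hssup, hne', le_antisymm (csSup_le hne' fun z hz => hz.2) ?_⟩
    refine csSup_le ⟨x0, hx0⟩ fun z hz => ?_
    calc z = sSup (S ∩ Set.Iic z) := ((hs hz).2.2).symm
    _ ≤ sSup (S ∩ Set.Iic y) := sSup_le_sSup'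
        (Set.inter_subset_inter_right _ (Set.Iic_subset_Iic.2 (hzy z hz)))
        (bddAbove_of_le fun w hw => hw.2)

theorem isClubIn_Iio {θ : Ordinal.{u}} (hθ : Order.IsSuccLimit θ) : IsClubIn (Set.Iio θ) θ :=
  ⟨subset_rfl, fun γ hγ => ⟨γ, hγ, le_rfl⟩, fun _ _ _ h => h⟩

end CG

namespace CG2
open CG Ordinal

theorem isClubIn_biInter {θ o : Ordinal.{u}} (hθ : ℵ₀ < θ.cof)
    (hcard : o.card < θ.cof) {D : ∀ j < o, Set Ordinal.{u}}
    (hD : ∀ j hj, IsClubIn (D j hj) θ) :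
    IsClubIn {x | x < θ ∧ ∀ j (hj : j < o), x ∈ D j hj} θ := by
  have hθlim : Order.IsSuccLimit θ := Ordinal.aleph0_le_cof.1 hθ.le
  refine ⟨fun x hx => hx.1, ?_, fun s hsub hne hslt =>
    ⟨hslt, fun j hj => (hD j hj).2.2 s (fun z hz => (hsub hz).2 j hj) hne hslt⟩⟩
  intro γ hγ
  have hch : ∀ j (hj : j < o) (x : Ordinal.{u}), x + 1 < θ → ∃ d ∈ D j hj, x + 1 ≤ d :=
    fun j hj x hx => (hD j hj).2.1 _ hx
  choose c hc1 hc2 using hch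
  set next : Ordinal.{u} → Ordinal.{u} := fun x =>
    if hx : x + 1 < θ then (x + 1) ⊔ Ordinal.bsup o (fun j hj => c j hj x hx) else 0 with hnext
  set g : ℕ → Ordinal.{u} := fun n => next^[n] γ with hgdef
  have hgs : ∀ n, g (n + 1) = next (g n) := fun n => Function.iterate_succ_apply' next n γ
  have hlt : ∀ n, g n < θ := by
    intro n; induction n with
    | zero => exact hγ
    | succ n ih =>
      have h1 : g n + 1 < θ := by rw [Ordinal.add_one_eq_succ]; exact hθlim.succ_lt ih
      rw [hgs, hnext]; simp only [dif_pos h1]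
      exact max_lt h1 (Ordinal.bsup_lt_ord hcard fun j hj => (hD j hj).1 (hc1 j hj (g n) h1))
  have hs1 : ∀ n, g n + 1 < θ := fun n => by
    rw [Ordinal.add_one_eq_succ]; exact hθlim.succ_lt (hlt n)
  have hstep : ∀ n, g (n + 1) = (g n + 1) ⊔ Ordinal.bsup o (fun j hj => c j hj (g n) (hs1 n)) := by
    intro n; rw [hgs, hnext]; simp only [dif_pos (hs1 n)]
  set x := ⨆ n, g n with hxdef
  have hgx : ∀ n, g n ≤ x := fun n => Ordinal.le_iSup g n
  have hxθ : x < θ := by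
    refine Ordinal.iSup_lt_ord_lift ?_ hlt
    rw [Cardinal.mk_nat, Cardinal.lift_aleph0]; exact hθ
  refine ⟨x, ⟨hxθ, fun j hj => ?_⟩, (hgx 0).trans' le_rfl⟩
  set d : ℕ → Ordinal.{u} := fun n => c j hj (g n) (hs1 n) with hd
  have hdD : ∀ n, d n ∈ D j hj := fun n => hc1 j hj (g n) (hs1 n)
  have hdle : ∀ n, d n ≤ g (n + 1) := fun n => by
    rw [hstep n]; exact le_sup_of_le_right (Ordinal.le_bsup _ j hj)
  have hdge : ∀ n, g n + 1 ≤ d n := fun n => hc2 j hj (g n) (hs1 n)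
  have hbq : BddAbove (Set.range d) := Ordinal.bddAbove_range.{0, u} d
  have hsq : sSup (Set.range d) = x := by
    apply le_antisymm
    · exact csSup_le (Set.range_nonempty d) (by rintro z ⟨n, rfl⟩; exact (hdle n).trans (hgx _))
    · refine Ordinal.iSup_le fun n => ?_
      calc g n ≤ d n := (le_of_lt (lt_of_lt_of_le (lt_add_one _) (hdge n)))
      _ ≤ sSup (Set.range d) := le_csSup hbq ⟨n, rfl⟩
  have := (hD j hj).2.2 (Set.range d) (by rintro z ⟨n, rfl⟩; exact hdD n)
    (Set.range_nonempty d) (by rw [hsq]; exact hxθ)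
  rwa [hsq] at this

theorem isClubIn_inter {θ : Ordinal.{u}} {A B : Set Ordinal.{u}} (hθ : ℵ₀ < θ.cof)
    (hA : IsClubIn A θ) (hB : IsClubIn B θ) : IsClubIn (A ∩ B) θ := by
  have h := isClubIn_biInter (o := Ordinal.omega0) hθ
    (by rw [Ordinal.card_omega0]; exact hθ) (D := fun j _ => if j = 0 then A else B)
    (fun j hj => by split_ifs; exacts [hA, hB])
  have he : {x | x < θ ∧ ∀ j (hj : j < Ordinal.omega0), x ∈ (if j = 0 then A else B)} = A ∩ B := by
    ext z; constructor
    · rintro ⟨hz, h2⟩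
      have h0 := h2 0 Ordinal.omega0_pos
      have h1 := h2 1 Ordinal.one_lt_omega0
      rw [if_pos rfl] at h0
      rw [if_neg one_ne_zero] at h1
      exact ⟨h0, h1⟩
    · rintro ⟨hzA, hzB⟩
      refine ⟨hA.1 hzA, fun j hj => ?_⟩
      split_ifs; exacts [hzA, hzB]
  rwa [he] at h

end CG2

namespace CG3
open CG CG2 Ordinal

theorem exists_acc {θ : Ordinal.{u}} {κ : Cardinal.{u}} (hκ : κ.IsRegular)
    (hcof : κ < θ.cof) {E : Set Ordinal.{u}} (hE : IsClubIn E θ) :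
    ∃ α, α < θ ∧ α.cof = κ ∧ (E ∩ Set.Iio α).Nonempty ∧ sSup (E ∩ Set.Iio α) = α := by
  have hθlim : Order.IsSuccLimit θ := Ordinal.aleph0_le_cof.1 (hκ.aleph0_le.trans hcof.le)
  set s : Set Ordinal.{u} := E ∪ Set.Ici θ with hs
  have hsub : ¬ BddAbove s := by
    rintro ⟨b, hb⟩
    have hm : max θ b + 1 ∈ s := Or.inr (Set.mem_Ici.2 ((le_max_left θ b).trans (lt_add_one _).le))
    exact absurd (hb hm) ((lt_of_le_of_lt (le_max_right θ b) (lt_add_one _)).not_ge)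
  have hclosed : IsClosed s := by
    rw [Ordinal.isClosed_iff_iSup]
    intro ι hι f hf
    by_cases hall : ∀ i, f i ∈ E
    · rcases lt_or_ge (⨆ i, f i) θ with h | h
      · exact Or.inl (hE.2.2 (Set.range f) (by rintro z ⟨i, rfl⟩; exact hall i)
          (Set.range_nonempty f) h)
      · exact Or.inr h
    · push_neg at hall; obtain ⟨i, hi⟩ := hall
      have hθf : θ ≤ f i := by
        rcases hf i with h | h
        · exact absurd h hi
        · exact h
      exact Or.inr (hθf.trans (Ordinal.le_iSup f i))
  have hnorm := (Ordinal.enumOrd_isNormal_iff_isClosed hsub).2 hclosed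
  have hκlim : Order.IsSuccLimit κ.ord := Cardinal.isSuccLimit_ord hκ.aleph0_le
  have henum_lt : ∀ i, i < κ.ord → Ordinal.enumOrd s i < θ := by
    intro i
    induction i using Ordinal.induction with
    | _ i IH =>
      intro hi
      have hb : Ordinal.bsup i (fun j _ => Ordinal.enumOrd s j) < θ :=
        Ordinal.bsup_lt_ord ((Cardinal.lt_ord.1 hi).trans hcof)
          (fun j hj => IH j hj (hj.trans hi))
      obtain ⟨a, haE, hage⟩ := hE.2.1 (Ordinal.bsup i (fun j _ => Ordinal.enumOrd s j) + 1)
        (by rw [Ordinal.add_one_eq_succ]; exact hθlim.succ_lt hb)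
      have hle : Ordinal.enumOrd s i ≤ a := Ordinal.enumOrd_le_of_forall_lt (Or.inl haE)
        (fun j hj => lt_of_le_of_lt (Ordinal.le_bsup _ j hj)
          (lt_of_lt_of_le (lt_add_one _) hage))
      exact hle.trans_lt (hE.1 haE)
  set α := Ordinal.enumOrd s κ.ord with hα
  have hαθ : α < θ := by
    have hB : Ordinal.bsup κ.ord (fun j _ => Ordinal.enumOrd s j) < θ :=
      Ordinal.bsup_lt_ord (by rw [Cardinal.card_ord]; exact hcof) (fun j hj => henum_lt j hj)
    have : α ≤ Ordinal.bsup κ.ord (fun j _ => Ordinal.enumOrd s j) :=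
      (hnorm.le_iff_forall_le hκlim).2 (fun b hb => Ordinal.le_bsup _ b hb)
    exact this.trans_lt hB
  have hmem : ∀ b < κ.ord, Ordinal.enumOrd s b ∈ E ∩ Set.Iio α := by
    intro b hb
    have h1 : Ordinal.enumOrd s b < θ := henum_lt b hb
    have h2 : Ordinal.enumOrd s b ∈ s := Ordinal.enumOrd_mem hsub b
    have h3 : Ordinal.enumOrd s b ∈ E := by
      rcases h2 with h | h
      · exact h
      · exact absurd h (not_le.2 h1)
    exact ⟨h3, Ordinal.enumOrd_strictMono hsub hb⟩
  have hne : (E ∩ Set.Iio α).Nonempty := ⟨_, hmem 0 hκ.ord_pos⟩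
  have hbdd : BddAbove (E ∩ Set.Iio α) := bddAbove_of_le fun z hz => hz.2.le
  refine ⟨α, hαθ, ?_, hne, le_antisymm (csSup_le hne fun z hz => hz.2.le) ?_⟩
  · rw [hα, Ordinal.cof_map_of_isNormal hnorm hκlim, Cardinal.IsRegular.cof_eq hκ]
  · exact (hnorm.le_iff_forall_le hκlim).2 (fun b hb => le_csSup hbdd (hmem b hb))
end CG3

namespace CG4

def Eseq (θ : Ordinal.{u}) (W : Set Ordinal.{u} → Set Ordinal.{u}) (i : Ordinal.{u}) :
    Set Ordinal.{u} :=
  W {x | x < θ ∧ ∀ j (hj : j < i), x ∈ Eseq θ W j}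
termination_by i
decreasing_by exact hj

def Gseq (θ : Ordinal.{u}) (W : Set Ordinal.{u} → Set Ordinal.{u}) (i : Ordinal.{u}) :
    Set Ordinal.{u} :=
  {x | x < θ ∧ ∀ j (hj : j < i), x ∈ Eseq θ W j}

theorem Eseq_eq (θ : Ordinal.{u}) (W : Set Ordinal.{u} → Set Ordinal.{u}) (i : Ordinal.{u}) :
    Eseq θ W i = W (Gseq θ W i) := by rw [Eseq]; rfl

theorem Gseq_anti (θ : Ordinal.{u}) (W : Set Ordinal.{u} → Set Ordinal.{u}) {i j : Ordinal.{u}}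
    (h : i ≤ j) : Gseq θ W j ⊆ Gseq θ W i :=
  fun _ hx => ⟨hx.1, fun k hk => hx.2 k (hk.trans_le h)⟩

end CG4

namespace CG5
open Ordinal CG CG2 CG3 CG4

open Ordinal

noncomputable def lad (α : Ordinal.{u}) : ∀ b < α.cof.ord, Ordinal.{u} :=
  (Ordinal.exists_fundamental_sequence α).choose

theorem lad_spec (α : Ordinal.{u}) : IsFundamentalSequence α α.cof.ord (lad α) :=
  (Ordinal.exists_fundamental_sequence α).choose_spec

def eSet (α : Ordinal.{u}) : Set Ordinal.{u} := {x | ∃ b, ∃ hb : b < α.cof.ord, x = lad α b hb}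

theorem eSet_subset (α : Ordinal.{u}) : eSet α ⊆ Set.Iio α := by
  rintro x ⟨b, hb, rfl⟩
  have := Ordinal.lt_blsub (lad α) b hb
  rwa [(lad_spec α).blsub_eq] at this

theorem eSet_unbounded (α : Ordinal.{u}) {γ : Ordinal.{u}} (h : γ < α) :
    ∃ y ∈ eSet α, γ ≤ y := by
  have h' : γ < Ordinal.blsub α.cof.ord (lad α) := by rwa [(lad_spec α).blsub_eq]
  obtain ⟨b, hb, hle⟩ := Ordinal.lt_blsub_iff.1 h'
  exact ⟨lad α b hb, ⟨b, hb, rfl⟩, hle⟩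

def PSet (G : Set Ordinal.{u}) (α : Ordinal.{u}) : Set Ordinal.{u} :=
  {x | x ∈ G ∧ 0 < x ∧ ∃ y ∈ eSet α, x = sSup (G ∩ Set.Iic y)}

theorem PSet_subset (G : Set Ordinal.{u}) (α : Ordinal.{u}) : PSet G α ⊆ Set.Iio α := by
  rintro x ⟨_, _, y, hy, rfl⟩
  have h1 : sSup (G ∩ Set.Iic y) ≤ y := csSup_le' fun z hz => hz.2
  exact lt_of_le_of_lt h1 (eSet_subset α hy)

open scoped Classical in
noncomputable def CCseq (G : Set Ordinal.{u}) (α : Ordinal.{u}) : Set Ordinal.{u} :=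
  if ∀ γ < α, ∃ x ∈ PSet G α, γ ≤ x then cl (PSet G α) α else Set.Iio α

theorem CCseq_eq_of {G : Set Ordinal.{u}} {α : Ordinal.{u}}
    (h : ∀ γ < α, ∃ x ∈ PSet G α, γ ≤ x) : CCseq G α = cl (PSet G α) α := if_pos h


end CG5

namespace CG5
open Ordinal CG CG2 CG3 CG4

theorem CCseq_isClubIn {G : Set Ordinal.{u}} {α : Ordinal.{u}} (hα : Order.IsSuccLimit α) :
    IsClubIn (CCseq G α) α := by
  unfold CCseq
  split_ifs with h
  · exact cl_isClubIn (PSet_subset G α) h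
  · exact isClubIn_Iio hα

end CG5


end ClubGuessAux

open Set Order CG CG2 CG3 CG4 CG5 Ordinal

/-- Shelah's club-guessing theorem: if `κ, ν` are regular cardinals with `κ⁺ < ν`, then
there is a sequence `⟨C_α : α ∈ S^ν_κ⟩` of clubs `C_α ⊆ α` such that for every club
`E ⊆ ν`, the set of `α ∈ S^ν_κ` with `C_α ⊆ E` is stationary in `ν`. -/
theorem stmt8 (κ ν : Cardinal.{u}) (hκ : κ.IsRegular) (hν : ν.IsRegular)
    (hlt : Order.succ κ < ν) :
    ∃ C : Ordinal.{u} → Set Ordinal.{u},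
      (∀ α : Ordinal.{u}, α < ν.ord → α.cof = κ → IsClubIn (C α) α) ∧
        ∀ E : Set Ordinal.{u}, IsClubIn E ν.ord →
          IsStationaryIn {α : Ordinal.{u} | α < ν.ord ∧ α.cof = κ ∧ C α ⊆ E} ν.ord := by
  classical
  by_contra hcon
  push_neg at hcon
  set θ := ν.ord with hθdef
  have hθcof : θ.cof = ν := hν.cof_eq
  have hκν : κ < ν := (Order.lt_succ κ).trans hlt
  have hℵθ : ℵ₀ < θ.cof := by rw [hθcof]; exact hκ.aleph0_le.trans_lt hκν
  have hθlim : Order.IsSuccLimit θ := Cardinal.isSuccLimit_ord hν.aleph0_le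
  set μ := Order.succ κ with hμdef
  have hμreg : μ.IsRegular := Cardinal.isRegular_succ hκ.aleph0_le
  set Λ := μ.ord with hΛdef
  have hΛlim : Order.IsSuccLimit Λ := Cardinal.isSuccLimit_ord hμreg.aleph0_le
  have hΛcof : Λ.cof = μ := hμreg.cof_eq
  -- clause 1 always holds for candidate sequences
  have hCC1 : ∀ G : Set Ordinal.{u}, ∀ α : Ordinal.{u}, α < θ → α.cof = κ →
      IsClubIn (CCseq G α) α := by
    intro G α _ hακ
    exact CCseq_isClubIn (Ordinal.aleph0_le_cof.1 (by rw [hακ]; exact hκ.aleph0_le))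
  -- extract failure witnesses
  have hkey : ∀ G : Set Ordinal.{u}, ∃ E : Set Ordinal.{u}, ∃ D : Set Ordinal.{u},
      IsClubIn E θ ∧ IsClubIn D θ ∧
      ∀ α, α < θ → α.cof = κ → CCseq G α ⊆ E → α ∉ D := by
    intro G
    obtain ⟨E, hE, hEc⟩ := hcon (CCseq G) (hCC1 G)
    rw [IsStationaryIn] at hEc
    push_neg at hEc
    obtain ⟨D, hD, hDc⟩ := hEc
    rw [Set.eq_empty_iff_forall_notMem] at hDc
    refine ⟨E, D, hE, hD, fun α h1 h2 h3 h4 => hDc α ⟨⟨h1, h2, h3⟩, h4⟩⟩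
  choose Ew Dw hEw hDw hfail using hkey
  set W : Set Ordinal.{u} → Set Ordinal.{u} := fun G => G ∩ (Ew G ∩ Dw G) with hWdef
  set ES : Ordinal.{u} → Set Ordinal.{u} := Eseq θ W with hESdef
  set GS : Ordinal.{u} → Set Ordinal.{u} := Gseq θ W with hGSdef
  have hESeq : ∀ i, ES i = GS i ∩ (Ew (GS i) ∩ Dw (GS i)) := fun i => Eseq_eq θ W i
  have hGanti : ∀ {i j : Ordinal.{u}}, i ≤ j → GS j ⊆ GS i := fun h => Gseq_anti θ W h
  have hGS_sub_ES : ∀ {i j : Ordinal.{u}}, i < j → GS j ⊆ ES i := fun h _ hx => hx.2 _ h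
  -- clubness
  have hclub : ∀ i, i ≤ Λ → IsClubIn (GS i) θ ∧ IsClubIn (ES i) θ := by
    intro i
    induction i using Ordinal.induction with
    | _ i IH =>
      intro hiΛ
      have hG : IsClubIn (GS i) θ := by
        have hc : i.card < θ.cof := by
          rw [hθcof]
          calc i.card ≤ Λ.card := Ordinal.card_le_card hiΛ
          _ = μ := Cardinal.card_ord μ
          _ < ν := hlt
        exact isClubIn_biInter hℵθ hc (D := fun j _ => ES j)
          (fun j hj => (IH j hj (hj.le.trans hiΛ)).2)
      refine ⟨hG, ?_⟩
      rw [hESeq i]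
      exact isClubIn_inter hℵθ hG (isClubIn_inter hℵθ (hEw _) (hDw _))
  -- pick the guessed point
  have hEstar : IsClubIn (GS Λ) θ := (hclub Λ le_rfl).1
  obtain ⟨α, hαθ, hακ, hne, hsup⟩ := exists_acc hκ (by rw [hθcof]; exact hκν) hEstar
  -- α is in all the clubs
  have hαGΛ : α ∈ GS Λ := by
    refine ⟨hαθ, fun j hj => ?_⟩
    have hsub2 : GS Λ ∩ Set.Iio α ⊆ ES j := fun z hz => hGS_sub_ES hj hz.1
    have hc := ((hclub j hj.le).2).2.2 (GS Λ ∩ Set.Iio α) hsub2 hne (by rw [hsup]; exact hαθ)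
    rwa [hsup] at hc
  -- stabilization of the projections
  have hvanti : ∀ (y : Ordinal.{u}) {i j : Ordinal.{u}}, i ≤ j →
      sSup (GS j ∩ Set.Iic y) ≤ sSup (GS i ∩ Set.Iic y) := by
    intro y i j h
    exact sSup_le_sSup' (Set.inter_subset_inter_left _ (hGanti h))
      (bddAbove_of_le fun z hz => hz.2)
  have hidx : ∀ y : Ordinal.{u}, ∃ i, i < Λ ∧ ∀ j, i ≤ j → j < Λ →
      sSup (GS j ∩ Set.Iic y) = sSup (GS i ∩ Set.Iic y) := by
    intro y
    have hne' : ((fun i => sSup (GS i ∩ Set.Iic y)) '' Set.Iio Λ).Nonempty :=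
      ⟨_, 0, hμreg.ord_pos, rfl⟩
    obtain ⟨i, hiΛ, hvi⟩ := csInf_mem hne'
    refine ⟨i, hiΛ, fun j hij hjΛ => le_antisymm (hvanti y hij) ?_⟩
    have h2 : sInf ((fun i => sSup (GS i ∩ Set.Iic y)) '' Set.Iio Λ) ≤ sSup (GS j ∩ Set.Iic y) :=
      csInf_le (OrderBot.bddBelow _) ⟨j, hjΛ, rfl⟩
    rw [← hvi] at h2
    exact h2
  choose idx hidxΛ hidxEq using hidx
  set istar := Ordinal.bsup α.cof.ord (fun b hb => idx (lad α b hb)) with histar_def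
  have histar : istar < Λ := by
    refine Ordinal.bsup_lt_ord ?_ (fun b _ => hidxΛ _)
    rw [Cardinal.card_ord, hακ, hΛcof]
    exact Order.lt_succ κ
  have histar1 : istar + 1 < Λ := by
    rw [Ordinal.add_one_eq_succ]; exact hΛlim.succ_lt histar
  have hidx_le : ∀ y ∈ eSet α, idx y ≤ istar := by
    rintro y ⟨b, hb, rfl⟩
    exact Ordinal.le_bsup _ b hb
  -- P is unbounded in α
  have hPunb : ∀ γ < α, ∃ x ∈ PSet (GS istar) α, γ ≤ x := by
    intro γ hγ
    have hη : ∃ η ∈ GS Λ ∩ Set.Iio α, γ < η := by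
      by_contra hcon2
      push_neg at hcon2
      have hle : sSup (GS Λ ∩ Set.Iio α) ≤ γ := csSup_le hne hcon2
      rw [hsup] at hle
      exact absurd hle (not_le.2 hγ)
    obtain ⟨η, ⟨hηΛ, hηα⟩, hγη⟩ := hη
    obtain ⟨y, hy, hηy⟩ := eSet_unbounded α hηα
    have hηG : η ∈ GS istar := hGanti histar.le hηΛ
    have hbdd : BddAbove (GS istar ∩ Set.Iic y) := bddAbove_of_le fun z hz => hz.2
    have hge : η ≤ sSup (GS istar ∩ Set.Iic y) := le_csSup hbdd ⟨hηG, hηy⟩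
    have hyα : y < α := eSet_subset α hy
    have hlt2 : sSup (GS istar ∩ Set.Iic y) < θ :=
      lt_of_le_of_lt (csSup_le' fun z hz => hz.2) (hyα.trans hαθ)
    have hmem : sSup (GS istar ∩ Set.Iic y) ∈ GS istar :=
      (hclub istar histar.le).1.2.2 _ Set.inter_subset_left ⟨η, hηG, hηy⟩ hlt2
    exact ⟨sSup (GS istar ∩ Set.Iic y),
      ⟨hmem, lt_of_lt_of_le (lt_of_le_of_lt (zero_le (a := γ)) hγη) hge, y, hy, rfl⟩,
      hγη.le.trans hge⟩
  -- the elements of P are in ES istar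
  have hPES : ∀ z ∈ PSet (GS istar) α, z ∈ ES istar := by
    rintro z ⟨hzG, hzpos, y, hy, rfl⟩
    have h1 : sSup (GS (istar + 1) ∩ Set.Iic y) = sSup (GS istar ∩ Set.Iic y) := by
      have e1 := hidxEq y istar (hidx_le y hy) histar
      have e2 := hidxEq y (istar + 1) ((hidx_le y hy).trans (lt_add_one istar).le) histar1
      rw [e1, e2]
    have hne2 : (GS (istar + 1) ∩ Set.Iic y).Nonempty := by
      rw [Set.nonempty_iff_ne_empty]
      intro hemp
      rw [hemp, csSup_empty, Ordinal.bot_eq_zero] at h1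
      exact absurd hzpos (by rw [← h1]; exact lt_irrefl 0)
    have hsub3 : GS (istar + 1) ∩ Set.Iic y ⊆ ES istar :=
      fun w hw => hGS_sub_ES (lt_add_one istar) hw.1
    have hlt3 : sSup (GS (istar + 1) ∩ Set.Iic y) < θ := by
      rw [h1]
      exact lt_of_le_of_lt (csSup_le' fun z hz => hz.2) ((eSet_subset α hy).trans hαθ)
    have hmem3 := (hclub istar histar.le).2.2.2 _ hsub3 hne2 hlt3
    rwa [h1] at hmem3
  -- the contradiction
  have hαES : α ∈ ES istar := hαGΛ.2 istar histar
  have hαD : α ∈ Dw (GS istar) := by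
    rw [hESeq istar] at hαES
    exact hαES.2.2
  have hCCsub : CCseq (GS istar) α ⊆ Ew (GS istar) := by
    rw [CCseq_eq_of hPunb]
    rintro x ⟨hxα, hne3, hsupx⟩
    have hq : PSet (GS istar) α ∩ Set.Iic x ⊆ ES istar := fun z hz => hPES z hz.1
    have hlt4 : sSup (PSet (GS istar) α ∩ Set.Iic x) < θ := by
      rw [hsupx]; exact hxα.trans hαθ
    have hmem4 := (hclub istar histar.le).2.2.2 _ hq hne3 hlt4
    rw [hsupx, hESeq istar] at hmem4
    exact hmem4.2.1
  exact hfail (GS istar) α hαθ hακ hCCsub hαD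
end

section
/- Let λ be a singular cardinal of countable cofinality such that m(ω,μ) ≤ λ⁺ for every infinite cardinal μ < λ. Suppose D is a uniform, transitive ω-covering matrix for λ⁺ with β_D = λ such that CP(D) holds. Then m(ω, λ⁺) = λ⁺, and consequently m(ω, λ) = λ⁺. -/
universe u

open Cardinal

/-- The order type of the set of ordinals `s` is `< β`. -/
def OtpLT (s : Set Ordinal.{u}) (β : Ordinal.{u}) : Prop :=
  ∃ γ < β, ∃ f : s → Set.Iio γ, StrictMono f

/-- `β_D`: the least ordinal `β` such that `otp (D i γ) < β` for all `i < θ`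
and `γ < λ`. -/
noncomputable def betaD (θ lam : Cardinal.{u})
    (D : Ordinal.{u} → Ordinal.{u} → Set Ordinal.{u}) : Ordinal.{u} :=
  sInf {β : Ordinal.{u} | ∀ i < θ.ord, ∀ γ < lam.ord, OtpLT (D i γ) β}

set_option maxHeartbeats 2000000

section helpers


/-- The defining set of the meeting number is nonempty. -/
lemma meetSet_nonempty (lam : Cardinal.{u}) :
    {c : Cardinal.{u} |
      ∃ Y : Set (Set lam.ord.ToType), #Y = c ∧ (∀ y ∈ Y, #y = ℵ₀) ∧
        ∀ x : Set lam.ord.ToType, #x = ℵ₀ → ∃ y ∈ Y, #(x ∩ y : Set lam.ord.ToType) = ℵ₀}.Nonempty := by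
  refine ⟨_, {y : Set lam.ord.ToType | #y = ℵ₀}, rfl, fun y hy => hy, fun x hx => ⟨x, hx, ?_⟩⟩
  rwa [Set.inter_self]

/-- Generic transfer of a meeting family to a subset of another type. -/
lemma meet_transfer {T V : Type u} (P : Set T) (Z : Set (Set V)) (hPV : #P ≤ #V)
    (h1 : ∀ z ∈ Z, #z = ℵ₀) (h2 : ∀ w : Set V, #w = ℵ₀ → ∃ z ∈ Z, #(w ∩ z : Set V) = ℵ₀) :
    ∃ G : Set (Set T), #G ≤ #Z ∧ (∀ y ∈ G, #y = ℵ₀) ∧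
      ∀ x : Set T, #x = ℵ₀ → x ⊆ P → ∃ y ∈ G, #(x ∩ y : Set T) = ℵ₀ := by
  obtain ⟨g⟩ : Nonempty (↥P ↪ V) := (Cardinal.le_def _ _).mp hPV
  classical
  refine ⟨{y : Set T | #y = ℵ₀ ∧ ∃ z ∈ Z, y = Subtype.val '' (g ⁻¹' z)}, ?_, fun y hy => hy.1, ?_⟩
  · refine (mk_le_mk_of_subset (t := (fun z : Set V => Subtype.val '' (g ⁻¹' z)) '' Z) ?_).trans
      (mk_image_le)
    rintro y ⟨-, z, hz, rfl⟩
    exact ⟨z, hz, rfl⟩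
  · intro x hx hxP
    set x' : Set ↥P := Subtype.val ⁻¹' x with hx'def
    have hx' : #x' = ℵ₀ := by
      rw [hx'def, mk_preimage_of_injective_of_subset_range _ _ Subtype.val_injective
        (by rwa [Subtype.range_coe])]
      exact hx
    have hw : #(g '' x' : Set V) = ℵ₀ := by rw [mk_image_eq g.injective]; exact hx'
    obtain ⟨z, hzZ, hz⟩ := h2 _ hw
    have him : g '' (x' ∩ g ⁻¹' z) = (g '' x') ∩ z := Set.image_inter_preimage g x' z
    have hcard : #(x' ∩ g ⁻¹' z : Set ↥P) = ℵ₀ := by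
      rw [← mk_image_eq (s := x' ∩ g ⁻¹' z) g.injective, him]; exact hz
    set y : Set T := Subtype.val '' (g ⁻¹' z) with hydef
    have hsub : Subtype.val '' (x' ∩ g ⁻¹' z) ⊆ x ∩ y := by
      rintro t ⟨p, ⟨hp1, hp2⟩, rfl⟩
      exact ⟨hp1, Set.mem_image_of_mem _ hp2⟩
    have hlow : ℵ₀ ≤ #(x ∩ y : Set T) := by
      rw [← hcard, ← mk_image_eq (s := x' ∩ g ⁻¹' z) Subtype.val_injective]
      exact mk_le_mk_of_subset hsub
    have hyle : #y ≤ ℵ₀ := by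
      rw [hydef, mk_image_eq Subtype.val_injective]
      exact (mk_preimage_of_injective g z g.injective).trans (h1 z hzZ).le
    have hxy : #(x ∩ y : Set T) = ℵ₀ :=
      le_antisymm ((mk_le_mk_of_subset Set.inter_subset_right).trans hyle) hlow
    exact ⟨y, ⟨le_antisymm hyle (hlow.trans (mk_le_mk_of_subset Set.inter_subset_right)), z, hzZ,
      rfl⟩, hxy⟩

lemma meet_lb_succ (lam : Cardinal.{u}) (hunc : ℵ₀ < lam) (c : Cardinal.{u})
    (hc : ∃ Y : Set (Set (Order.succ lam).ord.ToType), #Y = c ∧ (∀ y ∈ Y, #y = ℵ₀) ∧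
        ∀ x : Set (Order.succ lam).ord.ToType, #x = ℵ₀ →
          ∃ y ∈ Y, #(x ∩ y : Set (Order.succ lam).ord.ToType) = ℵ₀) :
    Order.succ lam ≤ c := by
  obtain ⟨Y, rfl, hcnt, hmt⟩ := hc
  by_contra hlt
  replace hlt : #Y ≤ lam := Order.lt_succ_iff.mp (not_le.mp hlt)
  have hT : #((Order.succ lam).ord.ToType) = Order.succ lam := mk_ord_toType _
  have hU : #(⋃₀ Y : Set (Order.succ lam).ord.ToType) ≤ lam := by
    refine (mk_sUnion_le Y).trans ?_
    rcases isEmpty_or_nonempty ↥Y with h | h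
    · simp [mk_eq_zero_iff.mpr h]
    · have hsup : (⨆ s : ↥Y, #(s.1 : Set (Order.succ lam).ord.ToType)) ≤ ℵ₀ :=
        ciSup_le' fun y => (hcnt y.1 y.2).le
      exact (mul_le_mul' hlt hsup).trans (Cardinal.mul_aleph0_eq hunc.le).le
  have hcompl : lam < #((⋃₀ Y)ᶜ : Set (Order.succ lam).ord.ToType) := by
    by_contra h
    push_neg at h
    have h2 : #((Order.succ lam).ord.ToType) ≤ lam + lam := by
      calc #((Order.succ lam).ord.ToType)
          = #((⋃₀ Y ∪ (⋃₀ Y)ᶜ : Set (Order.succ lam).ord.ToType)) := by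
            rw [Set.union_compl_self]; exact mk_univ.symm
        _ ≤ #(⋃₀ Y : Set (Order.succ lam).ord.ToType)
              + #((⋃₀ Y)ᶜ : Set (Order.succ lam).ord.ToType) := mk_union_le _ _
        _ ≤ lam + lam := add_le_add hU h
    rw [hT, Cardinal.add_eq_self hunc.le] at h2
    exact absurd h2 (not_le.mpr (Order.lt_succ lam))
  obtain ⟨x, hxsub, hx⟩ := Cardinal.le_mk_iff_exists_subset.mp (hunc.le.trans hcompl.le)
  obtain ⟨y, hyY, hxy⟩ := hmt x hx
  have hxe : x ∩ y = ∅ := by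
    apply Set.eq_empty_of_forall_notMem
    rintro t ⟨ht1, ht2⟩
    exact (hxsub ht1) (Set.subset_sUnion_of_mem hyY ht2)
  rw [hxe] at hxy
  norm_num at hxy
  exact aleph0_ne_zero hxy.symm

lemma meet_lb_sing (lam : Cardinal.{u}) (hunc : ℵ₀ < lam) (hcof : lam.ord.cof = ℵ₀)
    (c : Cardinal.{u})
    (hc : ∃ Y : Set (Set lam.ord.ToType), #Y = c ∧ (∀ y ∈ Y, #y = ℵ₀) ∧
        ∀ x : Set lam.ord.ToType, #x = ℵ₀ →
          ∃ y ∈ Y, #(x ∩ y : Set lam.ord.ToType) = ℵ₀) :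
    Order.succ lam ≤ c := by
  obtain ⟨Y, rfl, hcnt, hmt⟩ := hc
  by_contra hlt
  replace hlt : #Y ≤ lam := Order.lt_succ_iff.mp (not_le.mp hlt)
  have hlim : Order.IsSuccLimit lam.ord := Cardinal.isSuccLimit_ord hunc.le
  have hpos : (0 : Ordinal.{u}) < lam.ord := hlim.pos
  -- cofinal ℕ-sequence
  obtain ⟨ι, f0, hlsub, hι⟩ : ∃ (ι : Type u) (f : ι → Ordinal.{u}),
      Ordinal.lsub.{u,u} f = lam.ord ∧ #ι = ℵ₀ := by
    have h := csInf_mem (Ordinal.cof_lsub_def_nonempty lam.ord)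
    rw [← Ordinal.cof_eq_sInf_lsub, hcof] at h
    exact h
  have : Countable ι := mk_le_aleph0_iff.mp hι.le
  have : Infinite ι := Cardinal.infinite_iff.mpr hι.ge
  obtain ⟨ep⟩ : Nonempty (ℕ ≃ ι) := nonempty_equiv_of_countable
  set F : ℕ → Ordinal.{u} := fun n => f0 (ep n) with hF
  have hFlt : ∀ n, F n < lam.ord := fun n => hlsub ▸ Ordinal.lt_lsub f0 (ep n)
  have hFcof : ∀ γ < lam.ord, ∃ n, γ ≤ F n := by
    intro γ hγ
    rw [← hlsub, Ordinal.lt_lsub_iff] at hγ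
    obtain ⟨i, hi⟩ := hγ
    exact ⟨ep.symm i, by simpa [hF] using hi⟩
  set Fmax : ℕ → Ordinal.{u} := fun n => (Finset.range (n+1)).sup F with hFmax
  have hFmlt : ∀ n, Fmax n < lam.ord := fun n =>
    (Finset.sup_lt_iff hpos).mpr (fun m _ => hFlt m)
  have hFle : ∀ m n, m ≤ n → F m ≤ Fmax n := fun m n h =>
    Finset.le_sup (Finset.mem_range.mpr (Nat.lt_succ_of_le h))
  have hFmono : ∀ m n, m ≤ n → Fmax m ≤ Fmax n := fun m n h =>
    Finset.sup_mono (Finset.range_subset_range.mpr (by omega))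
  -- coordinates
  set eL := (Ordinal.ToType.mk (o := lam.ord)) with heL
  set ψ : lam.ord.ToType → Ordinal.{u} := fun t => ((eL.symm t : Set.Iio lam.ord) : Ordinal.{u})
    with hψ
  have hψinj : Function.Injective ψ := fun a b h =>
    eL.symm.injective (Subtype.val_injective h)
  have hψlt : ∀ t, ψ t < lam.ord := fun t => (eL.symm t).2
  -- ranking of the family
  obtain ⟨j⟩ : Nonempty (↥Y ↪ ↥(Set.Iio lam.ord)) := by
    apply Cardinal.lift_mk_le'.mp
    rw [Cardinal.lift_id'.{u, u+1}, Ordinal.mk_Iio_ordinal, Cardinal.card_ord]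
    exact Cardinal.lift_le.mpr hlt
  set rk : ↥Y → Ordinal.{u} := fun y => (j y : Ordinal.{u}) with hrk
  have hrklt : ∀ y, rk y < lam.ord := fun y => (j y).2
  set W : ℕ → Set ↥Y := fun n => {y | rk y ≤ Fmax n} with hW
  have hWmono : ∀ m n, m ≤ n → W m ⊆ W n := fun m n h y hy =>
    le_trans hy (hFmono m n h)
  have hWcover : ∀ y : ↥Y, ∃ n, y ∈ W n := by
    intro y
    obtain ⟨n, hn⟩ := hFcof (rk y) (hrklt y)
    exact ⟨n, le_trans hn (hFle n n le_rfl)⟩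
  have hWsize : ∀ n, #(W n) < lam := by
    intro n
    have hemb : Function.Injective (fun y : ↥(W n) => (⟨rk y.1, y.2⟩ : ↥(Set.Iic (Fmax n)))) := by
      intro a b h
      apply Subtype.val_injective
      apply j.injective
      apply Subtype.val_injective
      simpa [hrk] using congrArg Subtype.val h
    have h1 : Cardinal.lift.{u+1} #(W n) ≤ #(Set.Iic (Fmax n)) := by
      rw [← Cardinal.lift_id'.{u, u+1} #(Set.Iic (Fmax n))]
      exact Cardinal.lift_mk_le'.mpr ⟨⟨_, hemb⟩⟩
    have h2 : #(Set.Iic (Fmax n)) < Cardinal.lift.{u+1} lam := by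
      have hsub : Set.Iic (Fmax n) ⊆ Set.Iio (Fmax n + 1) := by
        intro a ha
        have h11 : Fmax n < Fmax n + 1 := by
          rw [Ordinal.add_one_eq_succ]; exact Order.lt_succ _
        exact lt_of_le_of_lt ha h11
      refine (mk_le_mk_of_subset hsub).trans_lt ?_
      rw [Ordinal.mk_Iio_ordinal]
      refine Cardinal.lift_lt.mpr ?_
      rw [← Cardinal.lt_ord]
      have : Fmax n + 1 = Order.succ (Fmax n) := (Ordinal.add_one_eq_succ _)
      rw [this]
      exact hlim.succ_lt (hFmlt n)
    exact Cardinal.lift_lt.mp (h1.trans_lt h2)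
  -- union of ranked families
  set B : ℕ → Set Ordinal.{u} := fun n => ⋃ (y : ↥(W n)), ψ '' (y.1.1 : Set lam.ord.ToType)
    with hB
  have hBsize : ∀ n, #(B n) < Cardinal.lift.{u+1} lam := by
    intro n
    rcases isEmpty_or_nonempty ↥(W n) with h | h
    · have : B n = ∅ := by
        rw [hB]; exact Set.iUnion_of_empty _
      rw [this]
      simp only [mk_emptyCollection]
      have h0 : Cardinal.lift.{u+1,u} 0 < Cardinal.lift.{u+1,u} lam :=
        Cardinal.lift_lt.mpr (lt_of_lt_of_le aleph0_pos hunc.le)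
      simpa using h0
    · have h1 : Cardinal.lift.{u} #(B n) ≤
          Cardinal.lift.{u+1} #(W n) * ⨆ y : ↥(W n), Cardinal.lift.{u} #(ψ '' (y.1.1 : Set lam.ord.ToType)) :=
        mk_iUnion_le_lift _
      rw [Cardinal.lift_id'.{u, u+1}] at h1
      have h2 : ∀ y : ↥(W n), Cardinal.lift.{u} #(ψ '' (y.1.1 : Set lam.ord.ToType)) = ℵ₀ := by
        intro y
        rw [mk_image_eq_lift _ _ hψinj, hcnt y.1.1 y.1.2]
        simp
      have h3 : (⨆ y : ↥(W n), Cardinal.lift.{u} #(ψ '' (y.1.1 : Set lam.ord.ToType))) ≤ ℵ₀ :=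
        ciSup_le' fun y => (h2 y).le
      refine (h1.trans (mul_le_mul' le_rfl h3)).trans_lt ?_
      refine Cardinal.mul_lt_of_lt (by simpa using hunc.le) (Cardinal.lift_lt.mpr (hWsize n)) ?_
      simpa using hunc
  -- smallness of initial segments
  have hIic : ∀ q, q < lam.ord → #(Set.Iic q) < Cardinal.lift.{u+1} lam := by
    intro q hq
    have hsub : Set.Iic q ⊆ Set.Iio (q + 1) := by
      intro a ha
      have h11 : q < q + 1 := by
        rw [Ordinal.add_one_eq_succ]; exact Order.lt_succ _
      exact lt_of_le_of_lt ha h11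
    refine (mk_le_mk_of_subset hsub).trans_lt ?_
    rw [Ordinal.mk_Iio_ordinal]
    refine Cardinal.lift_lt.mpr ?_
    rw [← Cardinal.lt_ord, Ordinal.add_one_eq_succ]
    exact hlim.succ_lt hq
  -- the avoidance function
  have pick : ∀ s : Set Ordinal.{u}, ∃ ξ : Ordinal.{u},
      Cardinal.mk s < Cardinal.lift.{u+1} lam → (ξ < lam.ord ∧ ξ ∉ s) := by
    intro s
    by_cases h : ∃ ξ, ξ < lam.ord ∧ ξ ∉ s
    · exact ⟨h.choose, fun _ => h.choose_spec⟩
    · push_neg at h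
      have hsub : Set.Iio lam.ord ⊆ s := fun ξ hξ => h ξ hξ
      have hge : Cardinal.lift.{u+1} lam ≤ #s := by
        rw [← Cardinal.card_ord lam, ← Ordinal.mk_Iio_ordinal]
        exact mk_le_mk_of_subset hsub
      exact ⟨0, fun hs => absurd hge hs.not_ge⟩
  choose pk hpk using pick
  set V : ℕ → Ordinal.{u} → Set Ordinal.{u} := fun n p => B n ∪ Set.Iic p with hV
  have hVsmall : ∀ n p, p < lam.ord → #(V n p) < Cardinal.lift.{u+1} lam := by
    intro n p hp
    refine (mk_union_le _ _).trans_lt ?_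
    exact Cardinal.add_lt_of_lt (by simpa using hunc.le) (hBsize n) (hIic p hp)
  set seq : ℕ → Ordinal.{u} :=
    fun n => Nat.rec (pk (V 0 0)) (fun m prev => pk (V (m+1) prev)) n with hseq
  have hseq0 : seq 0 = pk (V 0 0) := rfl
  have hseqS : ∀ n, seq (n+1) = pk (V (n+1) (seq n)) := fun n => rfl
  have hseqlt : ∀ n, seq n < lam.ord := by
    intro n
    induction n with
    | zero => rw [hseq0]; exact (hpk _ (hVsmall 0 0 hpos)).1
    | succ m ih => rw [hseqS m]; exact (hpk _ (hVsmall (m+1) (seq m) ih)).1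
  have hseqV : ∀ n, seq n ∉ B n ∧ (∀ m, n = m + 1 → seq m < seq n) := by
    intro n
    cases n with
    | zero =>
      have h := (hpk _ (hVsmall 0 0 hpos)).2
      rw [← hseq0] at h
      exact ⟨fun hb => h (Or.inl hb), fun m hm => by omega⟩
    | succ m =>
      have h := (hpk _ (hVsmall (m+1) (seq m) (hseqlt m))).2
      rw [← hseqS m] at h
      refine ⟨fun hb => h (Or.inl hb), ?_⟩
      rintro m' hm'
      have hmm : m' = m := by omega
      subst hmm
      by_contra hle
      exact h (Or.inr (Set.mem_Iic.mpr (not_lt.mp hle)))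
  have hseqmono : StrictMono seq :=
    strictMono_nat_of_lt_succ (fun n => (hseqV (n+1)).2 n rfl)
  -- the diagonal countable set
  set sq : ℕ → lam.ord.ToType := fun n => eL ⟨seq n, hseqlt n⟩ with hsq
  have hsqinj : Function.Injective sq := by
    intro a b h
    apply hseqmono.injective
    have := eL.injective h
    simpa using congrArg Subtype.val this
  have hψsq : ∀ n, ψ (sq n) = seq n := by
    intro n
    rw [hψ, hsq]
    simp
  set x : Set lam.ord.ToType := Set.range sq with hx
  have hxcard : #x = ℵ₀ := by
    rw [hx]
    simpa using mk_range_eq_of_injective hsqinj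
  obtain ⟨y0, hy0Y, hxy⟩ := hmt x hxcard
  obtain ⟨n0, hn0⟩ := hWcover ⟨y0, hy0Y⟩
  have hfin : x ∩ y0 ⊆ sq '' (Set.Iio n0) := by
    rintro t ⟨⟨m, rfl⟩, hty⟩
    refine Set.mem_image_of_mem _ ?_
    simp only [Set.mem_Iio]
    by_contra hge
    push_neg at hge
    have hyW : (⟨y0, hy0Y⟩ : ↥Y) ∈ W m := hWmono n0 m hge hn0
    have : seq m ∈ B m := by
      rw [hB]
      refine Set.mem_iUnion.mpr ⟨⟨⟨y0, hy0Y⟩, hyW⟩, ?_⟩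
      rw [← hψsq m]
      exact Set.mem_image_of_mem _ hty
    exact (hseqV m).1 this
  have : (x ∩ y0).Finite := Set.Finite.subset ((Set.finite_Iio n0).image sq) hfin
  exact absurd hxy this.lt_aleph0.ne
end helpers

/-- If `λ` is singular of countable cofinality, `m(ω, μ) ≤ λ⁺` for all infinite `μ < λ`,
and there is a uniform transitive `ω`-covering matrix `D` for `λ⁺` with `β_D = λ` for
which `CP(D)` holds, then `m(ω, λ⁺) = λ⁺` and `m(ω, λ) = λ⁺`. -/
theorem stmt10 (lam : Cardinal.{u}) (hunc : ℵ₀ < lam) (hcof : lam.ord.cof = ℵ₀)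
    (hmeet : ∀ μ : Cardinal.{u}, ℵ₀ ≤ μ → μ < lam → meetingNumber ℵ₀ μ ≤ Order.succ lam)
    (D : Ordinal.{u} → Ordinal.{u} → Set Ordinal.{u})
    (hD : IsCoveringMatrix ℵ₀ (Order.succ lam) D)
    (htr : TransitiveCM ℵ₀ (Order.succ lam) D)
    (hu : UniformCM ℵ₀ (Order.succ lam) D)
    (hbeta : betaD ℵ₀ (Order.succ lam) D = lam.ord)
    (hCP : CPmatrix ℵ₀ (Order.succ lam) D) :
    meetingNumber ℵ₀ (Order.succ lam) = Order.succ lam ∧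
      meetingNumber ℵ₀ lam = Order.succ lam := by
  classical
  obtain ⟨A, hAsub, hAunb, hAcp⟩ := hCP
  have hsl : ℵ₀ ≤ lam := hunc.le
  have hsucc : ℵ₀ ≤ Order.succ lam := hsl.trans (Order.le_succ lam)
  have hreg : (Order.succ lam).IsRegular := Cardinal.isRegular_succ hsl
  set OO : Ordinal.{u} := (Order.succ lam).ord with hOO
  have hT : #(OO.ToType) = Order.succ lam := mk_ord_toType _
  have hTne : Nonempty OO.ToType := by
    rw [← Cardinal.mk_ne_zero_iff, hT]
    exact ((zero_le (a := lam)).trans_lt (Order.lt_succ lam)).ne'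
  have hOlim : Order.IsSuccLimit OO := Cardinal.isSuccLimit_ord hsucc
  have cofO : OO.cof = Order.succ lam := hreg.cof_eq
  set e := (Ordinal.ToType.mk (o := OO)) with he
  -- the otp bound from `betaD`
  have hotp : ∀ i < (ℵ₀ : Cardinal.{u}).ord, ∀ γ < OO, OtpLT (D i γ) lam.ord := by
    have hne : {β : Ordinal.{u} | ∀ i < (ℵ₀ : Cardinal.{u}).ord, ∀ γ < (Order.succ lam).ord,
        OtpLT (D i γ) β}.Nonempty := by
      by_contra h
      rw [Set.not_nonempty_iff_eq_empty] at h
      have h0 : betaD ℵ₀ (Order.succ lam) D = 0 := by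
        show sInf _ = 0
        rw [h]
        simp
      rw [hbeta] at h0
      have : lam = 0 := by
        rw [← Cardinal.card_ord lam, h0, Ordinal.card_zero]
      rw [this] at hunc
      exact absurd hunc (by simp)
    have hbeta' : sInf {β : Ordinal.{u} | ∀ i < (ℵ₀ : Cardinal.{u}).ord,
        ∀ γ < (Order.succ lam).ord, OtpLT (D i γ) β} = lam.ord := hbeta
    have hm := csInf_mem hne
    rw [hbeta'] at hm
    exact hm
  -- the unbounded set `A` is large
  set Ahat : Set OO.ToType := {t | ((e.symm t : Set.Iio OO) : Ordinal) ∈ A} with hAhat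
  have hAbig : Order.succ lam ≤ #Ahat := by
    by_contra h
    push_neg at h
    have hι : #Ahat < OO.cof := by rwa [cofO]
    set f : ↥Ahat → Ordinal.{u} := fun t => ((e.symm t.1 : Set.Iio OO) : Ordinal) with hf
    have hflt : ∀ t, f t < OO := fun t => (e.symm t.1).2
    have hsup : iSup f < OO := Ordinal.iSup_lt_ord hι hflt
    have hsup1 : iSup f + 1 < OO := by
      rw [Ordinal.add_one_eq_succ]
      exact hOlim.succ_lt hsup
    obtain ⟨α, hαA, hge⟩ := hAunb (iSup f + 1) hsup1
    have hαO : α < OO := hAsub hαA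
    have htmem : e ⟨α, hαO⟩ ∈ Ahat := by
      rw [hAhat]
      simp only [Set.mem_setOf_eq, OrderIso.symm_apply_apply]
      exact hαA
    have hfeq : f ⟨e ⟨α, hαO⟩, htmem⟩ = α := by
      rw [hf]
      simp
    have : α ≤ iSup f := hfeq ▸ Ordinal.le_iSup f ⟨e ⟨α, hαO⟩, htmem⟩
    have : iSup f + 1 ≤ iSup f := hge.trans this
    rw [Ordinal.add_one_eq_succ] at this
    exact absurd this (by simp [Order.succ_le_iff])
  obtain ⟨emb0⟩ : Nonempty (OO.ToType ↪ ↥Ahat) := by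
    apply (Cardinal.le_def _ _).mp
    rw [hT]
    exact hAbig
  set Φ : OO.ToType → Ordinal.{u} := fun t => ((e.symm ((emb0 t) : OO.ToType) : Set.Iio OO) :
    Ordinal) with hΦ
  have hΦinj : Function.Injective Φ := by
    intro a b h
    exact emb0.injective (Subtype.val_injective (e.symm.injective (Subtype.val_injective h)))
  have hΦA : ∀ t, Φ t ∈ A := fun t => (emb0 t).2
  -- per-entry meeting families
  have key : ∀ (n : ℕ) (t : OO.ToType), ∃ G : Set (Set OO.ToType),
      Cardinal.mk G ≤ Order.succ lam ∧ (∀ y ∈ G, #y = ℵ₀) ∧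
      ∀ x : Set OO.ToType, #x = ℵ₀ →
        x ⊆ Φ ⁻¹' (D n ((e.symm t : Set.Iio OO) : Ordinal)) →
        ∃ y ∈ G, #(x ∩ y : Set OO.ToType) = ℵ₀ := by
    intro n t
    set β : Ordinal.{u} := ((e.symm t : Set.Iio OO) : Ordinal) with hβdef
    have hβ : β < OO := (e.symm t).2
    have hn : (n : Ordinal.{u}) < (ℵ₀ : Cardinal.{u}).ord := by
      rw [Cardinal.ord_aleph0]
      exact Ordinal.nat_lt_omega0 n
    obtain ⟨γ', hγ', f, hfmono⟩ := hotp n hn β hβ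
    set μ : Cardinal.{u} := max γ'.card ℵ₀ with hμdef
    have hμ1 : ℵ₀ ≤ μ := le_max_right _ _
    have hμ2 : μ < lam := max_lt (Cardinal.lt_ord.mp hγ') hunc
    -- size of the matrix entry
    have hD1 : #(D (n : Ordinal.{u}) β) ≤ Cardinal.lift.{u+1} μ := by
      have h1 : #(D (n : Ordinal.{u}) β) ≤ #(Set.Iio γ') :=
        mk_le_of_injective hfmono.injective
      rw [Ordinal.mk_Iio_ordinal] at h1
      exact h1.trans (Cardinal.lift_le.mpr (le_max_left _ _))
    have hP : #(Φ ⁻¹' (D (n : Ordinal.{u}) β)) ≤ μ := by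
      have hemb : Function.Injective
          (fun p : ↥(Φ ⁻¹' (D (n : Ordinal.{u}) β)) =>
            (⟨Φ p.1, p.2⟩ : ↥(D (n : Ordinal.{u}) β))) := by
        intro a b h
        apply Subtype.val_injective
        apply hΦinj
        simpa using congrArg Subtype.val h
      have h1 : Cardinal.lift.{u+1} #(Φ ⁻¹' (D (n : Ordinal.{u}) β)) ≤
          #(D (n : Ordinal.{u}) β) := by
        rw [← Cardinal.lift_id'.{u, u+1} #(D (n : Ordinal.{u}) β)]
        exact Cardinal.lift_mk_le'.mpr ⟨⟨_, hemb⟩⟩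
      exact Cardinal.lift_le.mp (h1.trans hD1)
    -- a meeting family on a set of size `μ`
    obtain ⟨Z, hZcard, hZcnt, hZmeet⟩ := csInf_mem (meetSet_nonempty μ)
    have hZsize : #Z ≤ Order.succ lam := by
      rw [hZcard]
      exact (le_refl _).trans (hmeet μ hμ1 hμ2)
    have hPV : #(Φ ⁻¹' (D (n : Ordinal.{u}) β)) ≤ #(μ.ord.ToType) := by
      rwa [mk_ord_toType]
    obtain ⟨G, hG1, hG2, hG3⟩ := meet_transfer (Φ ⁻¹' (D (n : Ordinal.{u}) β)) Z hPV hZcnt hZmeet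
    exact ⟨G, hG1.trans hZsize, hG2, hG3⟩
  choose G hG1 hG2 hG3 using key
  set Yfam : Set (Set OO.ToType) := ⋃ p : ULift.{u} ℕ × OO.ToType, G p.1.down p.2 with hYfam
  have hYcnt : ∀ y ∈ Yfam, #y = ℵ₀ := by
    intro y hy
    rw [hYfam] at hy
    obtain ⟨p, hp⟩ := Set.mem_iUnion.mp hy
    exact hG2 p.1.down p.2 y hp
  have hYmeet : ∀ x : Set OO.ToType, #x = ℵ₀ →
      ∃ y ∈ Yfam, #(x ∩ y : Set OO.ToType) = ℵ₀ := by
    intro x hx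
    have himg : #(Φ '' x) = Cardinal.lift.{u+1, u} (ℵ₀ : Cardinal.{u}) := by
      have h1 := mk_image_eq_lift Φ x hΦinj
      rw [Cardinal.lift_id'.{u, u+1}] at h1
      rw [h1, hx]
    obtain ⟨i, hi, β, hβ, hsub⟩ := hAcp (Φ '' x)
      (by rintro a ⟨t, ht, rfl⟩; exact hΦA t) himg
    rw [Cardinal.ord_aleph0] at hi
    obtain ⟨n, rfl⟩ := Ordinal.lt_omega0.mp hi
    have hβO : β < OO := hβ
    have htβ : ((e.symm (e ⟨β, hβO⟩) : Set.Iio OO) : Ordinal) = β := by simp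
    have hxP : x ⊆ Φ ⁻¹' (D n ((e.symm (e ⟨β, hβO⟩) : Set.Iio OO) : Ordinal)) := by
      rw [htβ]
      intro a ha
      exact hsub (Set.mem_image_of_mem Φ ha)
    obtain ⟨y, hyG, hxy⟩ := hG3 n (e ⟨β, hβO⟩) x hx hxP
    refine ⟨y, ?_, hxy⟩
    rw [hYfam]
    exact Set.mem_iUnion.mpr ⟨(⟨n⟩, e ⟨β, hβO⟩), hyG⟩
  have hYsize : #Yfam ≤ Order.succ lam := by
    rw [hYfam]
    refine (mk_iUnion_le _).trans ?_
    have h1 : #(ULift.{u} ℕ × OO.ToType) = Order.succ lam := by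
      rw [mk_prod, mk_uLift, mk_nat, hT]
      simp only [Cardinal.lift_id, Cardinal.lift_aleph0]
      exact Cardinal.aleph0_mul_eq hsucc
    have h2 : (⨆ p : ULift.{u} ℕ × OO.ToType, #(G p.1.down p.2)) ≤ Order.succ lam := by
      have : Nonempty (ULift.{u} ℕ × OO.ToType) := ⟨⟨0⟩, Classical.choice hTne⟩
      exact ciSup_le' fun p => hG1 p.1.down p.2
    rw [h1]
    exact (mul_le_mul' le_rfl h2).trans (Cardinal.mul_eq_self hsucc).le
  -- conclusion for `succ lam`
  have hmem1 : #Yfam ∈ {c : Cardinal.{u} |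
      ∃ Y : Set (Set (Order.succ lam).ord.ToType), #Y = c ∧ (∀ y ∈ Y, #y = ℵ₀) ∧
        ∀ x : Set (Order.succ lam).ord.ToType, #x = ℵ₀ →
          ∃ y ∈ Y, #(x ∩ y : Set (Order.succ lam).ord.ToType) = ℵ₀} :=
    ⟨Yfam, rfl, hYcnt, hYmeet⟩
  have hc1 : meetingNumber ℵ₀ (Order.succ lam) = Order.succ lam := by
    rw [meetingNumber]
    refine le_antisymm ((csInf_le (OrderBot.bddBelow _) hmem1).trans hYsize) ?_
    exact le_csInf ⟨_, hmem1⟩ fun c hc => meet_lb_succ lam hunc c hc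
  -- conclusion for `lam`
  obtain ⟨ι0⟩ : Nonempty (lam.ord.ToType ↪ OO.ToType) := by
    apply (Cardinal.le_def _ _).mp
    rw [hT, mk_toType, Cardinal.card_ord]
    exact (Order.le_succ lam)
  set Yl : Set (Set lam.ord.ToType) :=
    {s | #s = ℵ₀ ∧ ∃ y ∈ Yfam, s = ι0 ⁻¹' y} with hYl
  have hYlsize : #Yl ≤ Order.succ lam := by
    refine le_trans ?_ hYsize
    refine (mk_le_mk_of_subset (t := (fun y : Set OO.ToType => ι0 ⁻¹' y) '' Yfam) ?_).trans
      mk_image_le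
    rintro s ⟨-, y, hy, rfl⟩
    exact ⟨y, hy, rfl⟩
  have hYlcnt : ∀ s ∈ Yl, #s = ℵ₀ := fun s hs => hs.1
  have hYlmeet : ∀ x : Set lam.ord.ToType, #x = ℵ₀ →
      ∃ s ∈ Yl, #(x ∩ s : Set lam.ord.ToType) = ℵ₀ := by
    intro x hx
    have hw : #(ι0 '' x : Set OO.ToType) = ℵ₀ := by
      rw [mk_image_eq ι0.injective]
      exact hx
    obtain ⟨y, hyY, hxy⟩ := hYmeet _ hw
    set s : Set lam.ord.ToType := ι0 ⁻¹' y with hs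
    have him : ι0 '' (x ∩ ι0 ⁻¹' y) = (ι0 '' x) ∩ y := Set.image_inter_preimage ι0 x y
    have hcard : #(x ∩ s : Set lam.ord.ToType) = ℵ₀ := by
      rw [hs, ← mk_image_eq (s := x ∩ ι0 ⁻¹' y) ι0.injective, him]
      exact hxy
    have hsle : #s ≤ ℵ₀ := by
      rw [hs]
      exact (mk_preimage_of_injective ι0 y ι0.injective).trans (hYcnt y hyY).le
    have hsge : ℵ₀ ≤ #s := by
      rw [← hcard]
      exact mk_le_mk_of_subset Set.inter_subset_right
    exact ⟨s, ⟨le_antisymm hsle hsge, y, hyY, rfl⟩, hcard⟩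
  have hmem2 : #Yl ∈ {c : Cardinal.{u} |
      ∃ Y : Set (Set lam.ord.ToType), #Y = c ∧ (∀ y ∈ Y, #y = ℵ₀) ∧
        ∀ x : Set lam.ord.ToType, #x = ℵ₀ →
          ∃ y ∈ Y, #(x ∩ y : Set lam.ord.ToType) = ℵ₀} :=
    ⟨Yl, rfl, hYlcnt, hYlmeet⟩
  have hc2 : meetingNumber ℵ₀ lam = Order.succ lam := by
    rw [meetingNumber]
    refine le_antisymm ((csInf_le (OrderBot.bddBelow _) hmem2).trans hYlsize) ?_
    exact le_csInf ⟨_, hmem2⟩ fun c hc => meet_lb_sing lam hunc hcof c hc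
  exact ⟨hc1, hc2⟩
end
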